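/- arXiv:2201.03849 — 7 statements merged into one kernel-verified Lean document; each statement's English description precedes it below -/
import Mathlib

section
/- Let 1 ≤ p < ∞ and N ∈ ℕ, and set ξ_p = inf_{0<a<1} (1−a^p)/(1−a²)^p. Then for every holomorphic function f : 𝔻 → ℂ with Taylor expansion f(z) = Σ_{k=0}^∞ a_k z^k and sup_{|z|<1} |f(z)| ≤ 1, and for every r ∈ [0,1) satisfying r^p + r^{2p} + ⋯ + r^{Np} ≤ ξ_p, one has Σ_{k=0}^N |a_k|^p r^{pk} ≤ 1. Moreover, if ξ_p < N then the equation r^p + r^{2p} + ⋯ + r^{Np} = ξ_p has a unique root r*_N in (0,1), and consequently the above Bohr-type inequality holds for all r ≤ r*_N. -/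
open Finset Metric

lemma mobius_le (c w : ℂ) (hc : ‖c‖ < 1) (hw : ‖w‖ ≤ 1) :
    ‖w - c‖ ≤ ‖1 - (starRingEnd ℂ) c * w‖ := by
  have key : Complex.normSq (1 - (starRingEnd ℂ) c * w) - Complex.normSq (w - c)
      = (1 - Complex.normSq c) * (1 - Complex.normSq w) := by
    simp only [Complex.normSq_apply, Complex.sub_re, Complex.sub_im, Complex.mul_re,
      Complex.mul_im, Complex.one_re, Complex.one_im, Complex.conj_re, Complex.conj_im]
    ring
  have h1 : Complex.normSq c < 1 := by
    have := Complex.normSq_eq_norm_sq c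
    rw [this]
    nlinarith [norm_nonneg c]
  have h2 : Complex.normSq w ≤ 1 := by
    have := Complex.normSq_eq_norm_sq w
    rw [this]
    nlinarith [norm_nonneg w]
  have h3 : Complex.normSq (w - c) ≤ Complex.normSq (1 - (starRingEnd ℂ) c * w) := by
    nlinarith [key]
  calc ‖w - c‖ = Real.sqrt (Complex.normSq (w - c)) := by
        rw [Complex.norm_def]
    _ ≤ Real.sqrt (Complex.normSq (1 - (starRingEnd ℂ) c * w)) := Real.sqrt_le_sqrt h3
    _ = ‖1 - (starRingEnd ℂ) c * w‖ := by rw [Complex.norm_def]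

lemma schwarz_pick_zero (G : ℂ → ℂ) (hd : DifferentiableOn ℂ G (ball 0 1))
    (hb : ∀ z ∈ ball (0:ℂ) 1, ‖G z‖ ≤ 1) : ‖deriv G 0‖ ≤ 1 - ‖G 0‖ ^ 2 := by
  have h0 : (0:ℂ) ∈ ball (0:ℂ) 1 := by simp
  have hc1 : ‖G 0‖ ≤ 1 := hb 0 h0
  rcases lt_or_eq_of_le hc1 with hlt | heq
  · set c := G 0 with hc
    have hden : ∀ w : ℂ, ‖w‖ ≤ 1 → 1 - (starRingEnd ℂ) c * w ≠ 0 := by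
      intro w hw h
      have h1 : ‖(starRingEnd ℂ) c * w‖ < 1 := by
        rw [norm_mul, RCLike.norm_conj]
        calc ‖c‖ * ‖w‖ ≤ ‖c‖ * 1 := by
              exact mul_le_mul_of_nonneg_left hw (norm_nonneg _)
          _ < 1 := by simpa using hlt
      have : (starRingEnd ℂ) c * w = 1 := by linear_combination -h
      rw [this] at h1; simp at h1
    set H : ℂ → ℂ := fun z => (G z - c) / (1 - (starRingEnd ℂ) c * G z) with hH
    have hHd : DifferentiableOn ℂ H (ball 0 1) := by
      apply DifferentiableOn.div (hd.sub_const c)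
        ((differentiableOn_const _).sub (hd.const_mul _))
      intro z hz
      exact hden _ (hb z hz)
    have hHb : ∀ z ∈ ball (0:ℂ) 1, ‖H z‖ ≤ 1 := by
      intro z hz
      have hdz := hden (G z) (hb z hz)
      rw [hH]
      simp only [norm_div]
      rw [div_le_one (norm_pos_iff.mpr hdz)]
      exact mobius_le c (G z) hlt (hb z hz)
    have hH0 : H 0 = 0 := by
      rw [hH]; simp [← hc]
    have hHderiv : ‖deriv H 0‖ ≤ 1 := by
      refine le_of_forall_pos_le_add ?_
      intro ε hε
      have hmaps : Set.MapsTo H (ball (0:ℂ) 1) (ball (H 0) (1 + ε)) := by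
        intro z hz
        rw [hH0, mem_ball, dist_zero_right]
        exact lt_of_le_of_lt (hHb z hz) (by linarith)
      have := Complex.norm_deriv_le_div_of_mapsTo_ball hHd (hmaps.mono_right ball_subset_closedBall) one_pos
      simpa using this
    -- chain rule
    have hGd : DifferentiableAt ℂ G 0 := hd.differentiableAt (isOpen_ball.mem_nhds h0)
    set d : ℂ := 1 - (starRingEnd ℂ) c * c with hdd
    have hd0 : d ≠ 0 := hden c hlt.le
    have hψ : HasDerivAt (fun w : ℂ => (w - c) / (1 - (starRingEnd ℂ) c * w))
        ((1 * (1 - (starRingEnd ℂ) c * c) - (c - c) * (0 - (starRingEnd ℂ) c * 1)) /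
          (1 - (starRingEnd ℂ) c * c) ^ 2) c := by
      apply HasDerivAt.div ((hasDerivAt_id c).sub_const c)
      · exact (hasDerivAt_const c (1:ℂ)).sub (((hasDerivAt_id c).const_mul _))
      · exact hd0
    have hψval : ((1 * (1 - (starRingEnd ℂ) c * c) - (c - c) * (0 - (starRingEnd ℂ) c * 1)) /
        (1 - (starRingEnd ℂ) c * c) ^ 2) = d⁻¹ := by
      rw [← hdd]
      field_simp
      ring
    rw [hψval] at hψ
    have hψ' : HasDerivAt (fun w : ℂ => (w - c) / (1 - (starRingEnd ℂ) c * w)) d⁻¹ (G 0) :=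
      hc ▸ hψ
    have hcomp : HasDerivAt H (d⁻¹ * deriv G 0) 0 :=
      HasDerivAt.comp 0 hψ' hGd.hasDerivAt
    have hsolve : deriv G 0 = d * deriv H 0 := by
      rw [hcomp.deriv]
      field_simp
    have hnd : ‖d‖ = 1 - ‖c‖ ^ 2 := by
      have hnsq : Complex.normSq c = ‖c‖ ^ 2 := by
        rw [Complex.normSq_eq_norm_sq]
      have hdr : d = ((1 - ‖c‖ ^ 2 : ℝ) : ℂ) := by
        rw [hdd, Complex.conj_mul']
        push_cast
        ring
      rw [hdr, Complex.norm_real, Real.norm_eq_abs,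
        abs_of_nonneg (by nlinarith [norm_nonneg c])]
    calc ‖deriv G 0‖ = ‖d‖ * ‖deriv H 0‖ := by rw [hsolve, norm_mul]
      _ ≤ ‖d‖ * 1 := mul_le_mul_of_nonneg_left hHderiv (norm_nonneg _)
      _ = 1 - ‖c‖ ^ 2 := by rw [mul_one, hnd]
  · have hmax : IsMaxOn (norm ∘ G) (ball (0:ℂ) 1) 0 := by
      intro z hz
      simp only [Function.comp_apply, Set.mem_setOf_eq]
      exact (hb z hz).trans heq.symm.le
    have heqon := Complex.eqOn_of_isPreconnected_of_isMaxOn_norm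
      (convex_ball (0:ℂ) 1).isPreconnected isOpen_ball hd h0 hmax
    have hev : G =ᶠ[nhds 0] fun _ => G 0 := by
      filter_upwards [isOpen_ball.mem_nhds h0] with z hz
      exact heqon hz
    rw [hev.deriv_eq, deriv_const', norm_zero, heq]
    norm_num

lemma coeff_le (f : ℂ → ℂ) (a : ℕ → ℂ)
    (hf : ∀ z ∈ ball (0:ℂ) 1, HasSum (fun n => a n * z ^ n) (f z))
    (hfb : ∀ z ∈ ball (0:ℂ) 1, ‖f z‖ ≤ 1) (k : ℕ) (hk : 1 ≤ k) :
    ‖a k‖ ≤ 1 - ‖a 0‖ ^ 2 := by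
  have k0 : k ≠ 0 := by omega
  have kpos : 0 < k := hk
  set a' : ℕ → ℂ := fun m => a (m * k) with ha'
  set p : FormalMultilinearSeries ℂ ℂ ℂ := FormalMultilinearSeries.ofScalars ℂ a' with hpdef
  have hsum : ∀ t : ℝ, 0 ≤ t → t < 1 → Summable (fun m => ‖a' m‖ * t ^ m) := by
    intro t ht ht1
    set s : ℝ := t ^ ((k:ℝ)⁻¹) with hs
    have hs0 : 0 ≤ s := Real.rpow_nonneg ht _
    have hsk : s ^ k = t := Real.rpow_inv_natCast_pow ht k0
    have hs1 : s < 1 := by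
      by_contra h
      push_neg at h
      have h1 : (1:ℝ) ≤ s ^ k := one_le_pow₀ h
      rw [hsk] at h1; linarith
    have hz : ((s:ℂ)) ∈ ball (0:ℂ) 1 := by
      rw [mem_ball_zero_iff, Complex.norm_real, Real.norm_eq_abs, abs_of_nonneg hs0]
      exact hs1
    have Snorm : Summable fun n => ‖a n * (s:ℂ) ^ n‖ :=
      summable_norm_iff.mpr (hf _ hz).summable
    have Scomp : Summable fun m => ‖a (m * k) * (s:ℂ) ^ (m * k)‖ :=
      Snorm.comp_injective fun m1 m2 h => Nat.eq_of_mul_eq_mul_right kpos h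
    refine Scomp.congr fun m => ?_
    rw [norm_mul, norm_pow, Complex.norm_real, Real.norm_eq_abs, abs_of_nonneg hs0,
      pow_mul', hsk]
  have hrad : 1 ≤ p.radius := by
    apply ENNReal.le_of_forall_nnreal_lt
    intro r hr
    have hr1 : (r:ℝ) < 1 := by exact_mod_cast hr
    apply FormalMultilinearSeries.le_radius_of_summable_norm
    refine (hsum r r.coe_nonneg hr1).congr fun n => ?_
    rw [hpdef, FormalMultilinearSeries.ofScalars_norm]
  have hppos : (0:ENNReal) < p.radius := lt_of_lt_of_le zero_lt_one hrad
  have hpb : HasFPowerSeriesOnBall p.sum p 0 1 :=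
    (p.hasFPowerSeriesOnBall hppos).mono zero_lt_one hrad
  set G : ℂ → ℂ := p.sum with hG
  have hballs : ∀ w : ℂ, ‖w‖ < 1 → w ∈ Metric.eball (0:ℂ) 1 := by
    intro w hw
    rw [Metric.mem_eball, edist_zero_right, ← ofReal_norm]
    exact ENNReal.ofReal_lt_one.mpr hw
  have hGsum : ∀ w : ℂ, ‖w‖ < 1 → HasSum (fun m => a' m * w ^ m) (G w) := by
    intro w hw
    have h1 := hpb.hasSum (hballs w hw)
    rw [zero_add] at h1
    refine h1.congr_fun fun n => ?_
    rw [hpdef, FormalMultilinearSeries.ofScalars_apply_eq, smul_eq_mul]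
  have hG0 : G 0 = a 0 := by
    have h1 := hGsum 0 (by norm_num)
    have h2 : HasSum (fun m => a' m * (0:ℂ) ^ m) (a' 0 * (0:ℂ) ^ 0) :=
      hasSum_single 0 fun m hm => by simp [zero_pow hm]
    have h3 := h1.unique h2
    simpa [ha'] using h3
  have hGderiv : deriv G 0 = a k := by
    rw [hpb.hasFPowerSeriesAt.deriv, hpdef, FormalMultilinearSeries.ofScalars_apply_eq,
      smul_eq_mul, ha']
    simp
  have hGb : ∀ w ∈ ball (0:ℂ) 1, ‖G w‖ ≤ 1 := by
    intro w hwball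
    rw [mem_ball_zero_iff] at hwball
    obtain ⟨z, hzk, hz1⟩ : ∃ z : ℂ, z ^ k = w ∧ ‖z‖ < 1 := by
      rcases eq_or_ne w 0 with h | h
      · exact ⟨0, by simp [h, zero_pow k0], by norm_num⟩
      · refine ⟨w ^ ((k:ℂ)⁻¹), Complex.cpow_nat_inv_pow w k0, ?_⟩
        by_contra hcon
        push_neg at hcon
        have h1 : (1:ℝ) ≤ ‖w ^ ((k:ℂ)⁻¹)‖ ^ k := one_le_pow₀ hcon
        rw [← norm_pow, Complex.cpow_nat_inv_pow w k0] at h1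
        linarith
    set ω : ℂ := Complex.exp (2 * Real.pi * Complex.I / k) with hω
    have hprim : IsPrimitiveRoot ω k := Complex.isPrimitiveRoot_exp k k0
    have hωn : ‖ω‖ = 1 := Complex.norm_eq_one_of_pow_eq_one hprim.pow_eq_one k0
    have hmem : ∀ j : ℕ, ω ^ j * z ∈ ball (0:ℂ) 1 := by
      intro j
      rw [mem_ball_zero_iff, norm_mul, norm_pow, hωn, one_pow, one_mul]
      exact hz1
    have S1 : HasSum (fun n => ∑ j ∈ range k, a n * (ω ^ j * z) ^ n)
        (∑ j ∈ range k, f (ω ^ j * z)) := hasSum_sum fun j _ => hf _ (hmem j)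
    have hterm : ∀ n, (∑ j ∈ range k, a n * (ω ^ j * z) ^ n)
        = if k ∣ n then (k:ℂ) * (a n * z ^ n) else 0 := by
      intro n
      have hj : ∀ j, a n * (ω ^ j * z) ^ n = (a n * z ^ n) * ((ω ^ n) ^ j) := by
        intro j
        rw [mul_pow, ← pow_mul, ← pow_mul']
        ring
      rw [Finset.sum_congr rfl fun j _ => hj j, ← Finset.mul_sum]
      by_cases hdvd : k ∣ n
      · rw [if_pos hdvd, (hprim.pow_eq_one_iff_dvd n).mpr hdvd]
        simp [mul_comm]
      · rw [if_neg hdvd]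
        have hne : ω ^ n ≠ 1 := fun h => hdvd ((hprim.pow_eq_one_iff_dvd n).mp h)
        rw [geom_sum_eq hne, ← pow_mul, mul_comm n k, pow_mul, hprim.pow_eq_one, one_pow,
          sub_self, zero_div, mul_zero]
    have S1' : HasSum (fun n => if k ∣ n then (k:ℂ) * (a n * z ^ n) else 0)
        (∑ j ∈ range k, f (ω ^ j * z)) := S1.congr_fun fun n => (hterm n).symm
    have S2 : HasSum (fun m => (k:ℂ) * (a' m * w ^ m)) ((k:ℂ) * G w) :=
      (hGsum w hwball).mul_left _
    have inj : Function.Injective fun m : ℕ => m * k := fun m1 m2 h =>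
      Nat.eq_of_mul_eq_mul_right kpos h
    have hvan : ∀ n ∉ Set.range (fun m : ℕ => m * k),
        (if k ∣ n then (k:ℂ) * (a n * z ^ n) else 0) = 0 := by
      intro n hn
      rw [if_neg]
      intro hdvd
      exact hn ⟨n / k, Nat.div_mul_cancel hdvd⟩
    have S3 : HasSum (fun n => if k ∣ n then (k:ℂ) * (a n * z ^ n) else 0) ((k:ℂ) * G w) := by
      rw [← Function.Injective.hasSum_iff inj hvan]
      refine S2.congr_fun fun m => ?_
      simp only [Function.comp_apply]
      rw [if_pos (dvd_mul_left k m), pow_mul', hzk]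
    have heqq : (k:ℂ) * G w = ∑ j ∈ range k, f (ω ^ j * z) := S3.unique S1'
    have hnorm : (k:ℝ) * ‖G w‖ ≤ (k:ℝ) := by
      calc (k:ℝ) * ‖G w‖ = ‖(k:ℂ) * G w‖ := by
            rw [norm_mul, Complex.norm_natCast]
        _ = ‖∑ j ∈ range k, f (ω ^ j * z)‖ := by rw [heqq]
        _ ≤ ∑ j ∈ range k, ‖f (ω ^ j * z)‖ := norm_sum_le _ _
        _ ≤ ∑ _j ∈ range k, (1:ℝ) := Finset.sum_le_sum fun j _ => hfb _ (hmem j)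
        _ = k := by simp
    have kpos' : (0:ℝ) < k := by exact_mod_cast kpos
    nlinarith [norm_nonneg (G w)]
  have hdiff : DifferentiableOn ℂ G (ball 0 1) := by
    refine hpb.differentiableOn.mono fun x hx => ?_
    exact hballs x (mem_ball_zero_iff.mp hx)
  have := schwarz_pick_zero G hdiff hGb
  rwa [hG0, hGderiv] at this

section XI

variable {p : ℝ}

lemma xi_mem_lb (hp : 1 ≤ p) {a : ℝ} (ha0 : 0 < a) (ha1 : a < 1) :
    (2:ℝ) ^ (-p) ≤ (1 - a ^ p) / (1 - a ^ 2) ^ p := by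
  have hp0 : 0 ≤ p := by linarith
  have h1a : 0 < 1 - a := by linarith
  have hsq : 0 < 1 - a ^ 2 := by nlinarith
  have hnum : 1 - a ≤ 1 - a ^ p := by
    have : a ^ p ≤ a ^ (1:ℝ) := Real.rpow_le_rpow_of_exponent_ge ha0 ha1.le hp
    rw [Real.rpow_one] at this
    linarith
  have hden : (1 - a ^ 2) ^ p ≤ 2 ^ p * (1 - a) := by
    have h2 : (1 - a ^ 2 : ℝ) ≤ 2 * (1 - a) := by nlinarith
    have h3 : (1 - a ^ 2 : ℝ) ^ p ≤ (2 * (1 - a)) ^ p :=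
      Real.rpow_le_rpow hsq.le h2 hp0
    have h4 : ((2:ℝ) * (1 - a)) ^ p = 2 ^ p * (1 - a) ^ p :=
      Real.mul_rpow (by norm_num) h1a.le
    have h5 : (1 - a) ^ p ≤ (1 - a) ^ (1:ℝ) :=
      Real.rpow_le_rpow_of_exponent_ge h1a (by linarith) hp
    rw [Real.rpow_one] at h5
    have h2p : (0:ℝ) < 2 ^ p := Real.rpow_pos_of_pos (by norm_num) p
    calc (1 - a ^ 2 : ℝ) ^ p ≤ 2 ^ p * (1 - a) ^ p := by rw [← h4]; exact h3
      _ ≤ 2 ^ p * (1 - a) := by nlinarith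
  have h2p : (0:ℝ) < 2 ^ p := Real.rpow_pos_of_pos (by norm_num) p
  have hdenpos : (0:ℝ) < (1 - a ^ 2) ^ p := Real.rpow_pos_of_pos hsq p
  have key : (1 - a) / (2 ^ p * (1 - a)) ≤ (1 - a ^ p) / (1 - a ^ 2) ^ p :=
    div_le_div₀ (by linarith) hnum hdenpos hden
  calc (2:ℝ) ^ (-p) = (1 - a) / (2 ^ p * (1 - a)) := by
        rw [Real.rpow_neg (by norm_num)]
        field_simp
    _ ≤ _ := key

lemma xi_facts (hp : 1 ≤ p) (ξ : ℝ)
    (hξ : ξ = sInf {v : ℝ | ∃ a : ℝ, 0 < a ∧ a < 1 ∧ v = (1 - a ^ p) / (1 - a ^ 2) ^ p}) :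
    0 < ξ ∧ ξ ≤ 1 ∧
      (∀ a : ℝ, 0 < a → a < 1 → ξ ≤ (1 - a ^ p) / (1 - a ^ 2) ^ p) := by
  set S := {v : ℝ | ∃ a : ℝ, 0 < a ∧ a < 1 ∧ v = (1 - a ^ p) / (1 - a ^ 2) ^ p} with hS
  have hSne : S.Nonempty := ⟨_, 1/2, by norm_num, by norm_num, rfl⟩
  have hbdd : BddBelow S := ⟨(2:ℝ) ^ (-p), by
    rintro v ⟨a, ha0, ha1, rfl⟩
    exact xi_mem_lb hp ha0 ha1⟩
  have hle : ∀ a : ℝ, 0 < a → a < 1 → ξ ≤ (1 - a ^ p) / (1 - a ^ 2) ^ p := by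
    intro a ha0 ha1
    rw [hξ]
    exact csInf_le hbdd ⟨a, ha0, ha1, rfl⟩
  have hpos : 0 < ξ := by
    have : (2:ℝ) ^ (-p) ≤ ξ := by
      rw [hξ]
      exact le_csInf hSne (by rintro v ⟨a, ha0, ha1, rfl⟩; exact xi_mem_lb hp ha0 ha1)
    have h2 : (0:ℝ) < 2 ^ (-p) := Real.rpow_pos_of_pos (by norm_num) _
    linarith
  have hone : ξ ≤ 1 := by
    have hcont : ContinuousAt (fun a : ℝ => (1 - a ^ p) / (1 - a ^ 2) ^ p) 0 := by
      have hA : ContinuousAt (fun a : ℝ => a ^ p) 0 :=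
        Real.continuousAt_rpow_const 0 p (Or.inr (by linarith))
      have hB : ContinuousAt (fun a : ℝ => (1 - a ^ 2 : ℝ)) 0 := by fun_prop
      have hC : ContinuousAt (fun y : ℝ => y ^ p) (1 - (0:ℝ) ^ 2) :=
        Real.continuousAt_rpow_const _ p (Or.inl (by norm_num))
      have hD : ContinuousAt (fun a : ℝ => ((1 - a ^ 2) ^ p : ℝ)) 0 :=
        ContinuousAt.comp (f := fun a : ℝ => (1 - a ^ 2 : ℝ)) hC hB
      refine ContinuousAt.div (continuousAt_const.sub hA) hD ?_
      norm_num [Real.one_rpow]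
    have hval : (1 - (0:ℝ) ^ p) / (1 - (0:ℝ) ^ 2) ^ p = 1 := by
      rw [Real.zero_rpow (by linarith : p ≠ 0)]
      norm_num [Real.one_rpow]
    have htend : Filter.Tendsto (fun a : ℝ => (1 - a ^ p) / (1 - a ^ 2) ^ p)
        (nhdsWithin 0 (Set.Ioi 0)) (nhds 1) := by
      have h2 := (hcont.continuousWithinAt (s := Set.Ioi 0)).tendsto
      rwa [hval] at h2
    refine ge_of_tendsto htend ?_
    filter_upwards [Ioo_mem_nhdsGT_of_mem (by norm_num : (0:ℝ) ∈ Set.Ico 0 1)] with a ha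
    exact hle a ha.1 ha.2
  exact ⟨hpos, hone, hle⟩

lemma xi_bound (hp : 1 ≤ p) (ξ : ℝ)
    (hξ : ξ = sInf {v : ℝ | ∃ a : ℝ, 0 < a ∧ a < 1 ∧ v = (1 - a ^ p) / (1 - a ^ 2) ^ p})
    {c : ℝ} (hc0 : 0 ≤ c) (hc1 : c ≤ 1) : (1 - c ^ 2) ^ p * ξ ≤ 1 - c ^ p := by
  obtain ⟨hpos, hone, hle⟩ := xi_facts hp ξ hξ
  rcases eq_or_lt_of_le hc0 with h0 | h0
  · rw [← h0]
    norm_num [Real.zero_rpow (show p ≠ 0 by linarith), Real.one_rpow]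
    linarith
  rcases eq_or_lt_of_le hc1 with h1 | h1
  · rw [h1]
    norm_num [Real.zero_rpow (by linarith : p ≠ 0), Real.one_rpow]
  · have hsq : 0 < 1 - c ^ 2 := by nlinarith
    have hdenpos : (0:ℝ) < (1 - c ^ 2) ^ p := Real.rpow_pos_of_pos hsq p
    have := hle c h0 h1
    rw [le_div_iff₀ hdenpos] at this
    linarith

lemma bohr_main (p : ℝ) (hp : 1 ≤ p) (N : ℕ) (ξ : ℝ)
    (hξ : ξ = sInf {v : ℝ | ∃ a : ℝ, 0 < a ∧ a < 1 ∧ v = (1 - a ^ p) / (1 - a ^ 2) ^ p})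
    (f : ℂ → ℂ) (a : ℕ → ℂ)
    (hf : ∀ z ∈ Metric.ball (0 : ℂ) 1, HasSum (fun k => a k * z ^ k) (f z))
    (hfb : ∀ z ∈ Metric.ball (0 : ℂ) 1, ‖f z‖ ≤ 1)
    (r : ℝ) (hr0 : 0 ≤ r) (hr1 : r < 1)
    (hsle : (∑ j ∈ Finset.Icc 1 N, r ^ ((j : ℝ) * p)) ≤ ξ) :
    ∑ k ∈ Finset.range (N + 1), ‖a k‖ ^ p * r ^ (p * (k : ℝ)) ≤ 1 := by
  have hp0 : (0:ℝ) ≤ p := by linarith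
  set c : ℝ := ‖a 0‖ with hc
  have hc0 : 0 ≤ c := norm_nonneg _
  have hf0 : f 0 = a 0 := by
    have h1 := hf 0 (by norm_num)
    have h2 : HasSum (fun n => a n * (0:ℂ) ^ n) (a 0 * (0:ℂ) ^ 0) :=
      hasSum_single 0 fun m hm => by simp [zero_pow hm]
    simpa using h1.unique h2
  have hc1 : c ≤ 1 := by
    rw [hc, ← hf0]
    exact hfb 0 (by norm_num)
  have hcoef : ∀ n, 1 ≤ n → ‖a n‖ ≤ 1 - c ^ 2 := fun n hn => coeff_le f a hf hfb n hn
  have hsplit : Finset.range (N + 1) = insert 0 (Finset.Icc 1 N) := by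
    ext x
    simp only [Finset.mem_range, Finset.mem_insert, Finset.mem_Icc]
    omega
  have hterm0 : ‖a 0‖ ^ p * r ^ (p * ((0:ℕ) : ℝ)) = c ^ p := by
    rw [Nat.cast_zero, mul_zero, Real.rpow_zero, mul_one, hc]
  have hbound : ∑ k ∈ Finset.Icc 1 N, ‖a k‖ ^ p * r ^ (p * (k : ℝ))
      ≤ (1 - c ^ 2) ^ p * ξ := by
    calc ∑ k ∈ Finset.Icc 1 N, ‖a k‖ ^ p * r ^ (p * (k : ℝ))
        ≤ ∑ k ∈ Finset.Icc 1 N, (1 - c ^ 2) ^ p * r ^ ((k : ℝ) * p) := by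
          apply Finset.sum_le_sum
          intro k hk
          rw [Finset.mem_Icc] at hk
          rw [mul_comm p (k:ℝ)]
          exact mul_le_mul_of_nonneg_right
            (Real.rpow_le_rpow (norm_nonneg _) (hcoef k hk.1) hp0)
            (Real.rpow_nonneg hr0 _)
      _ = (1 - c ^ 2) ^ p * ∑ k ∈ Finset.Icc 1 N, r ^ ((k : ℝ) * p) := by
          rw [Finset.mul_sum]
      _ ≤ (1 - c ^ 2) ^ p * ξ := by
          apply mul_le_mul_of_nonneg_left hsle
          apply Real.rpow_nonneg
          nlinarith
  have hxb : (1 - c ^ 2) ^ p * ξ ≤ 1 - c ^ p := xi_bound hp ξ hξ hc0 hc1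
  calc ∑ k ∈ Finset.range (N + 1), ‖a k‖ ^ p * r ^ (p * (k : ℝ))
      = c ^ p + ∑ k ∈ Finset.Icc 1 N, ‖a k‖ ^ p * r ^ (p * (k : ℝ)) := by
        rw [hsplit, Finset.sum_insert (by simp)]
        rw [hterm0]
    _ ≤ c ^ p + (1 - c ^ p) := by linarith
    _ = 1 := by ring

/-- Bohr-type inequality of order `N` for bounded holomorphic functions
on the unit disk, with radius governed by `ξ_p = inf_{0<a<1} (1-a^p)/(1-a²)^p`. -/
theorem stmt0 (p : ℝ) (hp : 1 ≤ p) (N : ℕ) (hN : 1 ≤ N) (ξ : ℝ)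
    (hξ : ξ = sInf {v : ℝ | ∃ a : ℝ, 0 < a ∧ a < 1 ∧ v = (1 - a ^ p) / (1 - a ^ 2) ^ p}) :
    (∀ (f : ℂ → ℂ) (a : ℕ → ℂ),
      (∀ z ∈ Metric.ball (0 : ℂ) 1, HasSum (fun k => a k * z ^ k) (f z)) →
      (∀ z ∈ Metric.ball (0 : ℂ) 1, ‖f z‖ ≤ 1) →
      ∀ r : ℝ, 0 ≤ r → r < 1 →
        (∑ j ∈ Finset.Icc 1 N, r ^ ((j : ℝ) * p)) ≤ ξ →
        ∑ k ∈ Finset.range (N + 1), ‖a k‖ ^ p * r ^ (p * (k : ℝ)) ≤ 1) ∧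
    (ξ < N →
      (∃! rstar : ℝ, rstar ∈ Set.Ioo (0 : ℝ) 1 ∧
          ∑ j ∈ Finset.Icc 1 N, rstar ^ ((j : ℝ) * p) = ξ) ∧
      (∀ rstar : ℝ, rstar ∈ Set.Ioo (0 : ℝ) 1 →
        (∑ j ∈ Finset.Icc 1 N, rstar ^ ((j : ℝ) * p) = ξ) →
        ∀ (f : ℂ → ℂ) (a : ℕ → ℂ),
          (∀ z ∈ Metric.ball (0 : ℂ) 1, HasSum (fun k => a k * z ^ k) (f z)) →
          (∀ z ∈ Metric.ball (0 : ℂ) 1, ‖f z‖ ≤ 1) →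
          ∀ r : ℝ, 0 ≤ r → r ≤ rstar →
            ∑ k ∈ Finset.range (N + 1), ‖a k‖ ^ p * r ^ (p * (k : ℝ)) ≤ 1)) := by
  obtain ⟨hξpos, hξone, hξle⟩ := xi_facts hp ξ hξ
  constructor
  · intro f a hf hfb r hr0 hr1 hsle
    exact bohr_main p hp N ξ hξ f a hf hfb r hr0 hr1 hsle
  · intro hξN
    set g : ℝ → ℝ := fun r => ∑ j ∈ Finset.Icc 1 N, r ^ ((j : ℝ) * p) with hg
    have hgc : Continuous g := by
      apply continuous_finset_sum
      intro j _
      rw [continuous_iff_continuousAt]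
      intro x
      exact Real.continuousAt_rpow_const x _ (Or.inr (by positivity))
    have hg0 : g 0 = 0 := by
      apply Finset.sum_eq_zero
      intro j hj
      rw [Finset.mem_Icc] at hj
      apply Real.zero_rpow
      have : (1:ℝ) ≤ (j:ℝ) := by exact_mod_cast hj.1
      nlinarith
    have hg1 : g 1 = N := by
      rw [hg]
      simp only [Real.one_rpow]
      rw [Finset.sum_const, Nat.card_Icc]
      simp
    have hmono : StrictMonoOn g (Set.Icc 0 1) := by
      intro x hx y _ hxy
      apply Finset.sum_lt_sum_of_nonempty (Finset.nonempty_Icc.mpr hN)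
      intro j hj
      rw [Finset.mem_Icc] at hj
      apply Real.rpow_lt_rpow hx.1 hxy
      have : (1:ℝ) ≤ (j:ℝ) := by exact_mod_cast hj.1
      nlinarith
    have hiv : ξ ∈ g '' Set.Icc 0 1 := by
      apply intermediate_value_Icc zero_le_one hgc.continuousOn
      rw [hg0, hg1]
      exact ⟨hξpos.le, hξN.le⟩
    obtain ⟨rs, hrs, hgrs⟩ := hiv
    have hrs0 : rs ≠ 0 := by
      intro h
      rw [h, hg0] at hgrs
      linarith
    have hrs1 : rs ≠ 1 := by
      intro h
      rw [h, hg1] at hgrs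
      linarith
    have hrsIoo : rs ∈ Set.Ioo (0:ℝ) 1 :=
      ⟨lt_of_le_of_ne hrs.1 (Ne.symm hrs0), lt_of_le_of_ne hrs.2 hrs1⟩
    constructor
    · refine ⟨rs, ⟨hrsIoo, hgrs⟩, ?_⟩
      rintro y ⟨hyIoo, hgy⟩
      exact hmono.injOn (Set.mem_Icc_of_Ioo hyIoo) (Set.mem_Icc_of_Ioo hrsIoo)
        (hgy.trans hgrs.symm)
    · intro rstar hmem hsum f a hf hfb r hr0 hrle
      have hr1 : r < 1 := lt_of_le_of_lt hrle hmem.2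
      have hsle : (∑ j ∈ Finset.Icc 1 N, r ^ ((j : ℝ) * p)) ≤ ξ := by
        rw [← hsum]
        apply Finset.sum_le_sum
        intro j _
        exact Real.rpow_le_rpow hr0 hrle (by positivity)
      exact bohr_main p hp N ξ hξ f a hf hfb r hr0 hr1 hsle
end XI
end

section
/- Let X be a complex Banach space, 1 ≤ p < ∞, and let r ≥ 0 be such that ‖g(0)‖^p + r^p ‖g'(0)‖^p ≤ 1 for every g ∈ H^∞(𝔻,X) with ‖g‖_∞ ≤ 1. Then for every f ∈ H^∞(𝔻,X) with ‖f‖_∞ ≤ 1 and Taylor expansion f(z) = Σ_{n=0}^∞ x_n z^n, and every n ≥ 1, one has ‖x_0‖^p + r^p ‖x_n‖^p ≤ 1; equivalently ‖x_n‖^p ≤ r^{−p}(1 − ‖x_0‖^p) when r > 0. -/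
open Finset

/-- if `‖g(0)‖^p + r^p ‖g'(0)‖^p ≤ 1` for all `g` in the unit ball of
`H^∞(𝔻,X)`, then `‖x_0‖^p + r^p ‖x_n‖^p ≤ 1` for all Taylor coefficients `x_n`, `n ≥ 1`,
of any `f` in the unit ball of `H^∞(𝔻,X)`. -/
theorem stmt1 (X : Type*) [NormedAddCommGroup X] [NormedSpace ℂ X] [CompleteSpace X]
    (p r : ℝ) (hp : 1 ≤ p) (hr : 0 ≤ r)
    (h : ∀ (g : ℂ → X) (y : ℕ → X),
      (∀ z ∈ Metric.ball (0 : ℂ) 1, HasSum (fun n => z ^ n • y n) (g z)) →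
      (∀ z ∈ Metric.ball (0 : ℂ) 1, ‖g z‖ ≤ 1) →
      ‖y 0‖ ^ p + r ^ p * ‖y 1‖ ^ p ≤ 1) :
    ∀ (f : ℂ → X) (x : ℕ → X),
      (∀ z ∈ Metric.ball (0 : ℂ) 1, HasSum (fun n => z ^ n • x n) (f z)) →
      (∀ z ∈ Metric.ball (0 : ℂ) 1, ‖f z‖ ≤ 1) →
      ∀ n : ℕ, 1 ≤ n →
        ‖x 0‖ ^ p + r ^ p * ‖x n‖ ^ p ≤ 1 ∧
        (0 < r → ‖x n‖ ^ p ≤ r ^ (-p) * (1 - ‖x 0‖ ^ p)) := by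
  intro f x hf hb n hn
  have hn0 : n ≠ 0 := by omega
  have hn0' : (0:ℝ) < n := by positivity
  -- primitive n-th root of unity
  set ζ : ℂ := Complex.exp (2 * Real.pi * Complex.I / n) with hζdef
  have hζ : IsPrimitiveRoot ζ n := Complex.isPrimitiveRoot_exp n hn0
  have hζn : ζ ^ n = 1 := hζ.pow_eq_one
  have hζnorm : ‖ζ‖ = 1 := by
    have h1 : ‖ζ‖ ^ n = 1 ^ n := by rw [← norm_pow, hζn, norm_one, one_pow]
    exact (pow_left_inj₀ (norm_nonneg ζ) zero_le_one hn0).1 h1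
  -- sum of roots of unity
  have hroots : ∀ k : ℕ, (∑ j ∈ Finset.range n, ζ ^ (j * k)) = if n ∣ k then (n:ℂ) else 0 := by
    intro k
    by_cases hk : n ∣ k
    · have hone : ζ ^ k = 1 := (hζ.pow_eq_one_iff_dvd k).2 hk
      have : ∀ j, ζ ^ (j * k) = 1 := by
        intro j; rw [mul_comm, pow_mul, hone, one_pow]
      simp [this, hk]
    · have hne : ζ ^ k ≠ 1 := fun hc => hk ((hζ.pow_eq_one_iff_dvd k).1 hc)
      have : ∑ j ∈ Finset.range n, ζ ^ (j * k) = ∑ j ∈ Finset.range n, (ζ ^ k) ^ j := by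
        refine Finset.sum_congr rfl fun j _ => ?_
        rw [← pow_mul, mul_comm]
      rw [this, geom_sum_eq hne, ← pow_mul, mul_comm k n, pow_mul, hζn, one_pow]
      simp [hk]
  -- the auxiliary function
  set g : ℂ → X := fun z => ∑' k, z ^ k • x (n * k) with hgdef
  have key : ∀ z ∈ Metric.ball (0 : ℂ) 1,
      HasSum (fun k => z ^ k • x (n * k)) (g z) ∧ ‖g z‖ ≤ 1 := by
    intro z hz
    rw [Metric.mem_ball, dist_zero_right] at hz
    -- n-th root of z
    obtain ⟨w, hwn⟩ : ∃ w : ℂ, w ^ n = z := ⟨z ^ ((n:ℂ)⁻¹), Complex.cpow_nat_inv_pow z hn0⟩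
    have hw : ‖w‖ < 1 := by
      by_contra hcon
      push_neg at hcon
      have h1 : (1:ℝ) ≤ ‖w‖ ^ n := one_le_pow₀ hcon
      rw [← hwn, norm_pow] at hz
      linarith
    have hwball : w ∈ Metric.ball (0:ℂ) 1 := by rwa [Metric.mem_ball, dist_zero_right]
    -- summability of the subseries
    have hsum1 : Summable fun k => w ^ k • x k := (hf w hwball).summable
    have hsum2 : Summable fun m => z ^ m • x (n * m) := by
      have hinj : Function.Injective fun m : ℕ => n * m := fun a b hab =>
        Nat.eq_of_mul_eq_mul_left (Nat.pos_of_ne_zero hn0) hab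
      have := hsum1.comp_injective hinj
      refine this.congr fun m => ?_
      simp only [Function.comp_apply, ← hwn, pow_mul]
    have hg1 : HasSum (fun k => z ^ k • x (n * k)) (g z) := hsum2.hasSum
    refine ⟨hg1, ?_⟩
    -- each rotated point is in the ball
    have hmem : ∀ j : ℕ, ζ ^ j * w ∈ Metric.ball (0:ℂ) 1 := by
      intro j
      rw [Metric.mem_ball, dist_zero_right, norm_mul, norm_pow, hζnorm, one_pow, one_mul]
      exact hw
    -- sum over rotations
    have hS : HasSum (fun k => ∑ j ∈ Finset.range n, (ζ ^ j * w) ^ k • x k)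
        (∑ j ∈ Finset.range n, f (ζ ^ j * w)) :=
      hasSum_sum fun j _ => hf _ (hmem j)
    have hFeq : (fun k => ∑ j ∈ Finset.range n, (ζ ^ j * w) ^ k • x k)
        = fun k => if n ∣ k then (n:ℂ) • (w ^ k • x k) else 0 := by
      funext k
      have : ∑ j ∈ Finset.range n, (ζ ^ j * w) ^ k • x k
          = (∑ j ∈ Finset.range n, ζ ^ (j * k)) • (w ^ k • x k) := by
        rw [Finset.sum_smul]
        refine Finset.sum_congr rfl fun j _ => ?_
        rw [mul_pow, ← pow_mul, mul_smul]
      rw [this, hroots k]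
      split <;> simp
    rw [hFeq] at hS
    -- identify with n • g z
    have hg2 : HasSum (fun m => ((n:ℂ) • (w ^ (n*m) • x (n * m)))) ((n:ℂ) • g z) := by
      refine (hg1.const_smul ((n:ℂ))).congr_fun fun m => ?_
      rw [← hwn, pow_mul]
    have hinj : Function.Injective fun m : ℕ => n * m := fun a b hab =>
      Nat.eq_of_mul_eq_mul_left (Nat.pos_of_ne_zero hn0) hab
    have hvanish : ∀ k ∉ Set.range (fun m : ℕ => n * m),
        (if n ∣ k then (n:ℂ) • (w ^ k • x k) else 0) = 0 := by
      intro k hk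
      rw [if_neg]
      intro ⟨m, hm⟩
      exact hk ⟨m, hm.symm⟩
    have hg3 : HasSum (fun k => if n ∣ k then (n:ℂ) • (w ^ k • x k) else 0) ((n:ℂ) • g z) := by
      rw [← hinj.hasSum_iff hvanish]
      refine hg2.congr_fun fun m => ?_
      simp only [Function.comp_apply]
      rw [if_pos ⟨m, rfl⟩]
    have heq : (n:ℂ) • g z = ∑ j ∈ Finset.range n, f (ζ ^ j * w) := hg3.unique hS
    have hnorm : (n:ℝ) * ‖g z‖ ≤ (n:ℝ) * 1 := by
      calc (n:ℝ) * ‖g z‖ = ‖(n:ℂ) • g z‖ := by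
            rw [norm_smul, Complex.norm_natCast]
        _ = ‖∑ j ∈ Finset.range n, f (ζ ^ j * w)‖ := by rw [heq]
        _ ≤ ∑ j ∈ Finset.range n, ‖f (ζ ^ j * w)‖ := norm_sum_le _ _
        _ ≤ ∑ j ∈ Finset.range n, 1 := Finset.sum_le_sum fun j _ => hb _ (hmem j)
        _ = (n:ℝ) * 1 := by simp
    exact le_of_mul_le_mul_left hnorm hn0'
  have h1 := h g (fun k => x (n * k)) (fun z hz => (key z hz).1) (fun z hz => (key z hz).2)
  simp only [Nat.mul_zero, Nat.mul_one] at h1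
  refine ⟨h1, fun hrpos => ?_⟩
  have hrp : (0:ℝ) < r ^ p := Real.rpow_pos_of_pos hrpos p
  rw [Real.rpow_neg hr, inv_mul_eq_div, le_div_iff₀ hrp]
  nlinarith
end

section
/- Let X be a complex Banach space, p ≥ 1 and N ∈ ℕ. Then R̃_{p,N}(X)/(1 + R̃_{p,N}(X)^p)^{1/p} ≤ r_p(X) ≤ R̃_{p,N}(X). -/
open Finset

/-- The `p`-Bohr radius of a complex Banach space `X`:
`r_p(X) = sup{ r ≥ 0 : Σ_{n=0}^∞ ‖x_n‖^p r^{np} ≤ 1 for every f ∈ H^∞(𝔻,X), ‖f‖_∞ ≤ 1 }`.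
(The infinite-sum condition is expressed via all finite partial sums, which is
equivalent since the terms are nonnegative.) -/
noncomputable def pBohrRadius (X : Type*) [NormedAddCommGroup X] [NormedSpace ℂ X]
    (p : ℝ) : ℝ :=
  sSup {r : ℝ | 0 ≤ r ∧ ∀ (f : ℂ → X) (x : ℕ → X),
    (∀ z ∈ Metric.ball (0 : ℂ) 1, HasSum (fun n => z ^ n • x n) (f z)) →
    (∀ z ∈ Metric.ball (0 : ℂ) 1, ‖f z‖ ≤ 1) →
    ∀ M : ℕ, ∑ n ∈ Finset.range M, ‖x n‖ ^ p * r ^ (p * (n : ℝ)) ≤ 1}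

/-- The `p`-Bohr radius of order `N` of a complex Banach space `X`:
`R̃_{p,N}(X) = sup{ r ≥ 0 : Σ_{k=0}^N ‖x_k‖^p r^{pk} ≤ ‖f‖_∞^p for every f ∈ H^∞(𝔻,X) }`
(stated in the equivalent normalized form `‖f‖_∞ ≤ 1`). -/
noncomputable def pBohrRadiusN (X : Type*) [NormedAddCommGroup X] [NormedSpace ℂ X]
    (p : ℝ) (N : ℕ) : ℝ :=
  sSup {r : ℝ | 0 ≤ r ∧ ∀ (f : ℂ → X) (x : ℕ → X),
    (∀ z ∈ Metric.ball (0 : ℂ) 1, HasSum (fun k => z ^ k • x k) (f z)) →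
    (∀ z ∈ Metric.ball (0 : ℂ) 1, ‖f z‖ ≤ 1) →
    ∑ k ∈ Finset.range (N + 1), ‖x k‖ ^ p * r ^ (p * (k : ℝ)) ≤ 1}

section BohrAux

variable {X : Type*} [NormedAddCommGroup X] [NormedSpace ℂ X]

lemma bohr_pow_eq_one_nonneg {t : ℝ} (ht : 0 ≤ t) {n : ℕ} (hn : n ≠ 0) (h : t ^ n = 1) :
    t = 1 := by
  rcases lt_trichotomy t 1 with h1 | h1 | h1
  · have := pow_lt_one₀ ht h1 hn; linarith
  · exact h1
  · have := one_lt_pow₀ h1 hn; linarith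

lemma bohr_pow_lt_one_nonneg {t : ℝ} (ht : 0 ≤ t) {n : ℕ} (hn : n ≠ 0) (h : t ^ n < 1) :
    t < 1 := by
  by_contra h1
  push_neg at h1
  have h2 : (1:ℝ) ^ n ≤ t ^ n := pow_le_pow_left₀ (by norm_num) h1 n
  rw [one_pow] at h2; linarith

/-- The value of the function at `0` is the constant coefficient. -/
lemma bohr_coeff_zero (f : ℂ → X) (x : ℕ → X)
    (hs : ∀ z ∈ Metric.ball (0 : ℂ) 1, HasSum (fun n => z ^ n • x n) (f z)) :
    f 0 = x 0 := by
  have h := hs 0 (by simp)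
  have h2 : HasSum (fun n : ℕ => (0:ℂ) ^ n • x n) (x 0) := by
    have := hasSum_single (f := fun n : ℕ => (0:ℂ) ^ n • x n) 0
      (fun b hb => by simp [zero_pow hb])
    simpa using this
  exact h.unique h2

/-- Key inequality: if `r` satisfies the order-`N` Bohr condition, then for every bounded
holomorphic `f` and every `n ≥ 1` we have `‖x 0‖^p + ‖x n‖^p r^p ≤ 1`.  The proof applies
the order-`N` condition to the averaged function `w ↦ n⁻¹ Σ_j f(ω^j w^{1/n})`, whose Taylor
coefficients are `x 0, x n, x 2n, …`. -/
lemma bohr_key_ineq {p : ℝ} (hp : 1 ≤ p) {N : ℕ} (hN : 1 ≤ N) {r : ℝ}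
    (hr0 : 0 ≤ r)
    (hr : ∀ (f : ℂ → X) (x : ℕ → X),
      (∀ z ∈ Metric.ball (0 : ℂ) 1, HasSum (fun k => z ^ k • x k) (f z)) →
      (∀ z ∈ Metric.ball (0 : ℂ) 1, ‖f z‖ ≤ 1) →
      ∑ k ∈ Finset.range (N + 1), ‖x k‖ ^ p * r ^ (p * (k : ℝ)) ≤ 1)
    (f : ℂ → X) (x : ℕ → X)
    (hs : ∀ z ∈ Metric.ball (0 : ℂ) 1, HasSum (fun n => z ^ n • x n) (f z))
    (hb : ∀ z ∈ Metric.ball (0 : ℂ) 1, ‖f z‖ ≤ 1)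
    {n : ℕ} (hn : 1 ≤ n) :
    ‖x 0‖ ^ p + ‖x n‖ ^ p * r ^ p ≤ 1 := by
  have hn0 : n ≠ 0 := by omega
  set ω : ℂ := Complex.exp (2 * Real.pi * Complex.I / n) with hωdef
  have hprim : IsPrimitiveRoot ω n := Complex.isPrimitiveRoot_exp n hn0
  have hω1 : ‖ω‖ = 1 := by
    apply bohr_pow_eq_one_nonneg (norm_nonneg ω) hn0
    rw [← norm_pow, hprim.pow_eq_one, norm_one]
  set H : ℂ → X := fun w => (n : ℂ)⁻¹ • ∑ j ∈ Finset.range n, f (ω ^ j * w ^ ((n:ℂ)⁻¹)) with hH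
  set y : ℕ → X := fun k => x (n * k) with hy
  have hzfact : ∀ w : ℂ, w ∈ Metric.ball (0:ℂ) 1 →
      (w ^ ((n:ℂ)⁻¹)) ^ n = w ∧ ∀ j : ℕ, ω ^ j * w ^ ((n:ℂ)⁻¹) ∈ Metric.ball (0:ℂ) 1 := by
    intro w hw
    have hzn : (w ^ ((n:ℂ)⁻¹)) ^ n = w := Complex.cpow_nat_inv_pow w hn0
    have hwabs : ‖w‖ < 1 := by simpa [Complex.dist_eq] using hw
    have hzabs : ‖w ^ ((n:ℂ)⁻¹)‖ < 1 := by
      apply bohr_pow_lt_one_nonneg (norm_nonneg _) hn0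
      rw [← norm_pow, hzn]; exact hwabs
    refine ⟨hzn, fun j => ?_⟩
    simp only [Metric.mem_ball, dist_zero_right, norm_mul, norm_pow, hω1,
      one_pow, one_mul]
    exact hzabs
  have hsumH : ∀ w ∈ Metric.ball (0:ℂ) 1, HasSum (fun k => w ^ k • y k) (H w) := by
    intro w hw
    obtain ⟨hzn, hmem⟩ := hzfact w hw
    set z : ℂ := w ^ ((n:ℂ)⁻¹) with hz
    have hsum1 : HasSum (fun m : ℕ => (n:ℂ)⁻¹ • ∑ j ∈ Finset.range n, (ω ^ j * z) ^ m • x m)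
        (H w) :=
      (hasSum_sum (fun j _ => hs _ (hmem j))).const_smul _
    have heq : (fun m : ℕ => (n:ℂ)⁻¹ • ∑ j ∈ Finset.range n, (ω ^ j * z) ^ m • x m)
        = fun m : ℕ => if n ∣ m then z ^ m • x m else 0 := by
      funext m
      have hterm : ∀ j : ℕ, (ω ^ j * z) ^ m • x m = (ω ^ m) ^ j • (z ^ m • x m) := by
        intro j
        rw [mul_pow, ← pow_mul, mul_comm j m, pow_mul, mul_smul]
      rw [Finset.sum_congr rfl (fun j _ => hterm j), ← Finset.sum_smul]
      have hsum_roots : ∑ j ∈ Finset.range n, (ω ^ m) ^ j = if n ∣ m then (n : ℂ) else 0 := by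
        split_ifs with hd
        · have h1 : ω ^ m = 1 := (hprim.pow_eq_one_iff_dvd m).mpr hd
          simp [h1]
        · have hne : ω ^ m ≠ 1 := fun hh => hd ((hprim.pow_eq_one_iff_dvd m).mp hh)
          rw [geom_sum_eq hne]
          have h2 : (ω ^ m) ^ n = 1 := by
            rw [← pow_mul, mul_comm, pow_mul, hprim.pow_eq_one, one_pow]
          rw [h2]; simp
      rw [hsum_roots]
      split_ifs with hd
      · rw [smul_smul, inv_mul_cancel₀ (by exact_mod_cast hn0 : (n:ℂ) ≠ 0), one_smul]
      · simp
    rw [heq] at hsum1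
    have hinj : Function.Injective (fun k : ℕ => n * k) := fun a b hab =>
      Nat.eq_of_mul_eq_mul_left (Nat.pos_of_ne_zero hn0) hab
    have hside : ∀ m ∉ Set.range (fun k : ℕ => n * k),
        (if n ∣ m then z ^ m • x m else 0) = 0 := by
      intro m hm
      rw [if_neg]
      rintro ⟨k, hk⟩
      exact hm ⟨k, hk.symm⟩
    have h3 := (Function.Injective.hasSum_iff hinj hside).mpr hsum1
    have hfun : ((fun m : ℕ => if n ∣ m then z ^ m • x m else 0) ∘ fun k : ℕ => n * k)
        = fun k : ℕ => w ^ k • y k := by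
      funext k
      simp only [Function.comp]
      rw [if_pos (dvd_mul_right n k), pow_mul, hzn, hy]
    rwa [hfun] at h3
  have hbndH : ∀ w ∈ Metric.ball (0:ℂ) 1, ‖H w‖ ≤ 1 := by
    intro w hw
    obtain ⟨_, hmem⟩ := hzfact w hw
    have h1 : ‖∑ j ∈ Finset.range n, f (ω ^ j * w ^ ((n:ℂ)⁻¹))‖ ≤ (n : ℝ) := by
      calc ‖∑ j ∈ Finset.range n, f (ω ^ j * w ^ ((n:ℂ)⁻¹))‖
          ≤ ∑ j ∈ Finset.range n, ‖f (ω ^ j * w ^ ((n:ℂ)⁻¹))‖ := norm_sum_le _ _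
        _ ≤ ∑ _j ∈ Finset.range n, (1:ℝ) := Finset.sum_le_sum (fun j _ => hb _ (hmem j))
        _ = n := by simp
    have hnpos : (0:ℝ) < n := by exact_mod_cast Nat.pos_of_ne_zero hn0
    calc ‖H w‖ = (n:ℝ)⁻¹ * ‖∑ j ∈ Finset.range n, f (ω ^ j * w ^ ((n:ℂ)⁻¹))‖ := by
          rw [hH, norm_smul, norm_inv, Complex.norm_natCast]
      _ ≤ (n:ℝ)⁻¹ * n := mul_le_mul_of_nonneg_left h1 (inv_nonneg.mpr hnpos.le)
      _ = 1 := by field_simp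
  have hmain := hr H y hsumH hbndH
  have hsub : ({0, 1} : Finset ℕ) ⊆ Finset.range (N+1) := by
    intro k hk
    simp only [Finset.mem_insert, Finset.mem_singleton] at hk
    rcases hk with rfl | rfl <;> simp <;> omega
  have hmono : ∑ k ∈ ({0,1} : Finset ℕ), ‖y k‖ ^ p * r ^ (p * (k:ℝ))
      ≤ ∑ k ∈ Finset.range (N+1), ‖y k‖ ^ p * r ^ (p * (k:ℝ)) :=
    Finset.sum_le_sum_of_subset_of_nonneg hsub (fun k _ _ =>
      mul_nonneg (Real.rpow_nonneg (norm_nonneg _) _) (Real.rpow_nonneg hr0 _))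
  have hpair : ∑ k ∈ ({0,1} : Finset ℕ), ‖y k‖ ^ p * r ^ (p * (k:ℝ))
      = ‖x 0‖ ^ p + ‖x n‖ ^ p * r ^ p := by
    rw [Finset.sum_pair (by norm_num : (0:ℕ) ≠ 1)]
    have hy0 : y 0 = x 0 := by rw [hy]; norm_num
    have hy1 : y 1 = x n := by rw [hy]; norm_num
    rw [hy0, hy1]
    norm_num [Real.rpow_zero]
  linarith [hmono, hmain, hpair.le, hpair.symm.le]

/-- If `r` satisfies the order-`N` Bohr condition, then `r/(1+r^p)^{1/p}` satisfies the
(unrestricted) Bohr condition. -/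
lemma bohr_rho_mem {p : ℝ} (hp : 1 ≤ p) {N : ℕ} (hN : 1 ≤ N) {r : ℝ}
    (hr0 : 0 ≤ r)
    (hr : ∀ (f : ℂ → X) (x : ℕ → X),
      (∀ z ∈ Metric.ball (0 : ℂ) 1, HasSum (fun k => z ^ k • x k) (f z)) →
      (∀ z ∈ Metric.ball (0 : ℂ) 1, ‖f z‖ ≤ 1) →
      ∑ k ∈ Finset.range (N + 1), ‖x k‖ ^ p * r ^ (p * (k : ℝ)) ≤ 1) :
    0 ≤ r / (1 + r ^ p) ^ (1/p) ∧ ∀ (f : ℂ → X) (x : ℕ → X),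
      (∀ z ∈ Metric.ball (0 : ℂ) 1, HasSum (fun n => z ^ n • x n) (f z)) →
      (∀ z ∈ Metric.ball (0 : ℂ) 1, ‖f z‖ ≤ 1) →
      ∀ M : ℕ, ∑ m ∈ Finset.range M, ‖x m‖ ^ p * (r / (1 + r ^ p) ^ (1/p)) ^ (p * (m : ℝ)) ≤ 1 := by
  have hp0 : 0 < p := by linarith
  have hrp : 0 ≤ r ^ p := Real.rpow_nonneg hr0 p
  have hden : (0:ℝ) < 1 + r ^ p := by linarith
  set ρ : ℝ := r / (1 + r ^ p) ^ (1/p) with hρdef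
  have hρ0 : 0 ≤ ρ := div_nonneg hr0 (Real.rpow_nonneg hden.le _)
  have hρp : ρ ^ p = r ^ p / (1 + r ^ p) := by
    rw [hρdef, Real.div_rpow hr0 (Real.rpow_nonneg hden.le _), ← Real.rpow_mul hden.le,
      one_div, inv_mul_cancel₀ (ne_of_gt hp0), Real.rpow_one]
  set t : ℝ := r ^ p / (1 + r ^ p) with htdef
  have ht0 : 0 ≤ t := div_nonneg hrp hden.le
  have ht1 : t < 1 := (div_lt_one hden).mpr (by linarith)
  have ht_eq : t = r ^ p * (1 - t) := by
    rw [htdef]; field_simp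
    ring
  refine ⟨hρ0, ?_⟩
  intro f x hs hb M
  have key1 : ∀ n : ℕ, 1 ≤ n → ‖x 0‖ ^ p + ‖x n‖ ^ p * r ^ p ≤ 1 :=
    fun n hn => bohr_key_ineq hp hN hr0 hr f x hs hb hn
  set a : ℝ := ‖x 0‖ ^ p with hadef
  have ha0 : 0 ≤ a := Real.rpow_nonneg (norm_nonneg _) p
  have ha1 : a ≤ 1 := by
    have := key1 1 le_rfl
    nlinarith [mul_nonneg (Real.rpow_nonneg (norm_nonneg (x 1)) p) hrp]
  match M with
  | 0 => simp
  | (M+1) =>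
    rw [Finset.sum_range_succ']
    have hgb : ∀ i : ℕ, ‖x (i+1)‖ ^ p * ρ ^ (p * ((i+1 : ℕ) : ℝ)) ≤ (1-a) * ((1-t) * t ^ i) := by
      intro i
      have h1 : ρ ^ (p * ((i+1 : ℕ) : ℝ)) = t ^ (i+1) := by
        rw [Real.rpow_mul hρ0, Real.rpow_natCast, hρp]
      have h2 : ‖x (i+1)‖ ^ p * r ^ p ≤ 1 - a := by
        have := key1 (i+1) (by omega); linarith
      have hps : t ^ (i+1) = t ^ i * t := pow_succ t i
      calc ‖x (i+1)‖ ^ p * ρ ^ (p * ((i+1 : ℕ) : ℝ))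
          = (‖x (i+1)‖ ^ p * r ^ p) * ((1-t) * t ^ i) := by
            rw [h1, hps]; linear_combination (‖x (i+1)‖ ^ p * t ^ i) * ht_eq
        _ ≤ (1-a) * ((1-t) * t ^ i) :=
            mul_le_mul_of_nonneg_right h2
              (mul_nonneg (by linarith) (pow_nonneg ht0 i))
    have hgeom : ∑ i ∈ Finset.range M, t ^ i ≤ (1 - t)⁻¹ := by
      have hsm := summable_geometric_of_lt_one ht0 ht1
      have := Summable.sum_le_tsum (Finset.range M) (fun i _ => pow_nonneg ht0 i) hsm
      rwa [tsum_geometric_of_lt_one ht0 ht1] at this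
    have hA : ∑ i ∈ Finset.range M, ‖x (i+1)‖ ^ p * ρ ^ (p * ((i+1 : ℕ) : ℝ)) ≤ 1 - a := by
      calc ∑ i ∈ Finset.range M, ‖x (i+1)‖ ^ p * ρ ^ (p * ((i+1 : ℕ) : ℝ))
          ≤ ∑ i ∈ Finset.range M, (1-a) * ((1-t) * t ^ i) :=
            Finset.sum_le_sum (fun i _ => hgb i)
        _ = (1-a) * (1-t) * ∑ i ∈ Finset.range M, t ^ i := by
            rw [Finset.mul_sum]
            exact Finset.sum_congr rfl (fun i _ => by ring)
        _ ≤ (1-a) * (1-t) * (1-t)⁻¹ :=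
            mul_le_mul_of_nonneg_left hgeom (mul_nonneg (by linarith) (by linarith))
        _ = 1 - a := by
            rw [mul_assoc, mul_inv_cancel₀ (by linarith : (1:ℝ) - t ≠ 0), mul_one]
    have hg0 : ‖x 0‖ ^ p * ρ ^ (p * ((0 : ℕ) : ℝ)) = a := by
      norm_num [Real.rpow_zero]
      rfl
    rw [hg0]
    linarith

/-- The Bohr condition always holds at `r = 0`. -/
lemma bohr_zero_sum_le {p : ℝ} (hp : 1 ≤ p) (f : ℂ → X) (x : ℕ → X)
    (hs : ∀ z ∈ Metric.ball (0 : ℂ) 1, HasSum (fun n => z ^ n • x n) (f z))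
    (hb : ∀ z ∈ Metric.ball (0 : ℂ) 1, ‖f z‖ ≤ 1) (M : ℕ) :
    ∑ m ∈ Finset.range M, ‖x m‖ ^ p * (0:ℝ) ^ (p * (m : ℝ)) ≤ 1 := by
  have hp0 : 0 < p := by linarith
  have hx0 : ‖x 0‖ ≤ 1 := by
    rw [← bohr_coeff_zero f x hs]; exact hb 0 (by simp)
  match M with
  | 0 => simp
  | (M+1) =>
    rw [Finset.sum_range_succ']
    have h1 : ∀ i : ℕ, ‖x (i+1)‖ ^ p * (0:ℝ) ^ (p * ((i+1 : ℕ) : ℝ)) = 0 := by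
      intro i
      have hne : p * ((i+1 : ℕ) : ℝ) ≠ 0 := by
        have : (0:ℝ) < ((i+1 : ℕ) : ℝ) := by positivity
        positivity
      rw [Real.zero_rpow hne, mul_zero]
    rw [Finset.sum_congr rfl (fun i _ => h1 i), Finset.sum_const_zero, zero_add]
    have h2 : ‖x 0‖ ^ p * (0:ℝ) ^ (p * ((0 : ℕ) : ℝ)) = ‖x 0‖ ^ p := by
      norm_num [Real.rpow_zero]
    rw [h2]
    exact Real.rpow_le_one (norm_nonneg _) hx0 hp0.le

end BohrAux

/-- `R̃_{p,N}(X)/(1+R̃_{p,N}(X)^p)^{1/p} ≤ r_p(X) ≤ R̃_{p,N}(X)`. -/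
theorem stmt2 (X : Type*) [NormedAddCommGroup X] [NormedSpace ℂ X] [CompleteSpace X]
    (p : ℝ) (hp : 1 ≤ p) (N : ℕ) (hN : 1 ≤ N) :
    pBohrRadiusN X p N / (1 + pBohrRadiusN X p N ^ p) ^ (1 / p) ≤ pBohrRadius X p ∧
    pBohrRadius X p ≤ pBohrRadiusN X p N := by
  classical
  have hp0 : 0 < p := by linarith
  set SN : Set ℝ := {r : ℝ | 0 ≤ r ∧ ∀ (f : ℂ → X) (x : ℕ → X),
    (∀ z ∈ Metric.ball (0 : ℂ) 1, HasSum (fun k => z ^ k • x k) (f z)) →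
    (∀ z ∈ Metric.ball (0 : ℂ) 1, ‖f z‖ ≤ 1) →
    ∑ k ∈ Finset.range (N + 1), ‖x k‖ ^ p * r ^ (p * (k : ℝ)) ≤ 1} with hSN
  set SI : Set ℝ := {r : ℝ | 0 ≤ r ∧ ∀ (f : ℂ → X) (x : ℕ → X),
    (∀ z ∈ Metric.ball (0 : ℂ) 1, HasSum (fun n => z ^ n • x n) (f z)) →
    (∀ z ∈ Metric.ball (0 : ℂ) 1, ‖f z‖ ≤ 1) →
    ∀ M : ℕ, ∑ n ∈ Finset.range M, ‖x n‖ ^ p * r ^ (p * (n : ℝ)) ≤ 1} with hSI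
  have hRN : pBohrRadiusN X p N = sSup SN := rfl
  have hRI : pBohrRadius X p = sSup SI := rfl
  have hsub : SI ⊆ SN := fun r hr => ⟨hr.1, fun f x hs hb => hr.2 f x hs hb (N+1)⟩
  by_cases hX : Subsingleton X
  · -- trivial space: both sets are unbounded above, so both suprema are `0`
    have hIciI : Set.Ici (0:ℝ) ⊆ SI := by
      intro r hr
      refine ⟨hr, fun f x _ _ M => ?_⟩
      have hx : ∀ k, x k = 0 := fun k => Subsingleton.elim _ _
      simp [hx, Real.zero_rpow (ne_of_gt hp0)]
    have hnbI : ¬ BddAbove SI := fun hb => not_bddAbove_Ici (a := (0:ℝ)) (BddAbove.mono hIciI hb)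
    have hnbN : ¬ BddAbove SN := fun hb =>
      not_bddAbove_Ici (a := (0:ℝ)) (BddAbove.mono (hIciI.trans hsub) hb)
    rw [hRN, hRI, Real.sSup_of_not_bddAbove hnbI, Real.sSup_of_not_bddAbove hnbN]
    norm_num [Real.zero_rpow (ne_of_gt hp0), Real.one_rpow]
  · have : Nontrivial X := not_subsingleton_iff_nontrivial.mp hX
    obtain ⟨v, hv⟩ := exists_ne (0 : X)
    set u : X := ((‖v‖ : ℂ))⁻¹ • v with hu_def
    have hu : ‖u‖ = 1 := by
      rw [hu_def, norm_smul, norm_inv, Complex.norm_real, Real.norm_eq_abs,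
        abs_of_nonneg (norm_nonneg v)]
      field_simp [norm_ne_zero_iff.mpr hv]
    have hbound : ∀ r ∈ SN, r ≤ 1 := by
      rintro r ⟨hr0, hcond⟩
      have hcs : ∀ z ∈ Metric.ball (0 : ℂ) 1,
          HasSum (fun k : ℕ => z ^ k • (if k = 1 then u else 0)) (z • u) := by
        intro z _
        have heq : (fun k : ℕ => z ^ k • (if k = 1 then u else 0))
            = fun k : ℕ => if k = 1 then z • u else 0 := by
          funext k
          split_ifs with h
          · subst h; rw [pow_one]
          · rw [smul_zero]
        rw [heq]
        exact hasSum_ite_eq 1 (z • u)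
      have hcb : ∀ z ∈ Metric.ball (0 : ℂ) 1, ‖z • u‖ ≤ 1 := by
        intro z hz
        rw [norm_smul, hu, mul_one]
        have : ‖z‖ < 1 := by simpa using hz
        linarith
      have h := hcond (fun z => z • u) (fun k => if k = 1 then u else 0) hcs hcb
      have h1 : ‖(if (1:ℕ) = 1 then u else (0:X))‖ ^ p * r ^ (p * ((1:ℕ) : ℝ))
          ≤ ∑ k ∈ Finset.range (N+1), ‖(if k = 1 then u else (0:X))‖ ^ p * r ^ (p * (k : ℝ)) :=
        Finset.single_le_sum
          (f := fun k : ℕ => ‖(if k = 1 then u else (0:X))‖ ^ p * r ^ (p * (k : ℝ)))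
          (fun k _ => mul_nonneg (Real.rpow_nonneg (norm_nonneg _) _) (Real.rpow_nonneg hr0 _))
          (Finset.mem_range.mpr (by omega))
      rw [if_pos rfl, hu, Real.one_rpow] at h1
      have hrp1 : r ^ p ≤ 1 := by
        have := h1.trans h
        simpa using this
      by_contra hgt
      push_neg at hgt
      have : 1 < r ^ p :=
        (Real.one_lt_rpow_iff_of_pos (by linarith)).mpr (Or.inl ⟨hgt, hp0⟩)
      linarith
    have hSN_bdd : BddAbove SN := ⟨1, fun r hr => hbound r hr⟩
    have h0N : (0:ℝ) ∈ SN := ⟨le_refl 0, fun f x hs hb => bohr_zero_sum_le hp f x hs hb (N+1)⟩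
    have h0I : (0:ℝ) ∈ SI := ⟨le_refl 0, fun f x hs hb M => bohr_zero_sum_le hp f x hs hb M⟩
    have hSI_bdd : BddAbove SI := hSN_bdd.mono hsub
    -- the supremum of `SN` belongs to `SN` (the constraints are closed conditions)
    have hRmem : sSup SN ∈ SN := by
      have hne : SN.Nonempty := ⟨0, h0N⟩
      have hcl : sSup SN ∈ closure SN := csSup_mem_closure hne hSN_bdd
      haveI : (nhdsWithin (sSup SN) SN).NeBot := mem_closure_iff_nhdsWithin_neBot.mp hcl
      refine ⟨le_csSup hSN_bdd h0N, ?_⟩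
      intro f x hs hb
      have hFc : Continuous
          (fun r : ℝ => ∑ k ∈ Finset.range (N+1), ‖x k‖ ^ p * r ^ (p * (k : ℝ))) := by
        apply continuous_finset_sum
        intro k _
        apply Continuous.mul continuous_const
        exact continuous_iff_continuousAt.mpr fun r =>
          Real.continuousAt_rpow_const r _ (Or.inr (mul_nonneg hp0.le (Nat.cast_nonneg k)))
      have htend : Filter.Tendsto
          (fun r : ℝ => ∑ k ∈ Finset.range (N+1), ‖x k‖ ^ p * r ^ (p * (k : ℝ)))
          (nhdsWithin (sSup SN) SN)
          (nhds (∑ k ∈ Finset.range (N+1), ‖x k‖ ^ p * (sSup SN) ^ (p * (k : ℝ)))) :=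
        (hFc.continuousAt).continuousWithinAt
      apply le_of_tendsto htend
      filter_upwards [self_mem_nhdsWithin] with r hr
      exact hr.2 f x hs hb
    have hρmem : (sSup SN) / (1 + (sSup SN) ^ p) ^ (1/p) ∈ SI := by
      obtain ⟨h1, h2⟩ := bohr_rho_mem (X := X) hp hN hRmem.1 hRmem.2
      exact ⟨h1, h2⟩
    constructor
    · rw [hRN, hRI]
      exact le_csSup hSI_bdd hρmem
    · rw [hRN, hRI]
      exact csSup_le_csSup hSN_bdd ⟨0, h0I⟩ hsub
end

section
/- Let X be a complex Banach space and f ∈ H^∞(𝔻,X) with ‖f‖_∞ ≤ 1 and Taylor expansion f(z) = Σ_{n=0}^∞ x_n z^n. Then for every n ≥ 1 and every continuous linear functional ξ ∈ X* with ‖ξ‖ = 1, one has |⟨ξ, x_n⟩| ≤ 2(1 − |⟨ξ, x_0⟩|). -/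
open Finset

section StmtFourAux
open Complex intervalIntegral Real

lemma circInt (m : ℤ) (hm : m ≠ 0) :
    ∫ θ in (0:ℝ)..(2*Real.pi), Complex.exp ((m:ℂ) * θ * I) = 0 := by
  have hc : ((m:ℂ) * I) ≠ 0 := by
    simp [Complex.ext_iff, I_ne_zero, hm]
  have h := integral_exp_mul_complex (a := (0:ℝ)) (b := 2*Real.pi) hc
  have h1 : Complex.exp ((m:ℂ) * (2*Real.pi*I)) = 1 := Complex.exp_int_mul_two_pi_mul_I m
  calc ∫ θ in (0:ℝ)..(2*Real.pi), Complex.exp ((m:ℂ) * θ * I)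
      = ∫ θ in (0:ℝ)..(2*Real.pi), Complex.exp (((m:ℂ)*I) * θ) := by
        congr 1; ext θ; ring_nf
    _ = 0 := by
        rw [h, show ((m:ℂ)*I*((2*Real.pi : ℝ):ℂ)) = (m:ℂ) * (2*Real.pi*I) by push_cast; ring, h1]
        simp

/-- Fourier-type coefficient extraction: if `g θ = ∑ c k e^{ikθ}` with summable coefficients,
then `∫_0^{2π} g θ e^{-imθ} dθ = 2π c m`. -/
lemma coeffInt (c : ℕ → ℂ) (hc : Summable (fun k => ‖c k‖)) (g : ℝ → ℂ)
    (hg : ∀ θ : ℝ, HasSum (fun k => c k * Complex.exp ((k:ℂ) * θ * I)) (g θ)) (m : ℕ) :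
    ∫ θ in (0:ℝ)..(2*Real.pi), g θ * Complex.exp (-(m:ℂ) * θ * I) = 2*Real.pi * c m := by
  -- bundled continuous maps
  have hcont : ∀ k : ℕ, Continuous (fun θ : ℝ =>
      c k * Complex.exp ((k:ℂ) * θ * I) * Complex.exp (-(m:ℂ) * θ * I)) := by
    intro k
    fun_prop
  set F : ℕ → C(ℝ, ℂ) := fun k => ⟨_, hcont k⟩ with hF
  have hnorm : ∀ (k : ℕ) (θ : ℝ), ‖F k θ‖ = ‖c k‖ := by
    intro k θ
    simp only [hF, ContinuousMap.coe_mk, norm_mul, Complex.norm_exp]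
    simp
  have hFsum : Summable (fun k => ‖(F k).restrict
      (⟨Set.uIcc 0 (2*Real.pi), isCompact_uIcc⟩ : TopologicalSpace.Compacts ℝ)‖) := by
    apply hc.of_nonneg_of_le (fun k => norm_nonneg _)
    intro k
    rw [ContinuousMap.norm_le _ (norm_nonneg _)]
    rintro ⟨θ, hθ⟩
    simp only [ContinuousMap.restrict_apply]
    exact (hnorm k θ).le
  have hHS := hasSum_intervalIntegral_of_summable_norm (a := (0:ℝ)) (b := 2*Real.pi) hFsum
  -- identify the tsum with g θ * e^{-imθ}
  have htsum : ∀ θ : ℝ, ∑' k, F k θ = g θ * Complex.exp (-(m:ℂ) * θ * I) := by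
    intro θ
    exact ((hg θ).mul_right _).tsum_eq
  -- compute each integral
  have hint : ∀ k : ℕ, (∫ θ in (0:ℝ)..(2*Real.pi), F k θ)
      = if k = m then 2*Real.pi * c m else 0 := by
    intro k
    have : (∫ θ in (0:ℝ)..(2*Real.pi), F k θ)
        = c k * ∫ θ in (0:ℝ)..(2*Real.pi), Complex.exp ((((k:ℤ) - m : ℤ):ℂ) * θ * I) := by
      rw [← intervalIntegral.integral_const_mul]
      congr 1; ext θ
      simp only [hF, ContinuousMap.coe_mk]
      rw [mul_assoc, ← Complex.exp_add]
      congr 2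
      push_cast
      ring
    rw [this]
    by_cases hkm : k = m
    · subst hkm
      simp [mul_comm]
    · rw [circInt _ (by omega)]
      simp [hkm]
  simp only [hint] at hHS
  simp only [htsum] at hHS
  have hfin : HasSum (fun k => if k = m then 2*Real.pi * c m else 0) (2*Real.pi * c m) :=
    hasSum_ite_eq m _
  exact (hfin.unique hHS).symm

/-- If `h θ = ∑ d k e^{-ikθ}` with summable coefficients, then for `n ≥ 1`,
`∫_0^{2π} h θ e^{-inθ} dθ = 0`. -/
lemma conjInt (d : ℕ → ℂ) (hd : Summable (fun k => ‖d k‖)) (h : ℝ → ℂ)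
    (hh : ∀ θ : ℝ, HasSum (fun k => d k * Complex.exp (-(k:ℂ) * θ * I)) (h θ))
    (n : ℕ) (hn : 1 ≤ n) :
    ∫ θ in (0:ℝ)..(2*Real.pi), h θ * Complex.exp (-(n:ℂ) * θ * I) = 0 := by
  have hcont : ∀ k : ℕ, Continuous (fun θ : ℝ =>
      d k * Complex.exp (-(k:ℂ) * θ * I) * Complex.exp (-(n:ℂ) * θ * I)) := by
    intro k; fun_prop
  set F : ℕ → C(ℝ, ℂ) := fun k => ⟨_, hcont k⟩ with hF
  have hnorm : ∀ (k : ℕ) (θ : ℝ), ‖F k θ‖ = ‖d k‖ := by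
    intro k θ
    simp only [hF, ContinuousMap.coe_mk, norm_mul, Complex.norm_exp]
    simp
  have hFsum : Summable (fun k => ‖(F k).restrict
      (⟨Set.uIcc 0 (2*Real.pi), isCompact_uIcc⟩ : TopologicalSpace.Compacts ℝ)‖) := by
    apply hd.of_nonneg_of_le (fun k => norm_nonneg _)
    intro k
    rw [ContinuousMap.norm_le _ (norm_nonneg _)]
    rintro ⟨θ, hθ⟩
    simp only [ContinuousMap.restrict_apply]
    exact (hnorm k θ).le
  have hHS := hasSum_intervalIntegral_of_summable_norm (a := (0:ℝ)) (b := 2*Real.pi) hFsum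
  have htsum : ∀ θ : ℝ, ∑' k, F k θ = h θ * Complex.exp (-(n:ℂ) * θ * I) := by
    intro θ; exact ((hh θ).mul_right _).tsum_eq
  have hint : ∀ k : ℕ, (∫ θ in (0:ℝ)..(2*Real.pi), F k θ) = 0 := by
    intro k
    have : (∫ θ in (0:ℝ)..(2*Real.pi), F k θ)
        = d k * ∫ θ in (0:ℝ)..(2*Real.pi), Complex.exp (((-(k:ℤ) - n : ℤ):ℂ) * θ * I) := by
      rw [← intervalIntegral.integral_const_mul]
      congr 1; ext θ
      simp only [hF, ContinuousMap.coe_mk]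
      rw [mul_assoc, ← Complex.exp_add]
      congr 2
      push_cast
      ring
    rw [this, circInt _ (by omega)]
    simp
  simp only [hint] at hHS
  simp only [htsum] at hHS
  exact (hasSum_zero.unique hHS).symm

end StmtFourAux

open Complex intervalIntegral Real in
/-- for `f` in the unit ball of `H^∞(𝔻,X)` with coefficients `x_n`,
`|⟨ξ, x_n⟩| ≤ 2(1 - |⟨ξ, x_0⟩|)` for every norm-one functional `ξ` and `n ≥ 1`. -/
theorem stmt4 (X : Type*) [NormedAddCommGroup X] [NormedSpace ℂ X] [CompleteSpace X]
    (f : ℂ → X) (x : ℕ → X)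
    (hf : ∀ z ∈ Metric.ball (0 : ℂ) 1, HasSum (fun n => z ^ n • x n) (f z))
    (hb : ∀ z ∈ Metric.ball (0 : ℂ) 1, ‖f z‖ ≤ 1) :
    ∀ n : ℕ, 1 ≤ n → ∀ ξ : X →L[ℂ] ℂ, ‖ξ‖ = 1 →
      ‖ξ (x n)‖ ≤ 2 * (1 - ‖ξ (x 0)‖) := by
  intro n hn ξ hξ
  -- choose a unimodular μ aligning a₀ with the positive reals
  obtain ⟨μ, hμ1, hμ0⟩ : ∃ μ : ℂ, ‖μ‖ = 1 ∧ μ * ξ (x 0) = (‖ξ (x 0)‖ : ℂ) := by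
    by_cases h : ξ (x 0) = 0
    · exact ⟨1, norm_one, by simp [h]⟩
    · refine ⟨(starRingEnd ℂ) (ξ (x 0)) / ‖ξ (x 0)‖, ?_, ?_⟩
      · have hz : ‖ξ (x 0)‖ ≠ 0 := norm_ne_zero_iff.mpr h
        rw [norm_div, RCLike.norm_conj, Complex.norm_real, norm_norm, div_self hz]
      · rw [div_mul_eq_mul_div, mul_comm, Complex.mul_conj']
        rw [show ((‖ξ (x 0)‖ : ℂ))^2 = (‖ξ (x 0)‖ : ℂ) * ‖ξ (x 0)‖ by ring]
        rw [mul_div_assoc, div_self (by exact_mod_cast norm_ne_zero_iff.mpr h)]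
        simp
  -- the key estimate for each radius r < 1
  have key : ∀ r : ℝ, 0 ≤ r → r < 1 → ‖ξ (x n)‖ * r^n ≤ 2*(1 - ‖ξ (x 0)‖) := by
    intro r hr0 hr1
    set r' : ℝ := (1+r)/2 with hr'def
    have hrr' : r < r' := by rw [hr'def]; linarith
    have hr'1 : r' < 1 := by rw [hr'def]; linarith
    have hr'0 : 0 < r' := by rw [hr'def]; linarith
    -- coefficients are bounded at radius r'
    have hmem : ((r' : ℝ) : ℂ) ∈ Metric.ball (0:ℂ) 1 := by
      rw [Metric.mem_ball, dist_zero_right, Complex.norm_real,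
        Real.norm_of_nonneg hr'0.le]; exact hr'1
    obtain ⟨C, hC⟩ : ∃ C : ℝ, ∀ k : ℕ, ‖x k‖ * r'^k ≤ C := by
      have hT : Filter.Tendsto (fun k : ℕ => ‖((r' : ℂ))^k • x k‖)
          Filter.atTop (nhds 0) := by
        simpa using ((hf _ hmem).summable.tendsto_atTop_zero).norm
      obtain ⟨C, hC⟩ := hT.bddAbove_range
      refine ⟨C, fun k => ?_⟩
      have := hC (Set.mem_range_self k)
      rw [norm_smul, norm_pow, Complex.norm_real, Real.norm_of_nonneg hr'0.le,
        mul_comm] at this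
      exact this
    -- summability of the coefficients at radius r
    set c : ℕ → ℂ := fun k => μ * ξ (x k) * (r:ℂ)^k with hcdef
    have hnc : ∀ k, ‖c k‖ = ‖ξ (x k)‖ * r^k := by
      intro k
      rw [hcdef]
      simp only [norm_mul, hμ1, one_mul, norm_pow, Complex.norm_real,
        Real.norm_of_nonneg hr0]
    have hsum : Summable (fun k => ‖c k‖) := by
      have hgeo : Summable (fun k : ℕ => C * (r/r')^k) :=
        (summable_geometric_of_lt_one (div_nonneg hr0 hr'0.le)
          (by rw [div_lt_one hr'0]; exact hrr')).mul_left C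
      apply hgeo.of_nonneg_of_le (fun k => norm_nonneg _)
      intro k
      rw [hnc k]
      have h1 : ‖ξ (x k)‖ ≤ ‖x k‖ := by
        calc ‖ξ (x k)‖ ≤ ‖ξ‖ * ‖x k‖ := ξ.le_opNorm _
          _ = ‖x k‖ := by rw [hξ, one_mul]
      calc ‖ξ (x k)‖ * r^k ≤ ‖x k‖ * r^k := by
            apply mul_le_mul_of_nonneg_right h1 (pow_nonneg hr0 _)
        _ = (‖x k‖ * r'^k) * (r/r')^k := by
            have hne : (r':ℝ)^k ≠ 0 := pow_ne_zero _ hr'0.ne'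
            rw [mul_assoc, ← mul_pow, mul_div_assoc', mul_comm r' r, mul_div_assoc, div_self hr'0.ne', mul_one]
        _ ≤ C * (r/r')^k := by
            apply mul_le_mul_of_nonneg_right (hC k)
            positivity
    -- the boundary function
    set g : ℝ → ℂ := fun θ => μ * ξ (f ((r:ℂ) * Complex.exp (θ * I))) with hgdef
    have hzmem : ∀ θ : ℝ, ((r:ℂ) * Complex.exp (θ * I)) ∈ Metric.ball (0:ℂ) 1 := by
      intro θ
      rw [Metric.mem_ball, dist_zero_right, norm_mul, Complex.norm_real,
        Complex.norm_exp_ofReal_mul_I, mul_one,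
        Real.norm_of_nonneg hr0]
      exact hr1
    have hg : ∀ θ : ℝ, HasSum (fun k => c k * Complex.exp ((k:ℂ) * θ * I)) (g θ) := by
      intro θ
      have h2 := ((hf _ (hzmem θ)).mapL ξ).mul_left μ
      have e : (fun k : ℕ => c k * Complex.exp ((k:ℂ) * θ * I))
          = fun k => μ * ξ (((r:ℂ) * Complex.exp (θ * I)) ^ k • x k) := by
        funext k
        rw [ContinuousLinearMap.map_smul, smul_eq_mul, mul_pow, ← Complex.exp_nat_mul, hcdef]
        ring_nf
      rw [e]; exact h2
    have hgb : ∀ θ : ℝ, ‖g θ‖ ≤ 1 := by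
      intro θ
      rw [hgdef]
      calc ‖μ * ξ (f ((r:ℂ) * Complex.exp (θ * I)))‖
          = ‖ξ (f ((r:ℂ) * Complex.exp (θ * I)))‖ := by rw [norm_mul, hμ1, one_mul]
        _ ≤ ‖ξ‖ * ‖f ((r:ℂ) * Complex.exp (θ * I))‖ := ξ.le_opNorm _
        _ ≤ 1 := by rw [hξ, one_mul]; exact hb _ (hzmem θ)
    have hgc : Continuous g := by
      have : g = fun θ : ℝ => ∑' k, c k * Complex.exp ((k:ℂ) * (θ:ℝ) * I) :=
        funext fun θ => ((hg θ).tsum_eq).symm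
      rw [this]
      apply continuous_tsum (fun k => by fun_prop) hsum
      intro k θ
      rw [norm_mul]
      simp [Complex.norm_exp]
    -- the three integrals
    have hI := coeffInt c hsum g hg n
    have hI0 := coeffInt c hsum g hg 0
    have hgI : ∫ θ in (0:ℝ)..(2*Real.pi), g θ = 2*Real.pi * c 0 := by
      rw [← hI0]; congr 1; ext θ; simp
    -- conjugate series
    have hconjsum : ∀ θ : ℝ, HasSum
        (fun k => (starRingEnd ℂ) (c k) * Complex.exp (-(k:ℂ) * θ * I))
        ((starRingEnd ℂ) (g θ)) := by
      intro θ
      have := (hg θ).map (starRingEnd ℂ) continuous_star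
      convert this using 2 with k
      simp only [Function.comp_apply, map_mul, ← Complex.exp_conj]
      congr 1
      simp [map_mul, Complex.conj_I, Complex.conj_ofReal]
    have hIc : ∫ θ in (0:ℝ)..(2*Real.pi),
        (starRingEnd ℂ) (g θ) * Complex.exp (-(n:ℂ) * θ * I) = 0 :=
      conjInt (fun k => (starRingEnd ℂ) (c k))
        (by simpa using hsum) (fun θ => (starRingEnd ℂ) (g θ)) hconjsum n hn
    -- the exponential integral
    have hIe : ∫ θ in (0:ℝ)..(2*Real.pi), Complex.exp (-(n:ℂ) * θ * I) = 0 := by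
      have := circInt (-(n:ℤ)) (by omega)
      convert this using 2 with θ
      push_cast
      ring
    -- integrand decomposition
    have hdecomp : ∀ θ : ℝ, ((1:ℂ) - (((g θ).re : ℝ) : ℂ)) * Complex.exp (-(n:ℂ) * θ * I)
        = Complex.exp (-(n:ℂ) * θ * I)
          - (2⁻¹ : ℂ) * (g θ * Complex.exp (-(n:ℂ) * θ * I))
          - (2⁻¹ : ℂ) * ((starRingEnd ℂ) (g θ) * Complex.exp (-(n:ℂ) * θ * I)) := by
      intro θ
      have h1 : (((g θ).re : ℝ) : ℂ) = (g θ + (starRingEnd ℂ) (g θ)) / 2 := by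
        rw [Complex.add_conj]
        push_cast
        ring
      rw [h1]
      ring
    -- integrability facts
    have hic1 : IntervalIntegrable (fun θ : ℝ => Complex.exp (-(n:ℂ) * θ * I))
        MeasureTheory.volume 0 (2*Real.pi) := (by fun_prop : Continuous _).intervalIntegrable _ _
    have hic2 : IntervalIntegrable (fun θ : ℝ => (2⁻¹:ℂ) * (g θ * Complex.exp (-(n:ℂ) * θ * I)))
        MeasureTheory.volume 0 (2*Real.pi) := by
      apply Continuous.intervalIntegrable
      fun_prop
    have hic3 : IntervalIntegrable
        (fun θ : ℝ => (2⁻¹:ℂ) * ((starRingEnd ℂ) (g θ) * Complex.exp (-(n:ℂ) * θ * I)))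
        MeasureTheory.volume 0 (2*Real.pi) := by
      apply Continuous.intervalIntegrable
      exact continuous_const.mul ((continuous_star.comp hgc).mul (by fun_prop))
    -- the main integral J
    have hJ : ∫ θ in (0:ℝ)..(2*Real.pi),
        ((1:ℂ) - (((g θ).re : ℝ) : ℂ)) * Complex.exp (-(n:ℂ) * θ * I)
        = -(Real.pi : ℂ) * c n := by
      calc ∫ θ in (0:ℝ)..(2*Real.pi),
          ((1:ℂ) - (((g θ).re : ℝ) : ℂ)) * Complex.exp (-(n:ℂ) * θ * I)
          = ∫ θ in (0:ℝ)..(2*Real.pi),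
            (Complex.exp (-(n:ℂ) * θ * I)
              - (2⁻¹:ℂ) * (g θ * Complex.exp (-(n:ℂ) * θ * I))
              - (2⁻¹:ℂ) * ((starRingEnd ℂ) (g θ) * Complex.exp (-(n:ℂ) * θ * I))) := by
            apply intervalIntegral.integral_congr
            intro θ _
            exact hdecomp θ
        _ = (∫ θ in (0:ℝ)..(2*Real.pi), Complex.exp (-(n:ℂ) * θ * I))
            - (∫ θ in (0:ℝ)..(2*Real.pi), (2⁻¹:ℂ) * (g θ * Complex.exp (-(n:ℂ) * θ * I)))
            - (∫ θ in (0:ℝ)..(2*Real.pi), (2⁻¹:ℂ) * ((starRingEnd ℂ) (g θ) * Complex.exp (-(n:ℂ) * θ * I))) := by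
            rw [intervalIntegral.integral_sub (hic1.sub hic2) hic3,
              intervalIntegral.integral_sub hic1 hic2]
        _ = -(Real.pi : ℂ) * c n := by
            rw [hIe, intervalIntegral.integral_const_mul, intervalIntegral.integral_const_mul,
              hI, hIc]
            ring
    -- bound |J| by the integral of 1 - Re g
    have hbound : ‖∫ θ in (0:ℝ)..(2*Real.pi),
        ((1:ℂ) - (((g θ).re : ℝ) : ℂ)) * Complex.exp (-(n:ℂ) * θ * I)‖
        ≤ ∫ θ in (0:ℝ)..(2*Real.pi), (1 - (g θ).re) := by
      have h2π : (0:ℝ) ≤ 2*Real.pi := by positivity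
      refine le_trans (intervalIntegral.norm_integral_le_integral_norm h2π) ?_
      apply le_of_eq
      apply intervalIntegral.integral_congr
      intro θ _
      dsimp only
      have hre : (g θ).re ≤ 1 := le_trans (Complex.re_le_norm _) (hgb θ)
      rw [norm_mul]
      rw [show ‖Complex.exp (-(n:ℂ) * θ * I)‖ = 1 by simp [Complex.norm_exp]]
      rw [mul_one]
      rw [show ((1:ℂ) - (((g θ).re : ℝ):ℂ)) = (((1 - (g θ).re : ℝ)):ℂ) by push_cast; ring]
      rw [Complex.norm_real, Real.norm_of_nonneg (by linarith)]
    -- compute the real integral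
    have hReInt : ∫ θ in (0:ℝ)..(2*Real.pi), (1 - (g θ).re)
        = 2*Real.pi * (1 - ‖ξ (x 0)‖) := by
      have hgint : IntervalIntegrable g MeasureTheory.volume 0 (2*Real.pi) :=
        hgc.intervalIntegrable _ _
      have h1 : ∫ θ in (0:ℝ)..(2*Real.pi), (g θ).re
          = (∫ θ in (0:ℝ)..(2*Real.pi), g θ).re := by
        rw [← Complex.reCLM_apply, ← Complex.reCLM.intervalIntegral_comp_comm hgint]
        simp
      rw [intervalIntegral.integral_sub intervalIntegrable_const
        ((show Continuous fun θ : ℝ => (g θ).re from Complex.continuous_re.comp hgc).intervalIntegrable _ _), h1, hgI]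
      have hc0 : c 0 = (‖ξ (x 0)‖ : ℂ) := by rw [hcdef]; simpa using hμ0
      rw [hc0]
      simp [intervalIntegral.integral_const]
      ring
    -- put it together
    have hfinal : Real.pi * (‖ξ (x n)‖ * r^n) ≤ 2*Real.pi * (1 - ‖ξ (x 0)‖) := by
      have h1 : ‖-(Real.pi:ℂ) * c n‖ = Real.pi * (‖ξ (x n)‖ * r^n) := by
        rw [norm_mul, norm_neg, Complex.norm_real, Real.norm_of_nonneg Real.pi_pos.le, hnc n]
      calc Real.pi * (‖ξ (x n)‖ * r^n) = ‖-(Real.pi:ℂ) * c n‖ := h1.symm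
        _ = ‖∫ θ in (0:ℝ)..(2*Real.pi),
            ((1:ℂ) - (((g θ).re : ℝ) : ℂ)) * Complex.exp (-(n:ℂ) * θ * I)‖ := by rw [hJ]
        _ ≤ ∫ θ in (0:ℝ)..(2*Real.pi), (1 - (g θ).re) := hbound
        _ = 2*Real.pi * (1 - ‖ξ (x 0)‖) := hReInt
    nlinarith [Real.pi_pos, hfinal]
  -- take the limit r → 1⁻
  have hlim : Filter.Tendsto (fun r : ℝ => ‖ξ (x n)‖ * r^n)
      (nhdsWithin 1 (Set.Iio 1)) (nhds (‖ξ (x n)‖)) := by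
    have : Continuous (fun r : ℝ => ‖ξ (x n)‖ * r^n) := by fun_prop
    have h := (this.tendsto 1).mono_left (nhdsWithin_le_nhds (s := Set.Iio (1:ℝ)))
    simpa using h
  refine le_of_tendsto hlim ?_
  filter_upwards [Ioo_mem_nhdsLT_of_mem (Set.mem_Ioc.mpr ⟨zero_lt_one, le_refl 1⟩)] with r hr
  exact key r hr.1.le hr.2
end

section
/- Let X be a complex Banach space, N ∈ ℕ, and f ∈ H^∞(𝔻,X) with ‖f‖_∞ ≤ 1 and Taylor expansion f(z) = Σ_{n=0}^∞ x_n z^n. Then for every θ ∈ [0, 2π), one has ‖x_0 + (e^{iθ}/(2N)) Σ_{k=1}^N x_k‖ ≤ 1. -/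
open Finset MeasureTheory intervalIntegral Filter Complex

noncomputable section

private lemma intE (m : ℤ) :
    (∫ t in (0:ℝ)..(2*Real.pi), Complex.exp (m * t * Complex.I))
      = if m = 0 then ((2*Real.pi : ℝ) : ℂ) else 0 := by
  rcases eq_or_ne m 0 with hm | hm
  · simp [hm]
  · have hc : (m : ℂ) * Complex.I ≠ 0 :=
      mul_ne_zero (Int.cast_ne_zero.mpr hm) Complex.I_ne_zero
    have h1 : ∀ t : ℝ, (m : ℂ) * t * Complex.I = (m * Complex.I) * t := fun t => by ring
    simp_rw [h1]
    rw [integral_exp_mul_complex hc]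
    have h2 : Complex.exp ((m * Complex.I) * ((2*Real.pi : ℝ) : ℂ)) = 1 := by
      rw [show ((m:ℂ) * Complex.I) * ((2*Real.pi : ℝ) : ℂ) = m * (2*Real.pi*Complex.I) by
        push_cast; ring]
      exact Complex.exp_int_mul_two_pi_mul_I m
    rw [h2]
    simp [hm]

private lemma contE (m : ℤ) : Continuous (fun t : ℝ => Complex.exp ((m:ℂ) * t * Complex.I)) := by
  fun_prop

private lemma intgE (m : ℤ) :
    IntervalIntegrable (fun t : ℝ => Complex.exp ((m:ℂ)*t*Complex.I)) volume 0 (2*Real.pi) :=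
  (contE m).intervalIntegrable _ _

private def Kk (N : ℕ) (θ : ℝ) (t : ℝ) : ℝ :=
  1 + (1/(N:ℝ)) * ∑ k ∈ Icc 1 N, Real.cos (k*t - θ)

private lemma Kk_cont (N : ℕ) (θ : ℝ) : Continuous (Kk N θ) := by
  unfold Kk; fun_prop

private lemma Kk_nonneg (N : ℕ) (hN : 1 ≤ N) (θ t : ℝ) : 0 ≤ Kk N θ t := by
  have hNpos : (0:ℝ) < N := by exact_mod_cast hN
  have hS : -(N:ℝ) ≤ ∑ k ∈ Icc 1 N, Real.cos (k*t - θ) := by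
    have := Finset.sum_le_sum (s := Icc 1 N)
      (f := fun _ : ℕ => (-1 : ℝ)) (g := fun k : ℕ => Real.cos (k*t - θ))
      (fun k _ => Real.neg_one_le_cos _)
    simpa [Nat.card_Icc, mul_comm] using this
  have h1 : (1/(N:ℝ)) * (-(N:ℝ)) ≤ (1/(N:ℝ)) * ∑ k ∈ Icc 1 N, Real.cos (k*t - θ) :=
    mul_le_mul_of_nonneg_left hS (by positivity)
  have h2 : (1/(N:ℝ)) * (-(N:ℝ)) = -1 := by field_simp
  unfold Kk; linarith

private lemma Kk_le_two (N : ℕ) (hN : 1 ≤ N) (θ t : ℝ) : Kk N θ t ≤ 2 := by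
  have hNpos : (0:ℝ) < N := by exact_mod_cast hN
  have hS : ∑ k ∈ Icc 1 N, Real.cos (k*t - θ) ≤ (N:ℝ) := by
    have := Finset.sum_le_sum (s := Icc 1 N)
      (f := fun k : ℕ => Real.cos (k*t - θ)) (g := fun _ : ℕ => (1 : ℝ))
      (fun k _ => Real.cos_le_one _)
    simpa [Nat.card_Icc, mul_comm] using this
  have h1 : (1/(N:ℝ)) * ∑ k ∈ Icc 1 N, Real.cos (k*t - θ) ≤ (1/(N:ℝ)) * (N:ℝ) :=
    mul_le_mul_of_nonneg_left hS (by positivity)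
  have h2 : (1/(N:ℝ)) * (N:ℝ) = 1 := by field_simp
  unfold Kk; linarith

private lemma hcos (k : ℕ) (θ t : ℝ) :
    ((Real.cos (k*t - θ) : ℝ) : ℂ)
      = (Complex.exp (-(θ:ℂ)*Complex.I) * Complex.exp ((k:ℂ) * t * Complex.I)
        + Complex.exp ((θ:ℂ)*Complex.I) * Complex.exp (-((k:ℂ) * t) * Complex.I)) / 2 := by
  have e1 : Complex.exp (((k*t - θ : ℝ):ℂ) * Complex.I)
      = Complex.exp (-(θ:ℂ)*Complex.I) * Complex.exp ((k:ℂ)*t*Complex.I) := by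
    rw [← Complex.exp_add]; congr 1; push_cast; ring
  have e2 : Complex.exp (-((k*t - θ : ℝ):ℂ) * Complex.I)
      = Complex.exp ((θ:ℂ)*Complex.I) * Complex.exp (-((k:ℂ)*t)*Complex.I) := by
    rw [← Complex.exp_add]; congr 1; push_cast; ring
  have h2 := Complex.two_cos (x := ((k*t - θ : ℝ):ℂ))
  rw [e1, e2] at h2
  rw [Complex.ofReal_cos, eq_div_iff (two_ne_zero)]
  linear_combination h2

private lemma hpt (N : ℕ) (θ r : ℝ) (n : ℕ) (t : ℝ) (hNC : (N:ℂ) ≠ 0) :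
    ((Kk N θ t : ℝ) : ℂ) * ((r:ℂ) * Complex.exp ((t:ℂ)*Complex.I))^n
      = (r:ℂ)^n * Complex.exp (((n:ℤ):ℂ) * t * Complex.I)
        + ∑ k ∈ Icc 1 N, ((r:ℂ)^n/(2*(N:ℂ))) *
            (Complex.exp (-(θ:ℂ)*Complex.I)
                * Complex.exp (((((k:ℤ)+(n:ℤ)):ℤ):ℂ) * t * Complex.I)
             + Complex.exp ((θ:ℂ)*Complex.I)
                * Complex.exp (((((n:ℤ)-(k:ℤ)):ℤ):ℂ) * t * Complex.I)) := by
    have hzn : ((r:ℂ) * Complex.exp ((t:ℂ)*Complex.I))^n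
        = (r:ℂ)^n * Complex.exp (((n:ℤ):ℂ) * t * Complex.I) := by
      rw [mul_pow]; congr 1
      rw [← Complex.exp_nat_mul]; congr 1; push_cast; ring
    have hK : ((Kk N θ t : ℝ) : ℂ)
        = 1 + (1/(N:ℂ)) * ∑ k ∈ Icc 1 N, (((Real.cos (k*t - θ)) : ℝ) : ℂ) := by
      unfold Kk; push_cast; ring
    have hexp1 : ∀ k : ℕ, Complex.exp (((((k:ℤ)+(n:ℤ)):ℤ):ℂ) * t * Complex.I)
        = Complex.exp ((k:ℂ)*t*Complex.I) * Complex.exp (((n:ℤ):ℂ)*t*Complex.I) := by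
      intro k; rw [← Complex.exp_add]; congr 1; push_cast; ring
    have hexp2 : ∀ k : ℕ, Complex.exp (((((n:ℤ)-(k:ℤ)):ℤ):ℂ) * t * Complex.I)
        = Complex.exp (-((k:ℂ)*t)*Complex.I) * Complex.exp (((n:ℤ):ℂ)*t*Complex.I) := by
      intro k; rw [← Complex.exp_add]; congr 1; push_cast; ring
    rw [hK, hzn, Finset.sum_congr rfl (fun k _ => hcos k θ t)]
    simp_rw [hexp1, hexp2]
    rw [← Finset.sum_div]
    have hrhs : ∀ k ∈ Icc 1 N, ((r:ℂ)^n/(2*(N:ℂ))) *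
            (Complex.exp (-(θ:ℂ)*Complex.I)
                * (Complex.exp ((k:ℂ)*t*Complex.I) * Complex.exp (((n:ℤ):ℂ)*t*Complex.I))
             + Complex.exp ((θ:ℂ)*Complex.I)
                * (Complex.exp (-((k:ℂ)*t)*Complex.I) * Complex.exp (((n:ℤ):ℂ)*t*Complex.I)))
        = ((r:ℂ)^n/(2*(N:ℂ)) * Complex.exp (((n:ℤ):ℂ)*t*Complex.I)) *
            (Complex.exp (-(θ:ℂ)*Complex.I) * Complex.exp ((k:ℂ)*t*Complex.I)
             + Complex.exp ((θ:ℂ)*Complex.I) * Complex.exp (-((k:ℂ)*t)*Complex.I)) :=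
      fun k _ => by ring
    rw [Finset.sum_congr rfl hrhs, ← Finset.mul_sum]
    field_simp
    have hs : ∀ x : ℕ, Complex.I * (x:ℂ) * (t:ℂ) = Complex.I * (t:ℂ) * (x:ℂ) := fun x => by ring
    simp_rw [hs]
    ring

set_option maxHeartbeats 1000000 in
private lemma Jval (N : ℕ) (hN : 1 ≤ N) (θ : ℝ) (r : ℝ) (n : ℕ) :
    (∫ t in (0:ℝ)..(2*Real.pi), ((Kk N θ t : ℝ) : ℂ) * ((r:ℂ) * Complex.exp ((t:ℂ)*Complex.I))^n)
      = if n = 0 then ((2*Real.pi:ℝ):ℂ)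
        else if n ≤ N then
          ((2*Real.pi:ℝ):ℂ) * (Complex.exp ((θ:ℂ)*Complex.I) / (2*(N:ℂ))) * (r:ℂ)^n
        else 0 := by
  have hNC : (N:ℂ) ≠ 0 := Nat.cast_ne_zero.mpr (by omega)
  have i1 : IntervalIntegrable
      (fun t : ℝ => (r:ℂ)^n * Complex.exp (((n:ℤ):ℂ) * t * Complex.I)) volume 0 (2*Real.pi) :=
    (intgE (n:ℤ)).const_mul _
  have isummand : ∀ k : ℕ, IntervalIntegrable (fun t : ℝ => ((r:ℂ)^n/(2*(N:ℂ))) *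
            (Complex.exp (-(θ:ℂ)*Complex.I)
                * Complex.exp (((((k:ℤ)+(n:ℤ)):ℤ):ℂ) * t * Complex.I)
             + Complex.exp ((θ:ℂ)*Complex.I)
                * Complex.exp (((((n:ℤ)-(k:ℤ)):ℤ):ℂ) * t * Complex.I))) volume 0 (2*Real.pi) :=
    fun k => (((intgE ((k:ℤ)+(n:ℤ))).const_mul _).add ((intgE ((n:ℤ)-(k:ℤ))).const_mul _)).const_mul _
  have i2 : IntervalIntegrable (fun t : ℝ => ∑ k ∈ Icc 1 N, ((r:ℂ)^n/(2*(N:ℂ))) *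
            (Complex.exp (-(θ:ℂ)*Complex.I)
                * Complex.exp (((((k:ℤ)+(n:ℤ)):ℤ):ℂ) * t * Complex.I)
             + Complex.exp ((θ:ℂ)*Complex.I)
                * Complex.exp (((((n:ℤ)-(k:ℤ)):ℤ):ℂ) * t * Complex.I))) volume 0 (2*Real.pi) :=
    (continuous_finset_sum _ (fun k _ => by fun_prop)).intervalIntegrable _ _
  rw [intervalIntegral.integral_congr (g := fun t : ℝ =>
      (r:ℂ)^n * Complex.exp (((n:ℤ):ℂ) * t * Complex.I)
        + ∑ k ∈ Icc 1 N, ((r:ℂ)^n/(2*(N:ℂ))) *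
            (Complex.exp (-(θ:ℂ)*Complex.I)
                * Complex.exp (((((k:ℤ)+(n:ℤ)):ℤ):ℂ) * t * Complex.I)
             + Complex.exp ((θ:ℂ)*Complex.I)
                * Complex.exp (((((n:ℤ)-(k:ℤ)):ℤ):ℂ) * t * Complex.I)))
      (fun t _ => hpt N θ r n t hNC)]
  rw [integral_add i1 i2, intervalIntegral.integral_const_mul, intE,
    intervalIntegral.integral_finset_sum (fun k _ => isummand k)]
  have hsum : ∀ k ∈ Icc 1 N, (∫ t in (0:ℝ)..(2*Real.pi), ((r:ℂ)^n/(2*(N:ℂ))) *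
            (Complex.exp (-(θ:ℂ)*Complex.I)
                * Complex.exp (((((k:ℤ)+(n:ℤ)):ℤ):ℂ) * t * Complex.I)
             + Complex.exp ((θ:ℂ)*Complex.I)
                * Complex.exp (((((n:ℤ)-(k:ℤ)):ℤ):ℂ) * t * Complex.I)))
      = if n = k then
          ((r:ℂ)^n/(2*(N:ℂ))) * Complex.exp ((θ:ℂ)*Complex.I) * ((2*Real.pi:ℝ):ℂ) else 0 := by
    intro k hk
    rw [intervalIntegral.integral_const_mul, integral_add ((intgE _).const_mul _) ((intgE _).const_mul _),
      intervalIntegral.integral_const_mul, intervalIntegral.integral_const_mul, intE, intE]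
    have hk1 : 1 ≤ k := (Finset.mem_Icc.mp hk).1
    have hkn : ¬((k:ℤ) + (n:ℤ) = 0) := by omega
    rcases eq_or_ne n k with h | h
    · have hnk : (n:ℤ) - (k:ℤ) = 0 := by omega
      rw [if_neg hkn, if_pos hnk, if_pos h]
      ring
    · have hnk : ¬((n:ℤ) - (k:ℤ) = 0) := fun hc => h (by omega)
      rw [if_neg hkn, if_neg hnk, if_neg h]
      ring
  rw [Finset.sum_congr rfl hsum, Finset.sum_ite_eq]
  by_cases h0 : n = 0
  · subst h0
    simp [Finset.mem_Icc]
  · have h0' : ¬((n:ℤ) = 0) := by omega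
    by_cases hn : n ≤ N
    · have hmem : n ∈ Icc 1 N := Finset.mem_Icc.mpr ⟨by omega, hn⟩
      simp only [h0', if_false, h0, hmem, if_true, hn]
      ring
    · have hmem : n ∉ Icc 1 N := by simp [Finset.mem_Icc]; omega
      simp [h0', h0, hmem, hn]

set_option maxHeartbeats 1000000 in
private lemma aux (X : Type*) [NormedAddCommGroup X] [NormedSpace ℂ X] [CompleteSpace X]
    (N : ℕ) (hN : 1 ≤ N) (f : ℂ → X) (x : ℕ → X)
    (hf : ∀ z ∈ Metric.ball (0 : ℂ) 1, HasSum (fun n => z ^ n • x n) (f z))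
    (hb : ∀ z ∈ Metric.ball (0 : ℂ) 1, ‖f z‖ ≤ 1)
    (θ : ℝ) (r : ℝ) (hr0 : 0 ≤ r) (hr1 : r < 1) :
    ‖x 0 + (Complex.exp ((θ : ℂ) * Complex.I) / (2 * (N : ℂ))) •
        ∑ k ∈ Finset.Icc 1 N, ((r:ℂ)^k • x k)‖ ≤ 1 := by
  have hπ : (0:ℝ) < 2*Real.pi := by positivity
  set c : ℂ := Complex.exp ((θ : ℂ) * Complex.I) / (2 * (N : ℂ)) with hc
  set z : ℝ → ℂ := fun t => (r:ℂ) * Complex.exp ((t:ℂ)*Complex.I) with hzdef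
  have hzc : Continuous z := by rw [hzdef]; fun_prop
  have hznorm : ∀ t, ‖z t‖ = r := by
    intro t
    rw [hzdef]
    simp only [norm_mul, Complex.norm_real, Complex.norm_exp_ofReal_mul_I, mul_one]
    exact _root_.abs_of_nonneg hr0
  have hzmem : ∀ t, z t ∈ Metric.ball (0:ℂ) 1 := by
    intro t
    rw [Metric.mem_ball, dist_zero_right, hznorm t]
    exact hr1
  obtain ⟨ρ, hrρ, hρ1⟩ : ∃ ρ : ℝ, r < ρ ∧ ρ < 1 := ⟨(r+1)/2, by linarith, by linarith⟩
  have hρ0 : 0 < ρ := lt_of_le_of_lt hr0 hrρ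
  have hρmem : ((ρ:ℂ)) ∈ Metric.ball (0:ℂ) 1 := by
    rw [Metric.mem_ball, dist_zero_right, Complex.norm_real, Real.norm_eq_abs,
      _root_.abs_of_pos hρ0]
    exact hρ1
  have hsum := (hf _ hρmem).summable
  have htend : Filter.Tendsto (fun n => ‖(ρ:ℂ)^n • x n‖) atTop (nhds 0) := by
    simpa using hsum.tendsto_atTop_zero.norm
  obtain ⟨C, hC⟩ := htend.bddAbove_range
  have hC' : ∀ n, ρ^n * ‖x n‖ ≤ C := by
    intro n
    have h1 : ‖(ρ:ℂ)^n • x n‖ = ρ^n * ‖x n‖ := by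
      rw [norm_smul, norm_pow, Complex.norm_real, Real.norm_eq_abs, _root_.abs_of_pos hρ0]
    have := hC (Set.mem_range_self n)
    rwa [h1] at this
  have hC0 : 0 ≤ C := le_trans (by positivity) (hC' 0)
  have hq0 : 0 ≤ r/ρ := by positivity
  have hq1 : r/ρ < 1 := by rw [div_lt_one hρ0]; exact hrρ
  have hxb : ∀ (n : ℕ) (t : ℝ), ‖(z t)^n • x n‖ ≤ C * (r/ρ)^n := by
    intro n t
    rw [norm_smul, norm_pow, hznorm t]
    have hrn : r^n = (r/ρ)^n * ρ^n := by
      rw [div_pow, div_mul_cancel₀]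
      positivity
    calc r^n * ‖x n‖ = (r/ρ)^n * (ρ^n * ‖x n‖) := by rw [hrn]; ring
      _ ≤ (r/ρ)^n * C := mul_le_mul_of_nonneg_left (hC' n) (by positivity)
      _ = C * (r/ρ)^n := mul_comm _ _
  have hgeo : Summable (fun n : ℕ => C * (r/ρ)^n) :=
    (summable_geometric_of_lt_one hq0 hq1).mul_left C
  have hfc : Continuous fun t => f (z t) := by
    have hfz : (fun t : ℝ => f (z t)) = fun t => ∑' n, (z t)^n • x n :=
      funext fun t => ((hf _ (hzmem t)).tsum_eq).symm
    rw [hfz]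
    exact continuous_tsum (fun n => (hzc.pow n).smul continuous_const) hgeo
      (fun n t => hxb n t)
  have hKCc : Continuous fun t : ℝ => ((Kk N θ t : ℝ) : ℂ) :=
    Complex.continuous_ofReal.comp (Kk_cont N θ)
  have hHS : HasSum (fun n => ∫ t in (0:ℝ)..(2*Real.pi), ((Kk N θ t :ℝ):ℂ) • ((z t)^n • x n))
      (∫ t in (0:ℝ)..(2*Real.pi), ((Kk N θ t :ℝ):ℂ) • f (z t)) := by
    apply intervalIntegral.hasSum_integral_of_dominated_convergence
      (bound := fun n _ => 2 * (C * (r/ρ)^n))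
    · intro n
      exact (hKCc.smul ((hzc.pow n).smul continuous_const)).aestronglyMeasurable
    · intro n
      filter_upwards with t _
      rw [norm_smul]
      have h1 : ‖((Kk N θ t :ℝ):ℂ)‖ ≤ 2 := by
        rw [Complex.norm_real, Real.norm_eq_abs, _root_.abs_of_nonneg (Kk_nonneg N hN θ t)]
        exact Kk_le_two N hN θ t
      exact mul_le_mul h1 (hxb n t) (norm_nonneg _) (by norm_num)
    · filter_upwards with t _
      exact hgeo.mul_left 2
    · exact intervalIntegrable_const
    · filter_upwards with t _
      exact (hf _ (hzmem t)).const_smul _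
  have hrw : ∀ n : ℕ, (∫ t in (0:ℝ)..(2*Real.pi), ((Kk N θ t :ℝ):ℂ) • ((z t)^n • x n))
      = (if n = 0 then ((2*Real.pi:ℝ):ℂ)
          else if n ≤ N then ((2*Real.pi:ℝ):ℂ) * c * (r:ℂ)^n else 0) • x n := by
    intro n
    simp only [hzdef]
    simp_rw [smul_smul]
    rw [intervalIntegral.integral_smul_const]
    congr 1
    rw [Jval N hN θ r n, hc]
  have hHS' : HasSum (fun n : ℕ => (if n = 0 then ((2*Real.pi:ℝ):ℂ)
          else if n ≤ N then ((2*Real.pi:ℝ):ℂ) * c * (r:ℂ)^n else 0) • x n)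
      (∫ t in (0:ℝ)..(2*Real.pi), ((Kk N θ t :ℝ):ℂ) • f (z t)) := by
    simpa only [hrw] using hHS
  have hfin : HasSum (fun n : ℕ => (if n = 0 then ((2*Real.pi:ℝ):ℂ)
          else if n ≤ N then ((2*Real.pi:ℝ):ℂ) * c * (r:ℂ)^n else 0) • x n)
      (∑ n ∈ Finset.range (N+1), (if n = 0 then ((2*Real.pi:ℝ):ℂ)
          else if n ≤ N then ((2*Real.pi:ℝ):ℂ) * c * (r:ℂ)^n else 0) • x n) := by
    apply hasSum_sum_of_ne_finset_zero
    intro n hn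
    rw [Finset.mem_range, not_lt] at hn
    have h1 : n ≠ 0 := by omega
    have h2 : ¬ n ≤ N := by omega
    simp [h1, h2]
  have hTeq := hHS'.unique hfin
  have hS : (∑ n ∈ Finset.range (N+1), (if n = 0 then ((2*Real.pi:ℝ):ℂ)
          else if n ≤ N then ((2*Real.pi:ℝ):ℂ) * c * (r:ℂ)^n else 0) • x n)
      = ((2*Real.pi:ℝ):ℂ) • (x 0 + c • ∑ k ∈ Finset.Icc 1 N, ((r:ℂ)^k • x k)) := by
    have hins : Finset.range (N+1) = insert 0 (Finset.Icc 1 N) := by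
      ext m
      simp only [Finset.mem_range, Finset.mem_insert, Finset.mem_Icc]
      omega
    rw [hins, Finset.sum_insert (by simp)]
    have h0 : (if (0:ℕ) = 0 then ((2*Real.pi:ℝ):ℂ)
        else if (0:ℕ) ≤ N then ((2*Real.pi:ℝ):ℂ) * c * (r:ℂ)^0 else 0) • x 0
        = ((2*Real.pi:ℝ):ℂ) • x 0 := by simp
    rw [h0, smul_add, Finset.smul_sum, Finset.smul_sum]
    congr 1
    apply Finset.sum_congr rfl
    intro k hk
    obtain ⟨hk1, hk2⟩ := Finset.mem_Icc.mp hk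
    have hk0 : k ≠ 0 := by omega
    simp only [smul_smul]
    rw [if_neg hk0, if_pos hk2, mul_assoc]
  rw [hS] at hTeq
  have hTnorm : ‖∫ t in (0:ℝ)..(2*Real.pi), ((Kk N θ t :ℝ):ℂ) • f (z t)‖ ≤ 2*Real.pi := by
    have hK0 : (∫ t in (0:ℝ)..(2*Real.pi), Kk N θ t) = 2*Real.pi := by
      have hJ := Jval N hN θ 0 0
      norm_num at hJ
      rw [intervalIntegral.integral_ofReal] at hJ
      simpa using congrArg Complex.re hJ
    calc ‖∫ t in (0:ℝ)..(2*Real.pi), ((Kk N θ t :ℝ):ℂ) • f (z t)‖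
        ≤ ∫ t in (0:ℝ)..(2*Real.pi), ‖((Kk N θ t :ℝ):ℂ) • f (z t)‖ :=
          intervalIntegral.norm_integral_le_integral_norm (by positivity)
      _ ≤ ∫ t in (0:ℝ)..(2*Real.pi), Kk N θ t := by
          apply intervalIntegral.integral_mono_on (by positivity)
            ((hKCc.smul hfc).norm.intervalIntegrable _ _)
            ((Kk_cont N θ).intervalIntegrable _ _)
          intro t _
          show ‖((Kk N θ t : ℝ) : ℂ) • f (z t)‖ ≤ Kk N θ t
          rw [norm_smul, Complex.norm_real, Real.norm_eq_abs,
            _root_.abs_of_nonneg (Kk_nonneg N hN θ t)]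
          calc Kk N θ t * ‖f (z t)‖ ≤ Kk N θ t * 1 :=
                mul_le_mul_of_nonneg_left (hb _ (hzmem t)) (Kk_nonneg N hN θ t)
            _ = Kk N θ t := mul_one _
      _ = 2*Real.pi := hK0
  rw [hTeq] at hTnorm
  rw [norm_smul, Complex.norm_real, Real.norm_eq_abs, _root_.abs_of_pos hπ] at hTnorm
  nlinarith [norm_nonneg (x 0 + c • ∑ k ∈ Finset.Icc 1 N, ((r:ℂ)^k • x k)), hπ, hTnorm]

/-- for `f` in the unit ball of `H^∞(𝔻,X)` with coefficients `x_n`,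
`‖x_0 + (e^{iθ}/(2N)) Σ_{k=1}^N x_k‖ ≤ 1` for every `θ ∈ [0,2π)`. -/
theorem stmt5 (X : Type*) [NormedAddCommGroup X] [NormedSpace ℂ X] [CompleteSpace X]
    (N : ℕ) (hN : 1 ≤ N) (f : ℂ → X) (x : ℕ → X)
    (hf : ∀ z ∈ Metric.ball (0 : ℂ) 1, HasSum (fun n => z ^ n • x n) (f z))
    (hb : ∀ z ∈ Metric.ball (0 : ℂ) 1, ‖f z‖ ≤ 1) :
    ∀ θ : ℝ, θ ∈ Set.Ico (0 : ℝ) (2 * Real.pi) →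
      ‖x 0 + (Complex.exp ((θ : ℂ) * Complex.I) / (2 * (N : ℂ))) •
        ∑ k ∈ Finset.Icc 1 N, x k‖ ≤ 1 := by
  intro θ _
  set c : ℂ := Complex.exp ((θ:ℂ)*Complex.I) / (2*(N:ℂ)) with hc
  have hv : Continuous (fun r : ℝ => ‖x 0 + c • ∑ k ∈ Finset.Icc 1 N, ((r:ℂ)^k • x k)‖) := by
    apply Continuous.norm
    exact continuous_const.add (((continuous_finset_sum _ (fun k _ =>
      (Complex.continuous_ofReal.pow k).smul continuous_const))).const_smul c)
  have htend : Filter.Tendsto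
      (fun r : ℝ => ‖x 0 + c • ∑ k ∈ Finset.Icc 1 N, ((r:ℂ)^k • x k)‖)
      (nhdsWithin 1 (Set.Iio 1))
      (nhds ‖x 0 + c • ∑ k ∈ Finset.Icc 1 N, (((1:ℝ):ℂ)^k • x k)‖) :=
    (hv.tendsto 1).mono_left nhdsWithin_le_nhds
  have hle : ‖x 0 + c • ∑ k ∈ Finset.Icc 1 N, (((1:ℝ):ℂ)^k • x k)‖ ≤ 1 := by
    apply le_of_tendsto htend
    filter_upwards [Ioo_mem_nhdsLT_of_mem
      (show (1:ℝ) ∈ Set.Ioc 0 1 by constructor <;> norm_num)] with r hr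
    exact aux X N hN f x hf hb θ r hr.1.le hr.2
  simpa using hle
end
end

section
/- Let X be a complex Banach space and N ∈ ℕ. If X is 2-uniformly ℂ-convex of order N, then the 2-Bohr radius satisfies r_2(X) ≥ √(A_{2,N}(X)/(A_{2,N}(X) + 4N²)). -/
open Finset

/-- `A_{p,N}(X)`: the supremum of all constants `λ ≥ 0` such that
`(‖x_0‖^p + Σ_{k=1}^N λ^k ‖x_k‖^p)^{1/p} ≤ max_{θ∈[0,2π)} ‖x_0 + e^{iθ} Σ_{k=1}^N x_k‖`
for all `x_0, …, x_N ∈ X`. -/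
noncomputable def uniformCConvexConst (X : Type*) [NormedAddCommGroup X] [NormedSpace ℂ X]
    (p : ℝ) (N : ℕ) : ℝ :=
  sSup {l : ℝ | 0 ≤ l ∧ ∀ x : ℕ → X,
    (‖x 0‖ ^ p + ∑ k ∈ Finset.Icc 1 N, l ^ k * ‖x k‖ ^ p) ^ (1 / p) ≤
      ⨆ θ : Set.Ico (0 : ℝ) (2 * Real.pi),
        ‖x 0 + Complex.exp (((θ : ℝ) : ℂ) * Complex.I) • ∑ k ∈ Finset.Icc 1 N, x k‖}


open Complex Filter

section Aux

variable {X : Type*} [NormedAddCommGroup X] [NormedSpace ℂ X] [CompleteSpace X]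

set_option maxHeartbeats 1000000

private lemma orth_lemma (m : ℕ) (hm : 0 < m) (a : ℤ) :
    ∑ j ∈ range m, (Complex.exp (2 * ↑Real.pi * Complex.I / m) ^ a) ^ j
      = if (m : ℤ) ∣ a then (m : ℂ) else 0 := by
  set ζ := Complex.exp (2 * ↑Real.pi * Complex.I / m) with hζ
  have hprim : IsPrimitiveRoot ζ m := Complex.isPrimitiveRoot_exp m hm.ne'
  have hiff : ζ ^ a = 1 ↔ (m : ℤ) ∣ a := hprim.zpow_eq_one_iff_dvd a
  by_cases h : (m : ℤ) ∣ a
  · simp [h, hiff.mpr h]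
  · rw [if_neg h]
    have hne : ζ ^ a ≠ 1 := fun hh => h (hiff.mp hh)
    rw [geom_sum_eq hne]
    have : (ζ ^ a) ^ m = 1 := by
      rw [← zpow_natCast (ζ ^ a) m, ← zpow_mul, mul_comm, zpow_mul, zpow_natCast,
        hprim.pow_eq_one, one_zpow]
    rw [this]; simp


private lemma coeff_summable {f : ℂ → X} {x : ℕ → X}
    (hf : ∀ z ∈ Metric.ball (0 : ℂ) 1, HasSum (fun n => z ^ n • x n) (f z))
    {ρ : ℝ} (h0 : 0 ≤ ρ) (h1 : ρ < 1) :
    Summable (fun k => ρ ^ k * ‖x k‖) := by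
  set σ : ℝ := (1 + ρ) / 2 with hσ
  have hσ0 : 0 < σ := by positivity
  have hρσ : ρ < σ := by rw [hσ]; linarith
  have hσ1 : σ < 1 := by rw [hσ]; linarith
  have habs : |σ| = σ := abs_of_nonneg hσ0.le
  have hmem : (σ : ℂ) ∈ Metric.ball (0 : ℂ) 1 := by
    simp only [Metric.mem_ball, dist_zero_right, Complex.norm_real, Real.norm_eq_abs, habs]
    exact hσ1
  have hsum := (hf _ hmem).summable
  have htend : Filter.Tendsto (fun n => ‖(σ : ℂ) ^ n • x n‖) Filter.atTop (nhds 0) := by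
    simpa using hsum.tendsto_atTop_zero.norm
  obtain ⟨C, hC⟩ := htend.bddAbove_range
  have hCnorm : ∀ n, σ ^ n * ‖x n‖ ≤ C := by
    intro n
    have := hC (Set.mem_range_self (f := fun n => ‖(σ : ℂ) ^ n • x n‖) n)
    simpa [norm_smul, Complex.norm_real, Real.norm_eq_abs, habs, abs_pow] using this
  have hle : ∀ n, ρ ^ n * ‖x n‖ ≤ C * (ρ / σ) ^ n := by
    intro n
    have heq : ρ ^ n * ‖x n‖ = (ρ / σ) ^ n * (σ ^ n * ‖x n‖) := by
      rw [div_pow]; field_simp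
    rw [heq]
    have hpos : (0:ℝ) ≤ (ρ / σ) ^ n := by positivity
    calc (ρ / σ) ^ n * (σ ^ n * ‖x n‖) ≤ (ρ / σ) ^ n * C :=
          mul_le_mul_of_nonneg_left (hCnorm n) hpos
      _ = C * (ρ / σ) ^ n := mul_comm _ _
  exact Summable.of_nonneg_of_le (fun n => by positivity) hle
    (Summable.mul_left _ (summable_geometric_of_lt_one (by positivity)
      ((div_lt_one hσ0).mpr hρσ)))

private lemma key_rho {f : ℂ → X} {x : ℕ → X}
    (hf : ∀ z ∈ Metric.ball (0 : ℂ) 1, HasSum (fun n => z ^ n • x n) (f z))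
    (hb : ∀ z ∈ Metric.ball (0 : ℂ) 1, ‖f z‖ ≤ 1)
    {n : ℕ} (hn : 1 ≤ n) {v : ℂ} (hv : ‖v‖ ≤ 1)
    {ρ : ℝ} (h0 : 0 ≤ ρ) (h1 : ρ < 1)
    (husum : Summable (fun k => ρ ^ k * ‖x k‖)) :
    ‖x 0 + ((v * (ρ:ℂ) ^ n) / 2) • x n‖ ≤ 1 := by
  set u : ℕ → ℝ := fun k => ρ ^ k * ‖x k‖ with hu_def
  set P : X := x 0 + ((v * (ρ:ℂ) ^ n) / 2) • x n with hP_def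
  have hu0 : ∀ k, 0 ≤ u k := fun k => by simp only [hu_def]; positivity
  -- main estimate for each m > 2n
  have main : ∀ m : ℕ, 2 * n < m → ‖P‖ ≤ 1 + 2 * ∑' i, u (i + (m - n)) := by
    intro m hm
    have hm0 : 0 < m := by omega
    have hmne : (m:ℂ) ≠ 0 := Nat.cast_ne_zero.mpr hm0.ne'
    set ζ : ℂ := Complex.exp (2 * ↑Real.pi * Complex.I / m) with hζ_def
    have hζabs : ‖ζ‖ = 1 := by
      rw [hζ_def, show (2 * (Real.pi:ℂ) * Complex.I / m) = ((2*Real.pi/m : ℝ):ℂ) * Complex.I by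
        push_cast; ring]
      exact Complex.norm_exp_ofReal_mul_I _
    have hζ0 : ζ ≠ 0 := Complex.exp_ne_zero _
    have hζconj : (starRingEnd ℂ) ζ = ζ⁻¹ := (Complex.inv_eq_conj hζabs).symm
    -- integer powers
    set e : ℤ → ℂ := fun a => ζ ^ a with he_def
    have he_add : ∀ a b : ℤ, e (a + b) = e a * e b := fun a b => zpow_add₀ hζ0 a b
    have he_pow : ∀ (a : ℤ) (j : ℕ), (e a) ^ j = e (a * j) := fun a j => by
      rw [he_def]; rw [← zpow_natCast (ζ ^ a) j, ← zpow_mul]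
    have he_nat : ∀ k : ℕ, ζ ^ k = e (k : ℤ) := fun k => (zpow_natCast ζ k).symm
    have he_conj : ∀ a : ℤ, (starRingEnd ℂ) (e a) = e (-a) := fun a => by
      rw [he_def]; simp only [map_zpow₀, hζconj]
      rw [inv_zpow, ← zpow_neg]
    -- orthogonality
    have orth : ∀ a : ℤ, ∑ j ∈ range m, (e a) ^ j = if (m : ℤ) ∣ a then (m : ℂ) else 0 :=
      fun a => orth_lemma m hm0 a
    set O : ℤ → ℂ := fun a => if (m : ℤ) ∣ a then (m : ℂ) else 0 with hO_def
    have hOabs : ∀ a, ‖O a‖ ≤ m := fun a => by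
      rw [hO_def]; dsimp only; split
      · simp
      · simp [Nat.cast_nonneg]
    have hOne : ∀ a : ℤ, a ≠ 0 → a.natAbs < m → O a = 0 := by
      intro a ha hlt
      rw [hO_def]; dsimp only; rw [if_neg]
      intro hdvd
      exact ha (Int.eq_zero_of_dvd_of_natAbs_lt_natAbs hdvd (by simpa using hlt))
    -- kernel and points
    set w : ℂ := (starRingEnd ℂ) v with hw_def
    have hwabs : ‖w‖ = ‖v‖ := by rw [hw_def]; exact Complex.norm_conj v
    have hvabs : ‖v‖ ≤ 1 := by exact hv
    set K : ℕ → ℝ := fun j => 1 + (w * ζ ^ (n * j)).re with hK_def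
    have hK0 : ∀ j, 0 ≤ K j := by
      intro j
      have h2 : |(w * ζ ^ (n * j)).re| ≤ 1 := by
        refine le_trans (Complex.abs_re_le_norm _) ?_
        rw [norm_mul, norm_pow, hζabs, one_pow, mul_one, hwabs]
        exact hvabs
      rw [hK_def]; dsimp only
      have := abs_le.mp h2
      linarith [this.1]
    set c : ℕ → ℂ := fun j => (ρ : ℂ) * ζ ^ j with hc_def
    have hcball : ∀ j, c j ∈ Metric.ball (0 : ℂ) 1 := by
      intro j
      simp only [hc_def, Metric.mem_ball, dist_zero_right, norm_mul, Complex.norm_real,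
        Real.norm_eq_abs, norm_pow, hζabs, one_pow, mul_one]
      rwa [_root_.abs_of_nonneg h0]
    -- the averaged sum
    set T : X := ∑ j ∈ range m, ((K j : ℝ) : ℂ) • f (c j) with hT_def
    set γ : ℕ → ℂ := fun k => ∑ j ∈ range m, ((K j : ℝ) : ℂ) * c j ^ k with hγ_def
    have hTsum : HasSum (fun k => γ k • x k) T := by
      have h1 : ∀ j ∈ range m, HasSum (fun k => ((K j : ℝ) : ℂ) • (c j ^ k • x k))
          (((K j : ℝ) : ℂ) • f (c j)) := fun j _ => ((hf _ (hcball j)).const_smul _)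
      have h2 := hasSum_sum h1
      have h3 : (fun k => ∑ j ∈ range m, ((K j : ℝ) : ℂ) • (c j ^ k • x k))
          = fun k => γ k • x k := by
        funext k
        simp only [smul_smul]
        rw [← Finset.sum_smul]
      rwa [h3] at h2
    -- expansion of each term
    have hre : ∀ z : ℂ, ((z.re : ℝ) : ℂ) = (z + (starRingEnd ℂ) z) / 2 := fun z => by
      rw [Complex.add_conj]; push_cast; ring
    have hKC : ∀ j : ℕ, ((K j : ℝ) : ℂ)
        = 1 + (w * e ((n * j : ℕ) : ℤ)) / 2 + ((starRingEnd ℂ) w * e (-((n * j : ℕ) : ℤ))) / 2 := by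
      intro j
      have h1 : ((K j : ℝ) : ℂ) = 1 + (((w * ζ ^ (n * j)).re : ℝ) : ℂ) := by
        rw [hK_def]; push_cast; ring
      rw [h1, hre, map_mul, he_nat, he_conj]
      ring
    have hck : ∀ j k : ℕ, c j ^ k = ((ρ : ℂ)) ^ k * e ((j * k : ℕ) : ℤ) := by
      intro j k
      rw [hc_def]; dsimp only
      rw [mul_pow, ← pow_mul, he_nat]
    have hsplit : ∀ j k : ℕ, ((K j : ℝ) : ℂ) * c j ^ k
        = (ρ : ℂ) ^ k * ((e (k : ℤ)) ^ j + (w / 2) * (e ((k : ℤ) + n)) ^ j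
            + ((starRingEnd ℂ) w / 2) * (e ((k : ℤ) - n)) ^ j) := by
      intro j k
      have r1 : e ((n * j : ℕ) : ℤ) * e ((j * k : ℕ) : ℤ) = e (((k : ℤ) + n) * j) := by
        rw [← he_add]; congr 1; push_cast; ring
      have r2 : e (-((n * j : ℕ) : ℤ)) * e ((j * k : ℕ) : ℤ) = e (((k : ℤ) - n) * j) := by
        rw [← he_add]; congr 1; push_cast; ring
      have r3 : e ((j * k : ℕ) : ℤ) = e ((k : ℤ) * j) := by congr 1; push_cast; ring
      rw [hKC, hck, he_pow, he_pow, he_pow, ← r1, ← r2, ← r3]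
      ring
    -- evaluate γ
    have orthO : ∀ a : ℤ, ∑ j ∈ range m, (e a) ^ j = O a := fun a => orth_lemma m hm0 a
    have hγval : ∀ k : ℕ, γ k = (ρ : ℂ) ^ k
        * (O (k : ℤ) + (w / 2) * O ((k : ℤ) + n) + ((starRingEnd ℂ) w / 2) * O ((k : ℤ) - n)) := by
      intro k
      rw [hγ_def]; dsimp only
      rw [Finset.sum_congr rfl (fun j _ => hsplit j k), ← Finset.mul_sum]
      congr 1
      rw [Finset.sum_add_distrib, Finset.sum_add_distrib, ← Finset.mul_sum, ← Finset.mul_sum,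
        orthO, orthO, orthO]
    -- O values
    have hO0 : O 0 = (m : ℂ) := by rw [hO_def]; simp
    have hOn : O (n : ℤ) = 0 := hOne _ (by omega) (by omega)
    have hOnneg : O (-(n : ℤ)) = 0 := hOne _ (by omega) (by omega)
    have hO2n : O ((n : ℤ) + n) = 0 := hOne _ (by omega) (by omega)
    -- ideal coefficients
    set η : ℕ → ℂ := fun k => if k = 0 then 1 else if k = n then v * (ρ : ℂ) ^ n / 2 else 0
      with hη_def
    have hηsum : HasSum (fun k => η k • x k) P := by
      have h0 : HasSum (fun k => if k = 0 then x 0 else 0) (x 0) := hasSum_ite_eq 0 (x 0)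
      have h1 : HasSum (fun k => if k = n then (v * (ρ : ℂ) ^ n / 2) • x n else 0)
          ((v * (ρ : ℂ) ^ n / 2) • x n) := hasSum_ite_eq n _
      have h2 := h0.add h1
      have h3 : (fun k => (if k = 0 then x 0 else 0)
          + (if k = n then (v * (ρ : ℂ) ^ n / 2) • x n else 0)) = fun k => η k • x k := by
        funext k
        rw [hη_def]; dsimp only
        by_cases hk0 : k = 0
        · subst hk0
          rw [if_pos rfl, if_pos rfl, if_neg (by omega : ¬ (0 = n)), add_zero, one_smul]
        · by_cases hkn : k = n
          · subst hkn
            rw [if_neg hk0, if_neg hk0, if_pos rfl, if_pos rfl, zero_add]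
          · rw [if_neg hk0, if_neg hkn, if_neg hk0, if_neg hkn, add_zero, zero_smul]
      rw [h3] at h2
      rwa [← hP_def] at h2
    set d : ℕ → ℂ := fun k => (m : ℂ)⁻¹ * γ k - η k with hd_def
    have hDsum : HasSum (fun k => d k • x k) ((m : ℂ)⁻¹ • T - P) := by
      have h1 := (hTsum.const_smul ((m : ℂ)⁻¹)).sub hηsum
      have h2 : (fun k => (m : ℂ)⁻¹ • (γ k • x k) - η k • x k) = fun k => d k • x k := by
        funext k
        rw [hd_def]; dsimp only
        rw [sub_smul, smul_smul]
      rwa [h2] at h1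
    -- vanishing of d for small k
    have hd0 : ∀ k : ℕ, k < m - n → d k = 0 := by
      intro k hk
      rw [hd_def]; dsimp only
      rcases eq_or_ne k 0 with hk0 | hk0
      · subst hk0
        rw [hγval]
        simp only [Nat.cast_zero, zero_add, zero_sub, hO0, hOn, hOnneg]
        rw [hη_def]; dsimp only
        rw [if_pos rfl]
        field_simp; ring
      · rcases eq_or_ne k n with hkn | hkn
        · subst hkn
          rw [hγval]
          rw [show ((k : ℤ) - k) = 0 by ring, hO0, hOn, hO2n]
          rw [hη_def]; dsimp only
          rw [if_neg hk0, if_pos rfl]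
          rw [hw_def]
          rw [Complex.conj_conj]
          field_simp
          ring
        · rw [hγval]
          have h1 : O (k : ℤ) = 0 := hOne _ (by omega) (by omega)
          have h2 : O ((k : ℤ) + n) = 0 := hOne _ (by omega) (by omega)
          have h3 : O ((k : ℤ) - n) = 0 := hOne _ (by omega) (by omega)
          rw [h1, h2, h3, hη_def]; dsimp only
          rw [if_neg hk0, if_neg hkn]
          ring
    -- bound on d
    have hdbound : ∀ k : ℕ, ‖d k‖ ≤ 2 * ρ ^ k := by
      intro k
      by_cases hk : k < m - n
      · rw [hd0 k hk, norm_zero]; positivity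
      · have hkn : k ≠ n := by omega
        have hk0 : k ≠ 0 := by omega
        have hηk : η k = 0 := by rw [hη_def]; dsimp only; rw [if_neg hk0, if_neg hkn]
        rw [hd_def]; dsimp only
        rw [hηk, sub_zero, hγval, norm_mul, norm_mul]
        have habsρ : ‖(ρ : ℂ) ^ k‖ = ρ ^ k := by
          rw [norm_pow, Complex.norm_real, Real.norm_eq_abs, _root_.abs_of_nonneg h0]
        have hwle : ‖w‖ ≤ 1 := by rw [hwabs]; exact hvabs
        have hwcle : ‖(starRingEnd ℂ) w‖ ≤ 1 := by
          rw [Complex.norm_conj]; exact hwle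
        have hbig : ‖O (k : ℤ) + (w / 2) * O ((k : ℤ) + n)
            + ((starRingEnd ℂ) w / 2) * O ((k : ℤ) - n)‖ ≤ 2 * m := by
          refine le_trans (norm_add_le _ _) (le_trans (add_le_add
            (norm_add_le _ _) (le_refl _)) ?_)
          have b1 := hOabs (k : ℤ)
          have b2 : ‖(w / 2) * O ((k : ℤ) + n)‖ ≤ m / 2 := by
            rw [norm_mul, norm_div]
            have := hOabs ((k : ℤ) + n)
            have h2 : ‖(2 : ℂ)‖ = 2 := by norm_num
            rw [h2]
            calc ‖w‖ / 2 * ‖O ((k:ℤ)+n)‖ ≤ 1 / 2 * m := by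
                  apply mul_le_mul (by linarith) this (by positivity) (by norm_num)
              _ = m / 2 := by ring
          have b3 : ‖((starRingEnd ℂ) w / 2) * O ((k : ℤ) - n)‖ ≤ m / 2 := by
            rw [norm_mul, norm_div]
            have := hOabs ((k : ℤ) - n)
            have h2 : ‖(2 : ℂ)‖ = 2 := by norm_num
            rw [h2]
            calc ‖(starRingEnd ℂ) w‖ / 2 * ‖O ((k:ℤ)-n)‖ ≤ 1 / 2 * m := by
                  apply mul_le_mul (by linarith) this (by positivity) (by norm_num)
              _ = m / 2 := by ring
          linarith
        have hminv : ‖(m : ℂ)⁻¹‖ = (m : ℝ)⁻¹ := by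
          rw [norm_inv]; norm_num
        rw [hminv, habsρ]
        have hm0' : (0:ℝ) < m := by exact_mod_cast hm0
        calc (m:ℝ)⁻¹ * (ρ ^ k * ‖O (k : ℤ) + (w / 2) * O ((k : ℤ) + n)
              + ((starRingEnd ℂ) w / 2) * O ((k : ℤ) - n)‖)
            ≤ (m:ℝ)⁻¹ * (ρ ^ k * (2 * m)) := by
              apply mul_le_mul_of_nonneg_left _ (by positivity)
              exact mul_le_mul_of_nonneg_left hbig (by positivity)
          _ = 2 * ρ ^ k := by field_simp
    -- norm estimates
    have hnormterm : ∀ k, ‖d k • x k‖ ≤ (if k < m - n then (0:ℝ) else 2 * u k) := by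
      intro k
      by_cases hk : k < m - n
      · simp [hd0 k hk, hk]
      · rw [if_neg hk, norm_smul, hu_def]; dsimp only
        calc ‖d k‖ * ‖x k‖ ≤ (2 * ρ ^ k) * ‖x k‖ :=
              mul_le_mul_of_nonneg_right (hdbound k) (norm_nonneg _)
          _ = 2 * (ρ ^ k * ‖x k‖) := by ring
    have hwsum : Summable (fun k => if k < m - n then (0:ℝ) else 2 * u k) := by
      apply Summable.of_nonneg_of_le _ _ (husum.mul_left 2)
      · intro k; split
        · exact le_refl 0
        · exact mul_nonneg (by norm_num) (hu0 k)
      · intro k; split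
        · exact mul_nonneg (by norm_num) (hu0 k)
        · exact le_refl _
    have hnormsum : Summable (fun k => ‖d k • x k‖) :=
      Summable.of_nonneg_of_le (fun k => norm_nonneg _) hnormterm hwsum
    have hDnorm : ‖(m : ℂ)⁻¹ • T - P‖ ≤ 2 * ∑' i, u (i + (m - n)) := by
      have h1 : ‖(m : ℂ)⁻¹ • T - P‖ ≤ ∑' k, ‖d k • x k‖ := by
        rw [← hDsum.tsum_eq]
        exact norm_tsum_le_tsum_norm hnormsum
      have h2 : ∑' k, ‖d k • x k‖ ≤ ∑' k, (if k < m - n then (0:ℝ) else 2 * u k) :=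
        Summable.tsum_le_tsum hnormterm hnormsum hwsum
      have h4 := Summable.sum_add_tsum_nat_add (f := fun k => if k < m - n then (0:ℝ) else 2 * u k)
        (m - n) hwsum
      have h5 : ∑ i ∈ range (m - n), (if i < m - n then (0:ℝ) else 2 * u i) = 0 :=
        Finset.sum_eq_zero (fun i hi => by rw [if_pos (mem_range.mp hi)])
      have h6 : (fun i : ℕ => if i + (m - n) < m - n then (0:ℝ) else 2 * u (i + (m - n)))
          = fun i => 2 * u (i + (m - n)) := by
        funext i; rw [if_neg (by omega)]
      rw [h5, zero_add, h6] at h4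
      rw [← h4, tsum_mul_left] at h2
      linarith
    -- norm of the average
    have hsumK : ∑ j ∈ range m, K j = m := by
      rw [hK_def]; dsimp only
      rw [Finset.sum_add_distrib]
      simp only [Finset.sum_const, card_range, nsmul_eq_mul, mul_one]
      have hre2 : ∑ j ∈ range m, (w * ζ ^ (n * j)).re = (∑ j ∈ range m, w * ζ ^ (n * j)).re :=
        (Complex.re_sum _ _).symm
      have hz : ∑ j ∈ range m, w * ζ ^ (n * j) = w * ∑ j ∈ range m, (e (n : ℤ)) ^ j := by
        rw [Finset.mul_sum]
        apply Finset.sum_congr rfl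
        intro j _
        congr 1
        rw [pow_mul, he_nat n]
      rw [hre2, hz, orthO, hOn, mul_zero, Complex.zero_re, add_zero]
    have hTle : ‖T‖ ≤ m := by
      rw [hT_def]
      refine le_trans (norm_sum_le _ _) ?_
      have hterm : ∀ j ∈ range m, ‖((K j : ℝ) : ℂ) • f (c j)‖ ≤ K j := by
        intro j hj
        rw [norm_smul]
        have hK : ‖((K j : ℝ) : ℂ)‖ = K j := by
          rw [Complex.norm_real, Real.norm_eq_abs, _root_.abs_of_nonneg (hK0 j)]
        rw [hK]
        calc K j * ‖f (c j)‖ ≤ K j * 1 :=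
              mul_le_mul_of_nonneg_left (hb _ (hcball j)) (hK0 j)
          _ = K j := mul_one _
      calc ∑ j ∈ range m, ‖((K j : ℝ) : ℂ) • f (c j)‖ ≤ ∑ j ∈ range m, K j :=
            Finset.sum_le_sum hterm
        _ = m := hsumK
    have hTavg : ‖(m : ℂ)⁻¹ • T‖ ≤ 1 := by
      rw [norm_smul, norm_inv, Complex.norm_natCast]
      have hm0' : (0:ℝ) < m := by exact_mod_cast hm0
      calc (m:ℝ)⁻¹ * ‖T‖ ≤ (m:ℝ)⁻¹ * m :=
            mul_le_mul_of_nonneg_left hTle (by positivity)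
        _ = 1 := by field_simp
    -- combine
    have hfinal : ‖P‖ ≤ ‖(m : ℂ)⁻¹ • T‖ + ‖(m : ℂ)⁻¹ • T - P‖ := by
      have : P = (m : ℂ)⁻¹ • T - ((m : ℂ)⁻¹ • T - P) := by abel
      calc ‖P‖ = ‖(m : ℂ)⁻¹ • T - ((m : ℂ)⁻¹ • T - P)‖ := by rw [← this]
        _ ≤ ‖(m : ℂ)⁻¹ • T‖ + ‖(m : ℂ)⁻¹ • T - P‖ := norm_sub_le _ _
    linarith
  -- take m → ∞
  have htail : Filter.Tendsto (fun M : ℕ => 1 + 2 * ∑' i, u (i + (M + (n + 1))))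
      Filter.atTop (nhds (1 + 2 * 0)) := by
    apply Filter.Tendsto.const_add
    apply Filter.Tendsto.const_mul
    exact (tendsto_sum_nat_add u).comp (Filter.tendsto_add_atTop_nat (n + 1))
  have hseq : ∀ M : ℕ, ‖P‖ ≤ 1 + 2 * ∑' i, u (i + (M + (n + 1))) := by
    intro M
    have h1 := main (M + (2 * n + 1)) (by omega)
    have h2 : M + (2 * n + 1) - n = M + (n + 1) := by omega
    rwa [h2] at h1
  have := ge_of_tendsto' htail hseq
  linarith


private lemma key {f : ℂ → X} {x : ℕ → X}
    (hf : ∀ z ∈ Metric.ball (0 : ℂ) 1, HasSum (fun n => z ^ n • x n) (f z))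
    (hb : ∀ z ∈ Metric.ball (0 : ℂ) 1, ‖f z‖ ≤ 1)
    {n : ℕ} (hn : 1 ≤ n) {v : ℂ} (hv : ‖v‖ ≤ 1) :
    ‖x 0 + (v / 2) • x n‖ ≤ 1 := by
  have hev : ∀ᶠ ρ : ℝ in nhdsWithin 1 (Set.Iio 1),
      ‖x 0 + ((v * (ρ:ℂ) ^ n) / 2) • x n‖ ≤ 1 := by
    filter_upwards [Ico_mem_nhdsLT_of_mem (Set.mem_Ioc.mpr ⟨zero_lt_one, le_refl 1⟩)]
    intro ρ hρ
    exact key_rho hf hb hn hv hρ.1 hρ.2 (coeff_summable hf hρ.1 hρ.2)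
  have hcont : Continuous (fun ρ : ℝ => ‖x 0 + ((v * (ρ:ℂ) ^ n) / 2) • x n‖) := by
    apply Continuous.norm
    apply Continuous.add continuous_const
    apply Continuous.smul _ continuous_const
    exact (continuous_const.mul (Complex.continuous_ofReal.pow n)).div_const 2
  have hlim : Tendsto (fun ρ : ℝ => ‖x 0 + ((v * (ρ:ℂ) ^ n) / 2) • x n‖)
      (nhdsWithin 1 (Set.Iio 1)) (nhds ‖x 0 + ((v * ((1:ℝ):ℂ) ^ n) / 2) • x n‖) :=
    (hcont.tendsto 1).mono_left nhdsWithin_le_nhds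
  have := le_of_tendsto hlim hev
  simpa using this

private lemma block_decomp (g : ℕ → ℝ) (N : ℕ) (J : ℕ) :
    ∑ n ∈ Finset.range (J*N+1), g n
      = g 0 + ∑ j ∈ Finset.range J, ∑ k ∈ Finset.Icc 1 N, g (j*N+k) := by
  induction J with
  | zero => simp
  | succ J ih =>
    have h1 : (J+1)*N+1 = (J*N+1) + N := by ring
    rw [h1, Finset.range_eq_Ico,
      ← Finset.sum_Ico_consecutive g (by omega : 0 ≤ J*N+1) (by omega : J*N+1 ≤ J*N+1+N),
      ← Finset.range_eq_Ico, ih, Finset.sum_range_succ]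
    have h2 : ∑ i ∈ Finset.Ico (J*N+1) (J*N+1+N), g i
        = ∑ k ∈ Finset.Icc 1 N, g (J*N+k) := by
      rw [Finset.sum_Ico_eq_sum_range]
      have h3 : J*N+1+N - (J*N+1) = N := by omega
      rw [h3, ← Finset.Ico_add_one_right_eq_Icc, Finset.sum_Ico_eq_sum_range]
      have h4 : N + 1 - 1 = N := by omega
      rw [h4]
      apply Finset.sum_congr rfl
      intro i _
      congr 1
      omega
    rw [h2, add_assoc]


end Aux

set_option maxHeartbeats 1000000 in
/-- if `X` is `2`-uniformly `ℂ`-convex of order `N` (i.e. `A_{2,N}(X) > 0`),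
then `r_2(X) ≥ √(A_{2,N}(X)/(A_{2,N}(X)+4N²))`. -/
theorem stmt9 (X : Type*) [NormedAddCommGroup X] [NormedSpace ℂ X] [CompleteSpace X]
    (N : ℕ) (hN : 1 ≤ N) (hX : 0 < uniformCConvexConst X 2 N) :
    Real.sqrt (uniformCConvexConst X 2 N /
      (uniformCConvexConst X 2 N + 4 * (N : ℝ) ^ 2)) ≤ pBohrRadius X 2 := by
  classical
  set A : ℝ := uniformCConvexConst X 2 N with hA_def
  set Aset : Set ℝ := {l : ℝ | 0 ≤ l ∧ ∀ x : ℕ → X,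
    (‖x 0‖ ^ (2:ℝ) + ∑ k ∈ Finset.Icc 1 N, l ^ k * ‖x k‖ ^ (2:ℝ)) ^ (1 / (2:ℝ)) ≤
      ⨆ θ : Set.Ico (0 : ℝ) (2 * Real.pi),
        ‖x 0 + Complex.exp (((θ : ℝ) : ℂ) * Complex.I) • ∑ k ∈ Finset.Icc 1 N, x k‖}
    with hAset_def
  have hAsup : A = sSup Aset := rfl
  haveI hnonemptyIco : Nonempty (Set.Ico (0 : ℝ) (2 * Real.pi)) :=
    ⟨⟨0, ⟨le_refl 0, by positivity⟩⟩⟩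
  -- Aset is nonempty and bounded above
  have hAne : Aset.Nonempty := by
    by_contra h
    rw [Set.not_nonempty_iff_eq_empty] at h
    rw [hAsup, h, Real.sSup_empty] at hX
    exact lt_irrefl 0 hX
  have hAbdd : BddAbove Aset := by
    by_contra h
    rw [hAsup, Real.sSup_of_not_bddAbove h] at hX
    exact lt_irrefl 0 hX
  -- A itself satisfies the defining inequality
  have hA0 : 0 ≤ A := hX.le
  have hAmem : A ∈ Aset := by
    obtain ⟨seq, -, htend, hmem⟩ := exists_seq_tendsto_sSup hAne hAbdd
    rw [← hAsup] at htend
    constructor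
    · exact hA0
    · intro x
      set G : ℝ := ⨆ θ : Set.Ico (0 : ℝ) (2 * Real.pi),
        ‖x 0 + Complex.exp (((θ : ℝ) : ℂ) * Complex.I) • ∑ k ∈ Finset.Icc 1 N, x k‖ with hG
      have hcont : Continuous (fun l : ℝ =>
          (‖x 0‖ ^ (2:ℝ) + ∑ k ∈ Finset.Icc 1 N, l ^ k * ‖x k‖ ^ (2:ℝ)) ^ (1 / (2:ℝ))) := by
        have hbase : Continuous (fun l : ℝ =>
            ‖x 0‖ ^ (2:ℝ) + ∑ k ∈ Finset.Icc 1 N, l ^ k * ‖x k‖ ^ (2:ℝ)) := by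
          apply continuous_const.add
          apply continuous_finset_sum
          intro k _
          exact (continuous_pow k).mul continuous_const
        have hsqrt : (fun y : ℝ => y ^ (1 / (2:ℝ))) = Real.sqrt := by
          funext y; rw [Real.sqrt_eq_rpow]
        exact (hsqrt ▸ Real.continuous_sqrt).comp hbase
      have hev : ∀ j : ℕ, (‖x 0‖ ^ (2:ℝ)
          + ∑ k ∈ Finset.Icc 1 N, (seq j) ^ k * ‖x k‖ ^ (2:ℝ)) ^ (1 / (2:ℝ)) ≤ G :=
        fun j => (hmem j).2 x
      exact le_of_tendsto ((hcont.tendsto A).comp htend) (Filter.Eventually.of_forall hev)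
  -- X is nontrivial
  have hnontriv : Nontrivial X := by
    rcases subsingleton_or_nontrivial X with hs | hs
    · exfalso
      have hall : ∀ l : ℝ, 0 ≤ l → l ∈ Aset := by
        intro l hl
        refine ⟨hl, fun x => ?_⟩
        have hx0 : ∀ k, x k = 0 := fun k => Subsingleton.elim _ _
        have hLHS : (‖x 0‖ ^ (2:ℝ)
            + ∑ k ∈ Finset.Icc 1 N, l ^ k * ‖x k‖ ^ (2:ℝ)) ^ (1 / (2:ℝ)) = 0 := by
          simp only [hx0, norm_zero]
          rw [Real.zero_rpow (by norm_num : (2:ℝ) ≠ 0)]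
          simp [Real.zero_rpow (by norm_num : (1/(2:ℝ)) ≠ 0)]
        rw [hLHS]
        apply Real.iSup_nonneg
        intro θ
        exact norm_nonneg _
      apply absurd hX
      push_neg
      rw [hAsup, Real.sSup_of_not_bddAbove]
      intro ⟨b, hb⟩
      have h1 := hb (hall (max b 0 + 1) (by positivity))
      have h2 := le_max_left b 0
      linarith
    · exact hs
  -- a unit vector
  obtain ⟨y0, hy0⟩ := exists_ne (0 : X)
  set y : X := (((‖y0‖⁻¹ : ℝ)) : ℂ) • y0 with hy_def
  have hy1 : ‖y‖ = 1 := by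
    rw [hy_def, norm_smul, Complex.norm_real, Real.norm_eq_abs,
      _root_.abs_of_nonneg (by positivity : (0:ℝ) ≤ ‖y0‖⁻¹)]
    exact inv_mul_cancel₀ (norm_ne_zero_iff.mpr hy0)
  -- the Bohr set
  set Sset : Set ℝ := {r : ℝ | 0 ≤ r ∧ ∀ (f : ℂ → X) (x : ℕ → X),
    (∀ z ∈ Metric.ball (0 : ℂ) 1, HasSum (fun n => z ^ n • x n) (f z)) →
    (∀ z ∈ Metric.ball (0 : ℂ) 1, ‖f z‖ ≤ 1) →
    ∀ M : ℕ, ∑ n ∈ Finset.range M, ‖x n‖ ^ (2:ℝ) * r ^ ((2:ℝ) * (n : ℝ)) ≤ 1}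
    with hSset_def
  have hSsup : pBohrRadius X 2 = sSup Sset := rfl
  have hSbdd : BddAbove Sset := by
    refine ⟨1, fun r hr => ?_⟩
    obtain ⟨hr0, hr1⟩ := hr
    set xx : ℕ → X := fun n => if n = 1 then y else 0 with hxx_def
    have hyp1 : ∀ z ∈ Metric.ball (0 : ℂ) 1, HasSum (fun n => z ^ n • xx n) (z • y) := by
      intro z _
      have h1 : (fun n => z ^ n • xx n) = (fun n => if n = 1 then z • y else 0) := by
        funext n
        rw [hxx_def]; dsimp only
        by_cases hn1 : n = 1
        · subst hn1; rw [if_pos rfl, if_pos rfl, pow_one]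
        · rw [if_neg hn1, if_neg hn1, smul_zero]
      rw [h1]
      exact hasSum_ite_eq 1 (z • y)
    have hyp2 : ∀ z ∈ Metric.ball (0 : ℂ) 1, ‖z • y‖ ≤ 1 := by
      intro z hz
      rw [norm_smul, hy1, mul_one]
      exact le_of_lt (by simpa [dist_zero_right] using hz)
    have h2 := hr1 _ _ hyp1 hyp2 2
    have h3 : ∑ n ∈ Finset.range 2, ‖xx n‖ ^ (2:ℝ) * r ^ ((2:ℝ) * (n : ℝ))
        = r ^ ((2:ℝ)) := by
      rw [Finset.sum_range_succ, Finset.sum_range_one]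
      rw [hxx_def]; dsimp only
      rw [if_neg (by norm_num : (0:ℕ) ≠ 1), if_pos rfl, norm_zero, hy1,
        Real.zero_rpow (by norm_num : (2:ℝ) ≠ 0), Real.one_rpow]
      norm_num
    rw [h3] at h2
    by_contra hcon
    push_neg at hcon
    have : (1:ℝ) < r ^ ((2:ℝ)) := by
      rw [show (1:ℝ) = 1 ^ ((2:ℝ)) by rw [Real.one_rpow]]
      exact Real.rpow_lt_rpow (by norm_num) hcon (by norm_num)
    linarith
  -- numeric setup
  have hNR : (1:ℝ) ≤ (N:ℝ) := by exact_mod_cast hN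
  have hrpow2 : ∀ a : ℝ, a ^ (2:ℝ) = a ^ 2 := fun a => by
    rw [show (2:ℝ) = ((2:ℕ):ℝ) by norm_num, Real.rpow_natCast]
  set c4 : ℝ := 4 * (N:ℝ) ^ 2 with hc4_def
  have hc4pos : (0:ℝ) < c4 := by rw [hc4_def]; nlinarith
  have hc4ge : (4:ℝ) ≤ c4 := by rw [hc4_def]; nlinarith
  set t : ℝ := A / (A + c4) with ht_def
  have hAc4 : (0:ℝ) < A + c4 := by linarith
  have ht0 : 0 < t := by rw [ht_def]; positivity
  have ht1 : t < 1 := by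
    rw [ht_def, div_lt_one hAc4]; linarith
  have htA : t ≤ A := by
    rw [ht_def, div_le_iff₀ hAc4]; nlinarith
  have hid : t * c4 = A * (1 - t) := by
    rw [ht_def]; field_simp; ring
  -- membership of sqrt t in Sset
  have hmem : Real.sqrt t ∈ Sset := by
    refine ⟨Real.sqrt_nonneg _, ?_⟩
    intro f x hf hb M
    -- basic coefficient bounds from the kernel lemma
    have hx0le : ‖x 0‖ ≤ 1 := by
      have h1 := key hf hb (n := 1) (le_refl 1) (v := 0) (by simp)
      simpa using h1
    -- block inequality
    have hblock : ∀ j : ℕ,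
        ∑ k ∈ Finset.Icc 1 N, A ^ k * ‖x (j*N+k)‖ ^ 2 ≤ c4 * (1 - ‖x 0‖ ^ 2) := by
      intro j
      set cc : ℂ := (((2*(N:ℝ))⁻¹ : ℝ) : ℂ) with hcc_def
      have hccnorm : ‖cc‖ = (2*(N:ℝ))⁻¹ := by
        rw [hcc_def, Complex.norm_real, Real.norm_eq_abs,
          _root_.abs_of_nonneg (by positivity : (0:ℝ) ≤ (2*(N:ℝ))⁻¹)]
      set x' : ℕ → X := fun k => if k = 0 then x 0 else cc • x (j*N+k) with hx'_def
      have hineq := hAmem.2 x'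
      have hx'0 : x' 0 = x 0 := by simp [hx'_def]
      have hsum_eq : ∑ k ∈ Finset.Icc 1 N, x' k
          = ∑ k ∈ Finset.Icc 1 N, cc • x (j*N+k) := by
        apply Finset.sum_congr rfl
        intro k hk
        have : k ≠ 0 := by
          have := (Finset.mem_Icc.mp hk).1; omega
        rw [hx'_def]; dsimp only; rw [if_neg this]
      have hNC : ((N:ℂ)) ≠ 0 := Nat.cast_ne_zero.mpr (by omega)
      have hRHS : (⨆ θ : Set.Ico (0 : ℝ) (2 * Real.pi),
          ‖x' 0 + Complex.exp (((θ : ℝ) : ℂ) * Complex.I)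
            • ∑ k ∈ Finset.Icc 1 N, x' k‖) ≤ 1 := by
        apply ciSup_le
        intro θ
        set v : ℂ := Complex.exp (((θ:ℝ):ℂ) * Complex.I) with hv_def
        have hv1 : ‖v‖ = 1 := by
          rw [hv_def]
          exact Complex.norm_exp_ofReal_mul_I _
        rw [hx'0, hsum_eq]
        have hscalar : v * cc = ((N:ℂ))⁻¹ * (v/2) := by
          rw [hcc_def]
          push_cast
          rw [mul_inv]
          ring
        have hident : x 0 + v • ∑ k ∈ Finset.Icc 1 N, cc • x (j*N+k)
            = ∑ k ∈ Finset.Icc 1 N, ((N:ℂ))⁻¹ • (x 0 + (v/2) • x (j*N+k)) := by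
          calc x 0 + v • ∑ k ∈ Finset.Icc 1 N, cc • x (j*N+k)
              = (∑ k ∈ Finset.Icc 1 N, ((N:ℂ))⁻¹ • x 0)
                + ∑ k ∈ Finset.Icc 1 N, (((N:ℂ))⁻¹ * (v/2)) • x (j*N+k) := by
                congr 1
                · rw [Finset.sum_const, Nat.card_Icc,
                    show N + 1 - 1 = N from by omega,
                    ← Nat.cast_smul_eq_nsmul ℂ N (((N:ℂ))⁻¹ • x 0), smul_smul,
                    mul_inv_cancel₀ hNC, one_smul]
                · rw [Finset.smul_sum]
                  apply Finset.sum_congr rfl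
                  intro k _
                  rw [smul_smul, hscalar]
            _ = ∑ k ∈ Finset.Icc 1 N, (((N:ℂ))⁻¹ • x 0
                  + (((N:ℂ))⁻¹ * (v/2)) • x (j*N+k)) := Finset.sum_add_distrib.symm
            _ = ∑ k ∈ Finset.Icc 1 N, ((N:ℂ))⁻¹ • (x 0 + (v/2) • x (j*N+k)) := by
                apply Finset.sum_congr rfl
                intro k _
                rw [smul_add, smul_smul]
        rw [hident]
        refine le_trans (norm_sum_le _ _) ?_
        have hterm : ∀ k ∈ Finset.Icc 1 N,
            ‖((N:ℂ))⁻¹ • (x 0 + (v/2) • x (j*N+k))‖ ≤ (N:ℝ)⁻¹ := by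
          intro k hk
          rw [norm_smul, norm_inv, Complex.norm_natCast]
          have hn1 : 1 ≤ j*N+k := by
            have := (Finset.mem_Icc.mp hk).1; omega
          have hkey := key hf hb hn1 (le_of_eq hv1)
          calc ((N:ℝ))⁻¹ * ‖x 0 + (v/2) • x (j*N+k)‖ ≤ ((N:ℝ))⁻¹ * 1 :=
                mul_le_mul_of_nonneg_left hkey (by positivity)
            _ = (N:ℝ)⁻¹ := mul_one _
        calc ∑ k ∈ Finset.Icc 1 N, ‖((N:ℂ))⁻¹ • (x 0 + (v/2) • x (j*N+k))‖
            ≤ ∑ k ∈ Finset.Icc 1 N, (N:ℝ)⁻¹ := Finset.sum_le_sum hterm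
          _ = 1 := by
              rw [Finset.sum_const, Nat.card_Icc]
              have hcard : N + 1 - 1 = N := by omega
              rw [hcard, nsmul_eq_mul]
              field_simp
      have hbase0 : 0 ≤ ‖x' 0‖ ^ (2:ℝ)
          + ∑ k ∈ Finset.Icc 1 N, A ^ k * ‖x' k‖ ^ (2:ℝ) := by
        apply add_nonneg (Real.rpow_nonneg (norm_nonneg _) _)
        apply Finset.sum_nonneg
        intro k _
        exact mul_nonneg (pow_nonneg hA0 k) (Real.rpow_nonneg (norm_nonneg _) _)
      have hbase1 : ‖x' 0‖ ^ (2:ℝ)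
          + ∑ k ∈ Finset.Icc 1 N, A ^ k * ‖x' k‖ ^ (2:ℝ) ≤ 1 := by
        have h1 := le_trans hineq hRHS
        have h2 : (‖x' 0‖ ^ (2:ℝ) + ∑ k ∈ Finset.Icc 1 N, A ^ k * ‖x' k‖ ^ (2:ℝ))
            = ((‖x' 0‖ ^ (2:ℝ) + ∑ k ∈ Finset.Icc 1 N, A ^ k * ‖x' k‖ ^ (2:ℝ))
              ^ (1/(2:ℝ))) ^ (2:ℕ) := by
          rw [← Real.rpow_natCast (_ ^ (1/(2:ℝ))) 2, ← Real.rpow_mul hbase0]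
          norm_num
        rw [h2]
        have h3 : (0:ℝ) ≤ (‖x' 0‖ ^ (2:ℝ)
            + ∑ k ∈ Finset.Icc 1 N, A ^ k * ‖x' k‖ ^ (2:ℝ)) ^ (1/(2:ℝ)) :=
          Real.rpow_nonneg hbase0 _
        exact pow_le_one₀ h3 h1
      -- now convert
      have hx'k : ∀ k ∈ Finset.Icc 1 N,
          A ^ k * ‖x' k‖ ^ (2:ℝ) = (2*(N:ℝ))⁻¹ ^ 2 * (A ^ k * ‖x (j*N+k)‖ ^ 2) := by
        intro k hk
        have hk0 : k ≠ 0 := by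
          have := (Finset.mem_Icc.mp hk).1; omega
        have : x' k = cc • x (j*N+k) := by rw [hx'_def]; dsimp only; rw [if_neg hk0]
        rw [this, norm_smul, hccnorm, hrpow2, mul_pow]
        ring
      rw [hx'0, Finset.sum_congr rfl hx'k, ← Finset.mul_sum, hrpow2] at hbase1
      have hNpos : (0:ℝ) < (2*(N:ℝ))⁻¹ ^ 2 := by positivity
      have hc4inv : (2*(N:ℝ))⁻¹ ^ 2 = c4⁻¹ := by
        rw [hc4_def]; field_simp; ring
      rw [hc4inv] at hbase1
      have := hbase1
      -- ∑ ≤ c4 * (1 - ‖x 0‖^2)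
      have hfin : c4⁻¹ * ∑ k ∈ Finset.Icc 1 N, A ^ k * ‖x (j*N+k)‖ ^ 2
          ≤ 1 - ‖x 0‖ ^ 2 := by linarith
      calc ∑ k ∈ Finset.Icc 1 N, A ^ k * ‖x (j*N+k)‖ ^ 2
          = c4 * (c4⁻¹ * ∑ k ∈ Finset.Icc 1 N, A ^ k * ‖x (j*N+k)‖ ^ 2) := by
            field_simp
        _ ≤ c4 * (1 - ‖x 0‖ ^ 2) := mul_le_mul_of_nonneg_left hfin hc4pos.le
    -- final sum estimate
    have hrt : ∀ n : ℕ, Real.sqrt t ^ ((2:ℝ) * (n:ℝ)) = t ^ n := by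
      intro n
      rw [show (2:ℝ) * (n:ℝ) = ((2*n : ℕ):ℝ) by push_cast; ring, Real.rpow_natCast,
        pow_mul, Real.sq_sqrt ht0.le]
    have hsummand : ∀ n : ℕ, ‖x n‖ ^ (2:ℝ) * Real.sqrt t ^ ((2:ℝ) * (n:ℝ))
        = ‖x n‖ ^ 2 * t ^ n := fun n => by rw [hrpow2, hrt]
    rw [Finset.sum_congr rfl (fun n _ => hsummand n)]
    -- enlarge to a full block range
    have hsub : Finset.range M ⊆ Finset.range (M*N+1) := by
      apply Finset.range_subset_range.mpr
      have : M ≤ M * N := Nat.le_mul_of_pos_right M (by omega)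
      omega
    have hmono : ∑ n ∈ Finset.range M, ‖x n‖ ^ 2 * t ^ n
        ≤ ∑ n ∈ Finset.range (M*N+1), ‖x n‖ ^ 2 * t ^ n := by
      apply Finset.sum_le_sum_of_subset_of_nonneg hsub
      intro i _ _
      positivity
    refine le_trans hmono ?_
    rw [block_decomp (fun n => ‖x n‖ ^ 2 * t ^ n) N M]
    have ha0 : 0 ≤ 1 - ‖x 0‖ ^ 2 := by nlinarith [norm_nonneg (x 0)]
    -- per block bound
    have hblock2 : ∀ j : ℕ, ∑ k ∈ Finset.Icc 1 N, ‖x (j*N+k)‖ ^ 2 * t ^ (j*N+k)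
        ≤ (t ^ (j*N+1) / A) * (c4 * (1 - ‖x 0‖ ^ 2)) := by
      intro j
      have hstep : ∀ k ∈ Finset.Icc 1 N, ‖x (j*N+k)‖ ^ 2 * t ^ (j*N+k)
          ≤ (t ^ (j*N+1) / A) * (A ^ k * ‖x (j*N+k)‖ ^ 2) := by
        intro k hk
        have hk1 : 1 ≤ k := (Finset.mem_Icc.mp hk).1
        have he1 : t ^ (j*N+k) = t ^ (j*N+1) * t ^ (k-1) := by
          rw [← pow_add]
          congr 1
          omega
        have he2 : (t ^ (j*N+1) / A) * (A ^ k * ‖x (j*N+k)‖ ^ 2)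
            = t ^ (j*N+1) * A ^ (k-1) * ‖x (j*N+k)‖ ^ 2 := by
          have : A ^ k = A * A ^ (k-1) := by
            rw [← pow_succ']
            congr 1
            omega
          rw [this]
          field_simp
        rw [he1, he2]
        have h3 : t ^ (k-1) ≤ A ^ (k-1) := pow_le_pow_left₀ ht0.le htA _
        calc ‖x (j*N+k)‖ ^ 2 * (t ^ (j*N+1) * t ^ (k-1))
            ≤ ‖x (j*N+k)‖ ^ 2 * (t ^ (j*N+1) * A ^ (k-1)) := by
              apply mul_le_mul_of_nonneg_left _ (by positivity)
              exact mul_le_mul_of_nonneg_left h3 (by positivity)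
          _ = t ^ (j*N+1) * A ^ (k-1) * ‖x (j*N+k)‖ ^ 2 := by ring
      calc ∑ k ∈ Finset.Icc 1 N, ‖x (j*N+k)‖ ^ 2 * t ^ (j*N+k)
          ≤ ∑ k ∈ Finset.Icc 1 N, (t ^ (j*N+1) / A) * (A ^ k * ‖x (j*N+k)‖ ^ 2) :=
            Finset.sum_le_sum hstep
        _ = (t ^ (j*N+1) / A) * ∑ k ∈ Finset.Icc 1 N, A ^ k * ‖x (j*N+k)‖ ^ 2 := by
            rw [Finset.mul_sum]
        _ ≤ (t ^ (j*N+1) / A) * (c4 * (1 - ‖x 0‖ ^ 2)) :=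
            mul_le_mul_of_nonneg_left (hblock j) (by positivity)
    -- geometric series bound
    have htN1 : t ^ N < 1 := pow_lt_one₀ ht0.le ht1 (by omega)
    have htN0 : 0 < 1 - t ^ N := by linarith
    have hgeom : ∑ j ∈ Finset.range M, (t ^ N) ^ j ≤ (1 - t ^ N)⁻¹ := by
      have h1 : ∑ j ∈ Finset.range M, (t ^ N) ^ j ≤ ∑' j : ℕ, (t ^ N) ^ j :=
        Summable.sum_le_tsum _ (fun i _ => by positivity)
          (summable_geometric_of_lt_one (by positivity) htN1)
      rwa [tsum_geometric_of_lt_one (by positivity) htN1] at h1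
    have hsumj : ∑ j ∈ Finset.range M, (t ^ (j*N+1) / A) * (c4 * (1 - ‖x 0‖ ^ 2))
        ≤ 1 - ‖x 0‖ ^ 2 := by
      have he3 : ∀ j : ℕ, (t ^ (j*N+1) / A) * (c4 * (1 - ‖x 0‖ ^ 2))
          = (t ^ N) ^ j * (t * c4 * (1 - ‖x 0‖ ^ 2) / A) := by
        intro j
        rw [pow_add, pow_one, pow_mul]
        field_simp
        ring
      rw [Finset.sum_congr rfl (fun j _ => he3 j), ← Finset.sum_mul]
      have h4 : 0 ≤ t * c4 * (1 - ‖x 0‖ ^ 2) / A := by positivity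
      calc (∑ j ∈ Finset.range M, (t ^ N) ^ j) * (t * c4 * (1 - ‖x 0‖ ^ 2) / A)
          ≤ (1 - t ^ N)⁻¹ * (t * c4 * (1 - ‖x 0‖ ^ 2) / A) :=
            mul_le_mul_of_nonneg_right hgeom h4
        _ = ((1 - t) / (1 - t ^ N)) * (1 - ‖x 0‖ ^ 2) := by
            rw [hid]
            field_simp
        _ ≤ 1 * (1 - ‖x 0‖ ^ 2) := by
            apply mul_le_mul_of_nonneg_right _ ha0
            rw [div_le_one htN0]
            have h5 : t ^ N ≤ t ^ 1 := pow_le_pow_of_le_one ht0.le ht1.le hN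
            rw [pow_one] at h5
            linarith
        _ = 1 - ‖x 0‖ ^ 2 := one_mul _
    have hblocksum : ∑ j ∈ Finset.range M, ∑ k ∈ Finset.Icc 1 N,
        ‖x (j*N+k)‖ ^ 2 * t ^ (j*N+k) ≤ 1 - ‖x 0‖ ^ 2 :=
      le_trans (Finset.sum_le_sum (fun j _ => hblock2 j)) hsumj
    have hg0 : ‖x 0‖ ^ 2 * t ^ (0:ℕ) = ‖x 0‖ ^ 2 := by rw [pow_zero, mul_one]
    calc ‖x 0‖ ^ 2 * t ^ (0:ℕ) + ∑ j ∈ Finset.range M, ∑ k ∈ Finset.Icc 1 N,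
          ‖x (j*N+k)‖ ^ 2 * t ^ (j*N+k)
        ≤ ‖x 0‖ ^ 2 + (1 - ‖x 0‖ ^ 2) := by
          rw [hg0]
          exact add_le_add (le_refl _) hblocksum
      _ = 1 := by ring
  -- conclude
  rw [hSsup]
  exact le_csSup hSbdd hmem
end

section
/- Let (Ω, Σ, μ) be a measure space such that there exist two disjoint measurable sets A, B ∈ Σ with 0 < μ(A), μ(B) < ∞, and let L^q(μ) denote the complex Lebesgue space. Then for every N ≥ 1, the p-Bohr radius of order N satisfies R̃_{p,N}(L^q(μ)) = 0 whenever 1 ≤ p < q < ∞ or 1 ≤ q ≤ p < 2. -/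
open Finset MeasureTheory
open scoped NNReal ENNReal

lemma normIndAdd {Ω : Type*} [MeasurableSpace Ω] (μ : Measure Ω)
    (A B : Set Ω) (hA : MeasurableSet A) (hB : MeasurableSet B) (hAB : Disjoint A B)
    (hAfin : μ A ≠ ⊤) (hBfin : μ B ≠ ⊤) (q : ℝ≥0) (hq : 1 ≤ (q:ℝ)) (c d : ℂ) :
    ‖indicatorConstLp (q:ℝ≥0∞) hA hAfin c + indicatorConstLp (q:ℝ≥0∞) hB hBfin d‖
      = (‖c‖ ^ (q:ℝ) * (μ A).toReal + ‖d‖ ^ (q:ℝ) * (μ B).toReal) ^ (1/(q:ℝ)) := by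
  have hq0 : (q:ℝ) ≠ 0 := by positivity
  have hqe0 : ((q:ℝ≥0∞)) ≠ 0 := by exact_mod_cast (by positivity : (0:ℝ) < q).ne'
  have hqet : ((q:ℝ≥0∞)) ≠ ⊤ := ENNReal.coe_ne_top
  have hcoe : ⇑(indicatorConstLp (q:ℝ≥0∞) hA hAfin c + indicatorConstLp (q:ℝ≥0∞) hB hBfin d)
      =ᵐ[μ] (A.indicator (fun _ => c) + B.indicator (fun _ => d)) := by
    filter_upwards [Lp.coeFn_add (indicatorConstLp (q:ℝ≥0∞) hA hAfin c)
      (indicatorConstLp (q:ℝ≥0∞) hB hBfin d), indicatorConstLp_coeFn (p := (q:ℝ≥0∞)) (hs := hA) (hμs := hAfin) (c := c),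
      indicatorConstLp_coeFn (p := (q:ℝ≥0∞)) (hs := hB) (hμs := hBfin) (c := d)] with ω h1 h2 h3
    rw [h1, Pi.add_apply, h2, h3]; rfl
  rw [Lp.norm_def, eLpNorm_congr_ae hcoe,
    eLpNorm_eq_lintegral_rpow_enorm_toReal hqe0 hqet]
  have hptw : ∀ ω, ((‖(A.indicator (fun _ => c) + B.indicator (fun _ => d)) ω‖₊ : ℝ≥0∞)) ^ ((q:ℝ≥0∞)).toReal
      = A.indicator (fun _ => (‖c‖₊:ℝ≥0∞) ^ (q:ℝ)) ω + B.indicator (fun _ => (‖d‖₊:ℝ≥0∞) ^ (q:ℝ)) ω := by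
    intro ω
    by_cases hmem : ω ∈ A
    · have : ω ∉ B := fun hb => (hAB.ne_of_mem hmem hb) rfl
      simp [Set.indicator_of_mem, Set.indicator_of_notMem, hmem, this, ENNReal.coe_rpow_of_nonneg _ (by positivity : (0:ℝ) ≤ (q:ℝ))]
    · by_cases hmem' : ω ∈ B
      · simp [Set.indicator_of_mem, Set.indicator_of_notMem, hmem, hmem', ENNReal.coe_rpow_of_nonneg _ (by positivity : (0:ℝ) ≤ (q:ℝ))]
      · simp [Set.indicator_of_notMem, hmem, hmem', ENNReal.zero_rpow_of_pos (by positivity : (0:ℝ) < (q:ℝ))]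
  have hptw' : ∀ ω, ‖(A.indicator (fun _ => c) + B.indicator (fun _ => d)) ω‖ₑ ^ ((q:ℝ≥0∞)).toReal
      = A.indicator (fun _ => (‖c‖₊:ℝ≥0∞) ^ (q:ℝ)) ω + B.indicator (fun _ => (‖d‖₊:ℝ≥0∞) ^ (q:ℝ)) ω := hptw
  rw [lintegral_congr hptw', lintegral_add_left ((measurable_const.indicator hA)),
    lintegral_indicator_const hA, lintegral_indicator_const hB, ENNReal.coe_toReal]
  rw [← ENNReal.toReal_rpow]
  congr 1
  rw [ENNReal.toReal_add, ENNReal.toReal_mul, ENNReal.toReal_mul, ← ENNReal.toReal_rpow, ← ENNReal.toReal_rpow]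
  · simp [coe_nnnorm]
  · exact ENNReal.mul_ne_top (ENNReal.rpow_ne_top_of_nonneg (by positivity) ENNReal.coe_ne_top) hAfin
  · exact ENNReal.mul_ne_top (ENNReal.rpow_ne_top_of_nonneg (by positivity) ENNReal.coe_ne_top) hBfin

lemma smulIndConst {Ω : Type*} [MeasurableSpace Ω] {μ : Measure Ω} {P : ℝ≥0∞} {s : Set Ω}
    (hs : MeasurableSet s) (hμs : μ s ≠ ⊤) (z c : ℂ) :
    z • indicatorConstLp P hs hμs c = indicatorConstLp P hs hμs (z * c) := by
  rw [indicatorConstLp, indicatorConstLp, ← MemLp.toLp_const_smul]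
  congr 1
  funext x
  by_cases hx : x ∈ s <;> simp [Set.indicator, hx]

lemma conc2 {θ : ℝ} (hθ0 : 0 < θ) (hθ1 : θ ≤ 1) {u v : ℝ} (hu : 0 ≤ u) (hv : 0 ≤ v) :
    u ^ θ + v ^ θ ≤ 2 * (((u + v) / 2) ^ θ) := by
  have hp : (1:ℝ) ≤ 1/θ := by
    rw [le_div_iff₀ hθ0]; linarith
  have h := Real.arith_mean_le_rpow_mean (Finset.univ : Finset (Fin 2))
    (fun _ => (1:ℝ)/2) (fun i => if i = 0 then u ^ θ else v ^ θ)
    (fun i _ => by norm_num) (by simp [Fin.sum_univ_two])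
    (fun i _ => by by_cases h : i = 0 <;> simp [h] <;> positivity) hp
  simp only [Fin.sum_univ_two] at h
  have huθ : (u ^ θ) ^ (1/θ) = u := by
    rw [one_div, Real.rpow_rpow_inv hu hθ0.ne']
  have hvθ : (v ^ θ) ^ (1/θ) = v := by
    rw [one_div, Real.rpow_rpow_inv hv hθ0.ne']
  simp only [if_pos, if_neg (by decide : ¬((1:Fin 2) = 0))] at h
  rw [huθ, hvθ, one_div_one_div] at h
  have he : (1:ℝ)/2 * u + 1/2 * v = (u+v)/2 := by ring
  rw [he] at h
  linarith

lemma keyineq {X : Type*} [NormedAddCommGroup X] [NormedSpace ℂ X] {p r : ℝ} (hp : 1 ≤ p)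
    {N : ℕ} (hN : 1 ≤ N) (x0 x1 : X)
    (hb : ∀ z : ℂ, z ∈ Metric.ball (0:ℂ) 1 → ‖x0 + z • x1‖ ≤ 1)
    (hmem : ∀ (f : ℂ → X) (x : ℕ → X),
      (∀ z ∈ Metric.ball (0:ℂ) 1, HasSum (fun k => z ^ k • x k) (f z)) →
      (∀ z ∈ Metric.ball (0:ℂ) 1, ‖f z‖ ≤ 1) →
      ∑ k ∈ Finset.range (N+1), ‖x k‖ ^ p * r ^ (p * (k:ℝ)) ≤ 1) :
    ‖x0‖ ^ p + ‖x1‖ ^ p * r ^ p ≤ 1 := by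
  have hp0 : p ≠ 0 := by positivity
  set x : ℕ → X := fun k => if k = 0 then x0 else if k = 1 then x1 else 0 with hx
  set f : ℂ → X := fun z => x0 + z • x1 with hf
  have hsum : ∀ z ∈ Metric.ball (0:ℂ) 1, HasSum (fun k => z ^ k • x k) (f z) := by
    intro z _
    have h := hasSum_sum_of_ne_finset_zero (f := fun k => z ^ k • x k)
      (s := ({0,1} : Finset ℕ)) (L := SummationFilter.unconditional ℕ) (by
        intro b hb
        simp only [Finset.mem_insert, Finset.mem_singleton, not_or] at hb
        simp [hx, hb.1, hb.2])
    rw [Finset.sum_pair (by norm_num : (0:ℕ) ≠ 1)] at h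
    have he : z ^ 0 • x 0 + z ^ 1 • x 1 = f z := by simp [hx, hf]
    rwa [he] at h
  have h := hmem f x hsum hb
  have hsub : ({0,1} : Finset ℕ) ⊆ Finset.range (N+1) := by
    intro k hk
    simp only [Finset.mem_insert, Finset.mem_singleton] at hk
    rcases hk with rfl | rfl <;> simp [Finset.mem_range] <;> omega
  have hvan : ∀ k ∈ Finset.range (N+1), k ∉ ({0,1} : Finset ℕ) →
      ‖x k‖ ^ p * r ^ (p * (k:ℝ)) = 0 := by
    intro k _ hk
    simp only [Finset.mem_insert, Finset.mem_singleton, not_or] at hk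
    simp [hx, hk.1, hk.2, Real.zero_rpow hp0]
  rw [← Finset.sum_subset hsub hvan, Finset.sum_pair (by norm_num : (0:ℕ) ≠ 1)] at h
  simp only [hx, if_pos rfl, if_neg one_ne_zero, if_pos rfl, Nat.cast_zero, mul_zero,
    Real.rpow_zero, mul_one, Nat.cast_one] at h
  simpa using h


set_option maxHeartbeats 1000000 in
/-- for a measure space containing two disjoint sets of finite positive
measure, `R̃_{p,N}(L^q(μ)) = 0` whenever `1 ≤ p < q < ∞` or `1 ≤ q ≤ p < 2`. -/
theorem stmt11 {Ω : Type*} [MeasurableSpace Ω] (μ : Measure Ω)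
    (A B : Set Ω) (hA : MeasurableSet A) (hB : MeasurableSet B) (hAB : Disjoint A B)
    (hA0 : 0 < μ A) (hAfin : μ A < ⊤) (hB0 : 0 < μ B) (hBfin : μ B < ⊤)
    (p : ℝ) (q : ℝ≥0) [Fact (1 ≤ (q : ℝ≥0∞))] (N : ℕ) (hN : 1 ≤ N)
    (hpq : (1 ≤ p ∧ p < (q : ℝ)) ∨ (1 ≤ (q : ℝ) ∧ (q : ℝ) ≤ p ∧ p < 2)) :
    pBohrRadiusN (Lp ℂ (q : ℝ≥0∞) μ) p N = 0 := by
  have hp : 1 ≤ p := hpq.elim (fun h => h.1) (fun h => le_trans h.1 h.2.1)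
  have hq1 : (1:ℝ) ≤ (q:ℝ) := hpq.elim (fun h => le_trans h.1 h.2.le) (fun h => h.1)
  have hq0 : (0:ℝ) < (q:ℝ) := lt_of_lt_of_le one_pos hq1
  have hα : 0 < (μ A).toReal := ENNReal.toReal_pos hA0.ne' hAfin.ne
  have hβ : 0 < (μ B).toReal := ENNReal.toReal_pos hB0.ne' hBfin.ne
  set α := (μ A).toReal with hαdef
  set β := (μ B).toReal with hβdef
  set nA : ℂ := ((α ^ (-(1/(q:ℝ))) : ℝ) : ℂ) with hnA
  set nB : ℂ := ((β ^ (-(1/(q:ℝ))) : ℝ) : ℂ) with hnB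
  set F : ℂ → ℂ → Lp ℂ (q:ℝ≥0∞) μ :=
    fun cA cB => indicatorConstLp (q:ℝ≥0∞) hA hAfin.ne cA + indicatorConstLp (q:ℝ≥0∞) hB hBfin.ne cB with hF
  have hFcomb : ∀ (c0 d0 c1 d1 z : ℂ),
      F c0 d0 + z • F c1 d1 = F (c0 + z*c1) (d0 + z*d1) := by
    intro c0 d0 c1 d1 z
    rw [hF]
    simp only
    rw [smul_add, smulIndConst, smulIndConst, add_add_add_comm,
      indicatorConstLp_add, indicatorConstLp_add]
  have coef_norm : ∀ (w : ℂ) (γ : ℝ), 0 < γ →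
      ‖w * ((γ ^ (-(1/(q:ℝ))) : ℝ) : ℂ)‖ ^ (q:ℝ) * γ = ‖w‖ ^ (q:ℝ) := by
    intro w γ hγ
    rw [norm_mul, Complex.norm_real, Real.norm_eq_abs, abs_of_nonneg (by positivity),
      Real.mul_rpow (norm_nonneg w) (by positivity), ← Real.rpow_mul hγ.le]
    have he : (-(1/(q:ℝ))) * (q:ℝ) = -1 := by field_simp
    rw [he, Real.rpow_neg_one, mul_assoc, inv_mul_cancel₀ hγ.ne', mul_one]
  have hFn : ∀ w1 w2 : ℂ, ‖F (w1 * nA) (w2 * nB)‖ = (‖w1‖^(q:ℝ) + ‖w2‖^(q:ℝ))^(1/(q:ℝ)) := by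
    intro w1 w2
    rw [hF]
    simp only
    rw [normIndAdd μ A B hA hB hAB hAfin.ne hBfin.ne q hq1, hnA, hnB,
      coef_norm w1 α hα, coef_norm w2 β hβ]
  rw [pBohrRadiusN]
  set S : Set ℝ := {r : ℝ | 0 ≤ r ∧ ∀ (f : ℂ → Lp ℂ (q:ℝ≥0∞) μ) (x : ℕ → Lp ℂ (q:ℝ≥0∞) μ),
    (∀ z ∈ Metric.ball (0 : ℂ) 1, HasSum (fun k => z ^ k • x k) (f z)) →
    (∀ z ∈ Metric.ball (0 : ℂ) 1, ‖f z‖ ≤ 1) →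
    ∑ k ∈ Finset.range (N + 1), ‖x k‖ ^ p * r ^ (p * (k : ℝ)) ≤ 1} with hS
  have h0ball : (0:ℂ) ∈ Metric.ball (0:ℂ) 1 := Metric.mem_ball_self one_pos
  have h0mem : (0:ℝ) ∈ S := by
    refine ⟨le_rfl, ?_⟩
    intro f x hsum hbd
    have h1 : HasSum (fun k => (0:ℂ)^k • x k) (f 0) := hsum 0 h0ball
    have h2 : HasSum (fun k => (0:ℂ)^k • x k) (x 0) := by
      have h := hasSum_sum_of_ne_finset_zero (f := fun k => (0:ℂ)^k • x k)
        (s := ({0} : Finset ℕ)) (L := SummationFilter.unconditional ℕ) (by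
          intro b hb
          simp only [Finset.mem_singleton] at hb
          simp [zero_pow hb])
      simpa using h
    have hfx : f 0 = x 0 := h1.unique h2
    have hsum_eq : ∑ k ∈ Finset.range (N+1), ‖x k‖^p * (0:ℝ)^(p*(k:ℝ)) = ‖x 0‖^p := by
      rw [Finset.sum_eq_single 0]
      · simp
      · intro k _ hk
        have hk' : (0:ℝ) < p * (k:ℝ) := by
          have : (0:ℝ) < (k:ℝ) := by exact_mod_cast Nat.pos_of_ne_zero hk
          nlinarith
        simp [Real.zero_rpow hk'.ne']
      · intro h; exact absurd (Finset.mem_range.2 (Nat.succ_pos N)) h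
    rw [hsum_eq]
    have hle : ‖x 0‖ ≤ 1 := hfx ▸ hbd 0 h0ball
    exact Real.rpow_le_one (norm_nonneg _) hle (by linarith)
  have hub : ∀ r ∈ S, r ≤ (0:ℝ) := by
    intro r hr
    obtain ⟨hr0, hrP⟩ := hr
    by_contra hrneg
    push_neg at hrneg
    have hrpos : 0 < r := hrneg
    have key : ∀ x0 x1 : Lp ℂ (q:ℝ≥0∞) μ, (∀ z ∈ Metric.ball (0:ℂ) 1, ‖x0 + z • x1‖ ≤ 1) →
        ‖x0‖^p + ‖x1‖^p * r^p ≤ 1 :=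
      fun x0 x1 hb => keyineq hp hN x0 x1 hb hrP
    rcases hpq with ⟨hp1, hplt⟩ | ⟨hq1', hqp, hp2⟩
    · -- 1 ≤ p < q
      have hd : 0 < (q:ℝ) - p := by linarith
      have hrp : 0 < r ^ (p/((q:ℝ)-p)) := Real.rpow_pos_of_pos hrpos _
      set m : ℝ := min 1 (r ^ (p/((q:ℝ)-p))) with hm
      have hm0 : 0 < m := lt_min one_pos hrp
      set ε : ℝ := m / 2 with hεdef
      have hε0 : 0 < ε := by positivity
      have hε1 : ε < 1 := by
        have : m ≤ 1 := min_le_left _ _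
        rw [hεdef]; linarith
      have hεr : ε < r ^ (p/((q:ℝ)-p)) := by
        have h1 : ε < m := by rw [hεdef]; linarith
        exact lt_of_lt_of_le h1 (min_le_right _ _)
      have hεkey : ε ^ ((q:ℝ) - p) < r ^ p := by
        have h1 : ε ^ ((q:ℝ)-p) < (r ^ (p/((q:ℝ)-p))) ^ ((q:ℝ)-p) :=
          Real.rpow_lt_rpow hε0.le hεr hd
        rwa [← Real.rpow_mul hr0, div_mul_cancel₀ _ hd.ne'] at h1
      set E : ℝ := ε ^ (q:ℝ) with hEdef
      have hE0 : 0 < E := Real.rpow_pos_of_pos hε0 _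
      have hE1 : E < 1 := Real.rpow_lt_one hε0.le hε1 hq0
      set a0 : ℝ := (1 - E) ^ (1/(q:ℝ)) with ha0def
      have ha0pos : 0 < a0 := Real.rpow_pos_of_pos (by linarith) _
      have ha0q : a0 ^ (q:ℝ) = 1 - E := by
        rw [ha0def, one_div, Real.rpow_inv_rpow (by linarith) hq0.ne']
      set x0 := F (((a0:ℝ):ℂ) * nA) ((0:ℂ) * nB) with hx0
      set x1 := F ((0:ℂ) * nA) (((ε:ℝ):ℂ) * nB) with hx1
      have hn1 : ‖((a0:ℝ):ℂ)‖ = a0 := by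
        rw [Complex.norm_real, Real.norm_eq_abs, abs_of_nonneg ha0pos.le]
      have hnε : ‖((ε:ℝ):ℂ)‖ = ε := by
        rw [Complex.norm_real, Real.norm_eq_abs, abs_of_nonneg hε0.le]
      have hbound : ∀ z ∈ Metric.ball (0:ℂ) 1, ‖x0 + z • x1‖ ≤ 1 := by
        intro z hz
        have hz1 : ‖z‖ < 1 := by simpa using mem_ball_zero_iff.mp hz
        rw [hx0, hx1, hFcomb]
        have he1 : ((a0:ℝ):ℂ)*nA + z*((0:ℂ)*nA) = ((a0:ℝ):ℂ) * nA := by ring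
        have he2 : (0:ℂ)*nB + z*(((ε:ℝ):ℂ)*nB) = (z*((ε:ℝ):ℂ)) * nB := by ring
        rw [he1, he2, hFn]
        have hn2 : ‖z * ((ε:ℝ):ℂ)‖ = ‖z‖ * ε := by rw [norm_mul, hnε]
        rw [hn1, hn2, ha0q]
        have hz2 : (‖z‖ * ε) ^ (q:ℝ) ≤ E := by
          rw [Real.mul_rpow (norm_nonneg z) hε0.le, hEdef]
          have h3 : ‖z‖ ^ (q:ℝ) ≤ 1 := Real.rpow_le_one (norm_nonneg z) hz1.le hq0.le
          exact mul_le_of_le_one_left (Real.rpow_nonneg hε0.le _) h3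
        have hin0 : 0 ≤ 1 - E + (‖z‖*ε)^(q:ℝ) := by
          have := Real.rpow_nonneg (mul_nonneg (norm_nonneg z) hε0.le) (q:ℝ); linarith
        exact Real.rpow_le_one hin0 (by linarith) (by positivity)
      have hcontra := key x0 x1 hbound
      have hnx0 : ‖x0‖ = a0 := by
        rw [hx0, hFn, hn1, norm_zero, Real.zero_rpow hq0.ne', add_zero, ha0q, ha0def]
      have hnx1 : ‖x1‖ = ε := by
        rw [hx1, hFn, hnε, norm_zero, Real.zero_rpow hq0.ne', zero_add,
          one_div, Real.rpow_rpow_inv hε0.le hq0.ne']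
      rw [hnx0, hnx1] at hcontra
      have h10 : 1 - E ≤ a0 ^ p := by
        rw [ha0def, ← Real.rpow_mul (by linarith : (0:ℝ) ≤ 1 - E)]
        have h11 : (1:ℝ)/(q:ℝ) * p ≤ 1 := by
          rw [div_mul_eq_mul_div, one_mul, div_le_one hq0]; linarith
        have h12 := Real.rpow_le_rpow_of_exponent_ge (by linarith : (0:ℝ) < 1 - E)
          (by linarith : 1 - E ≤ 1) h11
        rwa [Real.rpow_one] at h12
      have h20 : E < ε ^ p * r ^ p := by
        have hEe : E = ε ^ p * ε ^ ((q:ℝ) - p) := by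
          rw [hEdef, ← Real.rpow_add hε0]; congr 1; ring
        rw [hEe]
        exact mul_lt_mul_of_pos_left hεkey (Real.rpow_pos_of_pos hε0 p)
      linarith
    · -- q ≤ p < 2
      have hqr2 : (q:ℝ) < 2 := lt_of_le_of_lt hqp hp2
      have hd2 : 0 < 2 - p := by linarith
      have hr2 : ∀ x : ℝ, x ^ (2:ℝ) = x^2 := fun x => by
        rw [show (2:ℝ) = ((2:ℕ):ℝ) by norm_num, Real.rpow_natCast]
      set K : ℝ := r ^ p * 2 ^ ((p-2)/(q:ℝ)) with hK
      have hK0 : 0 < K := mul_pos (Real.rpow_pos_of_pos hrpos _) (Real.rpow_pos_of_pos two_pos _)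
      set m : ℝ := min ((2:ℝ) ^ (-(1/(q:ℝ)))) (K ^ (1/(2-p))) with hm
      have hm0 : 0 < m := lt_min (Real.rpow_pos_of_pos two_pos _) (Real.rpow_pos_of_pos hK0 _)
      set ε : ℝ := m/2 with hεdef
      have hε0 : 0 < ε := by positivity
      have hεa : ε < (2:ℝ) ^ (-(1/(q:ℝ))) :=
        lt_of_lt_of_le (by rw [hεdef]; linarith) (min_le_left _ _)
      have hεb : ε < K ^ (1/(2-p)) :=
        lt_of_lt_of_le (by rw [hεdef]; linarith) (min_le_right _ _)
      have hεkey : ε ^ ((2:ℝ)-p) < K := by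
        have h1 := Real.rpow_lt_rpow hε0.le hεb hd2
        rwa [← Real.rpow_mul hK0.le, div_mul_cancel₀ _ hd2.ne', Real.rpow_one] at h1
      have h2q : ((2:ℝ) ^ (-(1/(q:ℝ)))) * ((2:ℝ) ^ (-(1/(q:ℝ)))) = 2 ^ (-(2/(q:ℝ))) := by
        rw [← Real.rpow_add two_pos]; congr 1; ring
      have hεsq : ε^2 < 2 ^ (-(2/(q:ℝ))) := by
        rw [← h2q, sq]
        exact mul_lt_mul'' hεa hεa hε0.le hε0.le
      set T : ℝ := 2 ^ (-(2/(q:ℝ))) - ε^2 with hT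
      have hT0 : 0 < T := by rw [hT]; linarith
      set a : ℝ := Real.sqrt T with ha
      have ha0 : 0 < a := Real.sqrt_pos.mpr hT0
      have ha2 : a^2 = T := Real.sq_sqrt hT0.le
      set x0 := F (((a:ℝ):ℂ) * nA) (((a:ℝ):ℂ) * nB) with hx0
      set x1 := F (((ε:ℝ):ℂ) * nA) ((((-ε):ℝ):ℂ) * nB) with hx1
      have hna : ‖((a:ℝ):ℂ)‖ = a := by
        rw [Complex.norm_real, Real.norm_eq_abs, abs_of_nonneg ha0.le]
      have hnε : ‖((ε:ℝ):ℂ)‖ = ε := by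
        rw [Complex.norm_real, Real.norm_eq_abs, abs_of_nonneg hε0.le]
      have hnnε : ‖(((-ε):ℝ):ℂ)‖ = ε := by
        rw [Complex.norm_real, Real.norm_eq_abs, abs_neg, abs_of_nonneg hε0.le]
      have hθ0 : 0 < (q:ℝ)/2 := by positivity
      have hθ1 : (q:ℝ)/2 ≤ 1 := by linarith
      have hnormsq : ∀ x : ℂ, ‖x‖^2 = x.re^2 + x.im^2 := fun x => by
        rw [Complex.sq_norm, Complex.normSq_apply]; ring
      have hbound : ∀ z ∈ Metric.ball (0:ℂ) 1, ‖x0 + z • x1‖ ≤ 1 := by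
        intro z hz
        have hz1 : ‖z‖ < 1 := by simpa using mem_ball_zero_iff.mp hz
        rw [hx0, hx1, hFcomb]
        have he1 : ((a:ℝ):ℂ)*nA + z*(((ε:ℝ):ℂ)*nA) = (((a:ℝ):ℂ) + z*((ε:ℝ):ℂ)) * nA := by ring
        have he2 : ((a:ℝ):ℂ)*nB + z*((((-ε):ℝ):ℂ)*nB) = (((a:ℝ):ℂ) - z*((ε:ℝ):ℂ)) * nB := by
          push_cast; ring
        rw [he1, he2, hFn]
        set w : ℂ := z * ((ε:ℝ):ℂ) with hw
        have hwnorm : ‖w‖ ≤ ε := by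
          rw [hw, norm_mul, hnε]
          exact mul_le_of_le_one_left hε0.le hz1.le
        set u := ‖((a:ℝ):ℂ) + w‖ with hu
        set v := ‖((a:ℝ):ℂ) - w‖ with hv
        have hu2 : u^2 = (a^2 + ‖w‖^2) + 2*a*w.re := by
          rw [hu, hnormsq, hnormsq w]
          simp only [Complex.add_re, Complex.add_im, Complex.ofReal_re, Complex.ofReal_im]
          ring
        have hv2 : v^2 = (a^2 + ‖w‖^2) - 2*a*w.re := by
          rw [hv, hnormsq, hnormsq w]
          simp only [Complex.sub_re, Complex.sub_im, Complex.ofReal_re, Complex.ofReal_im]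
          ring
        have huq : u ^ (q:ℝ) = ((a^2 + ‖w‖^2) + 2*a*w.re) ^ ((q:ℝ)/2) := by
          calc u^(q:ℝ) = u^((2:ℝ)*((q:ℝ)/2)) := by rw [show (2:ℝ)*((q:ℝ)/2) = (q:ℝ) by ring]
            _ = (u^(2:ℝ))^((q:ℝ)/2) := Real.rpow_mul (norm_nonneg _) 2 _
            _ = ((a^2 + ‖w‖^2) + 2*a*w.re) ^ ((q:ℝ)/2) := by rw [hr2, hu2]
        have hvq : v ^ (q:ℝ) = ((a^2 + ‖w‖^2) - 2*a*w.re) ^ ((q:ℝ)/2) := by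
          calc v^(q:ℝ) = v^((2:ℝ)*((q:ℝ)/2)) := by rw [show (2:ℝ)*((q:ℝ)/2) = (q:ℝ) by ring]
            _ = (v^(2:ℝ))^((q:ℝ)/2) := Real.rpow_mul (norm_nonneg _) 2 _
            _ = ((a^2 + ‖w‖^2) - 2*a*w.re) ^ ((q:ℝ)/2) := by rw [hr2, hv2]
        have hsc1 : (0:ℝ) ≤ (a^2 + ‖w‖^2) + 2*a*w.re := hu2 ▸ sq_nonneg u
        have hsc2 : (0:ℝ) ≤ (a^2 + ‖w‖^2) - 2*a*w.re := hv2 ▸ sq_nonneg v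
        have hconc := conc2 hθ0 hθ1 hsc1 hsc2
        have hmid : (((a^2 + ‖w‖^2) + 2*a*w.re) + ((a^2 + ‖w‖^2) - 2*a*w.re))/2
            = a^2 + ‖w‖^2 := by ring
        rw [hmid] at hconc
        have hs_le : a^2 + ‖w‖^2 ≤ 2 ^ (-(2/(q:ℝ))) := by
          have hw2 : ‖w‖^2 ≤ ε^2 := pow_le_pow_left₀ (norm_nonneg w) hwnorm 2
          rw [ha2, hT]; linarith
        have hmono := Real.rpow_le_rpow (by positivity) hs_le hθ0.le
        have hone : ((2:ℝ) ^ (-(2/(q:ℝ)))) ^ ((q:ℝ)/2) = 1/2 := by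
          rw [← Real.rpow_mul (by norm_num : (0:ℝ) ≤ 2)]
          rw [show (-(2/(q:ℝ)))*((q:ℝ)/2) = -1 by field_simp, Real.rpow_neg_one]
          norm_num
        have hsum1 : u ^ (q:ℝ) + v ^ (q:ℝ) ≤ 1 := by
          rw [huq, hvq]
          calc ((a^2 + ‖w‖^2) + 2*a*w.re) ^ ((q:ℝ)/2) + ((a^2 + ‖w‖^2) - 2*a*w.re) ^ ((q:ℝ)/2)
              ≤ 2 * ((a^2 + ‖w‖^2) ^ ((q:ℝ)/2)) := hconc
            _ ≤ 2 * (((2:ℝ) ^ (-(2/(q:ℝ)))) ^ ((q:ℝ)/2)) := by linarith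
            _ = 1 := by rw [hone]; norm_num
        have hsum0 : (0:ℝ) ≤ u ^ (q:ℝ) + v ^ (q:ℝ) := by positivity
        exact Real.rpow_le_one hsum0 hsum1 (by positivity)
      have hcontra := key x0 x1 hbound
      have hnx0 : ‖x0‖ = (2 * a^(q:ℝ)) ^ (1/(q:ℝ)) := by
        rw [hx0, hFn, hna]; congr 1; ring
      have hnx1 : ‖x1‖ = (2 * ε^(q:ℝ)) ^ (1/(q:ℝ)) := by
        rw [hx1, hFn, hnε, hnnε]; congr 1; ring
      rw [hnx0, hnx1] at hcontra
      set G : ℝ := 2 ^ (2/(q:ℝ)) * ε^2 with hG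
      have hG0 : 0 < G := by positivity
      have hG1 : G < 1 := by
        have h2 : (2:ℝ)^(2/(q:ℝ)) * 2^(-(2/(q:ℝ))) = 1 := by
          rw [← Real.rpow_add two_pos]; norm_num
        calc G < 2^(2/(q:ℝ)) * 2^(-(2/(q:ℝ))) :=
              mul_lt_mul_of_pos_left hεsq (Real.rpow_pos_of_pos two_pos _)
          _ = 1 := h2
      have lpow : ∀ t : ℝ, 0 < t → ((2 * t^(q:ℝ)) ^ (1/(q:ℝ)))^p = 2^(p/(q:ℝ)) * t^p := by
        intro t ht
        rw [← Real.rpow_mul (by positivity), show (1/(q:ℝ))*p = p/(q:ℝ) by ring,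
          Real.mul_rpow (by norm_num) (by positivity), ← Real.rpow_mul ht.le,
          show (q:ℝ)*(p/(q:ℝ)) = p by field_simp]
      have hx0p : ((2 * a^(q:ℝ)) ^ (1/(q:ℝ)))^p = (1 - G)^(p/2) := by
        have h2aT : 2^(2/(q:ℝ)) * a^2 = 1 - G := by
          rw [ha2, hT, hG, mul_sub]
          congr 1
          rw [← Real.rpow_add two_pos]; norm_num
        have l3 : (1-G)^(p/2) = 2^(p/(q:ℝ)) * a^p := by
          rw [← h2aT, Real.mul_rpow (by positivity) (sq_nonneg a)]
          congr 1
          · rw [← Real.rpow_mul (by norm_num : (0:ℝ) ≤ 2)]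
            congr 1; ring
          · rw [← hr2, ← Real.rpow_mul ha0.le]
            congr 1; ring
        rw [lpow a ha0, l3]
      have hgt1 : 1 - G ≤ (1-G)^(p/2) := by
        have h12 := Real.rpow_le_rpow_of_exponent_ge (by linarith : (0:ℝ) < 1 - G)
          (by linarith : 1 - G ≤ 1) (by linarith : p/2 ≤ 1)
        rwa [Real.rpow_one] at h12
      have hgt2 : G < ((2*ε^(q:ℝ))^(1/(q:ℝ)))^p * r^p := by
        rw [lpow ε hε0]
        have e2 : (ε:ℝ)^2 = ε^p * ε^((2:ℝ)-p) := by
          rw [← hr2, ← Real.rpow_add hε0]; congr 1; ring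
        have h2pow : (2:ℝ)^(2/(q:ℝ)) * 2^((p-2)/(q:ℝ)) = 2^(p/(q:ℝ)) := by
          rw [← Real.rpow_add two_pos]; congr 1; ring
        have step : G < 2^(2/(q:ℝ)) * (ε^p * K) := by
          rw [hG, e2]
          have hh := mul_lt_mul_of_pos_left hεkey (Real.rpow_pos_of_pos hε0 p)
          have h2p : (0:ℝ) < 2^(2/(q:ℝ)) := Real.rpow_pos_of_pos two_pos _
          rw [← mul_assoc]
          calc 2^(2/(q:ℝ)) * ε^p * ε^((2:ℝ)-p) < 2^(2/(q:ℝ)) * ε^p * K := by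
                apply mul_lt_mul_of_pos_left hεkey
                positivity
            _ = 2^(2/(q:ℝ)) * (ε^p * K) := by ring
        calc G < 2^(2/(q:ℝ)) * (ε^p * K) := step
          _ = 2^(p/(q:ℝ)) * ε^p * r^p := by rw [hK, ← h2pow]; ring
      rw [hx0p] at hcontra
      linarith

  exact le_antisymm (Real.sSup_le hub le_rfl) (le_csSup ⟨0, fun x hx => hub x hx⟩ h0mem)
end
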